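/- arXiv:math/0412435 — 5 statements merged into one kernel-verified Lean document; each statement's English description precedes it below -/
import Mathlib

section
/- Let G be an l-group, H a closed subgroup of G with left Haar measure dh and modular function Δ_H, and (π, V) a smooth H-module. Let i: C_c^∞(G, V) → ind_H^G V be the map i(F)(g) = ∫_H π(h)(F(gh)) dh. Then the kernel of i equals the linear span of the functions x ↦ Δ_H(h)^{-1} π(h)(F(xh)) − F(x), for h ∈ H and F ∈ C_c^∞(G, V). -/
open MeasureTheory
open scoped Pointwise

noncomputable section

/-- The space of locally constant, compactly supported `V`-valued functions on `X`,
as a `ℂ`-submodule of `X → V`.  This is `C_c^∞(X, V)`. -/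
def SmCc (X : Type*) [TopologicalSpace X] (V : Type*) [AddCommGroup V] [Module ℂ V] :
    Submodule ℂ (X → V) where
  carrier := {f | IsLocallyConstant f ∧ HasCompactSupport f}
  add_mem' := fun hf hg => ⟨hf.1.add hg.1, hf.2.add hg.2⟩
  zero_mem' := ⟨IsLocallyConstant.const 0, by
    have : Function.support (0 : X → V) = ∅ := Function.support_zero
    simp [HasCompactSupport, tsupport, this]⟩
  smul_mem' := fun c f hf => ⟨hf.1.comp (fun v => c • v), hf.2.mono
    (Function.support_const_smul_subset c f)⟩

/-- The integral of a locally constant compactly supported function against a measure: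
the finite sum `∑ᵥ μ(f⁻¹{v}) • v` over the (finitely many) nonzero values of `f`. -/
def smInt {X : Type*} [MeasurableSpace X] (μ : Measure X)
    {V : Type*} [AddCommGroup V] [Module ℂ V] (f : X → V) : V :=
  ∑ᶠ v : V, (((μ (f ⁻¹' {v})).toReal : ℝ) : ℂ) • v

/-- A representation of `G` on a complex vector space is *smooth* if every vector is fixed
by some open subgroup. -/
def SmoothRep {G : Type*} [Group G] [TopologicalSpace G] {V : Type*} [AddCommGroup V]
    [Module ℂ V] (ρ : Representation ℂ G V) : Prop :=
  ∀ v : V, ∃ U : Subgroup G, IsOpen (U : Set G) ∧ ∀ g ∈ U, ρ g v = v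

/-- `G` admits a neighbourhood basis of the identity consisting of compact open subgroups
(part of the definition of an `l`-group). -/
def HasCompactOpenBasis (G : Type*) [Group G] [TopologicalSpace G] : Prop :=
  ∀ U ∈ nhds (1 : G), ∃ K : Subgroup G, IsCompact (K : Set G) ∧ IsOpen (K : Set G) ∧
    (K : Set G) ⊆ U

/-- Pullback along a homeomorphism combined with postcomposition by a linear map, as a linear
map between spaces of locally constant compactly supported functions. -/
def ccMap {X Y : Type*} [TopologicalSpace X] [TopologicalSpace Y]
    {V W : Type*} [AddCommGroup V] [Module ℂ V] [AddCommGroup W] [Module ℂ W]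
    (φ : X ≃ₜ Y) (T : V →ₗ[ℂ] W) : SmCc Y V →ₗ[ℂ] SmCc X W where
  toFun f := ⟨fun x => T (f.1 (φ x)),
    ⟨(f.2.1.comp_continuous φ.continuous).comp T, (f.2.2.comp_homeomorph φ).comp_left T.map_zero⟩⟩
  map_add' f g := by ext x; simp
  map_smul' c f := by ext x; simp

/-- Membership in the (unnormalized) smoothly induced module `ind_H^G V` of a smooth
representation `(π, V)` of a closed subgroup `H ≤ G`:  `φ : G → V` is left-invariant under
some compact open subgroup, has support compact modulo `H`, and satisfies
`φ(gh) = π(h)⁻¹ φ(g)`. -/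
def IsInd {G : Type*} [Group G] [TopologicalSpace G] (H : Subgroup G) {V : Type*}
    [AddCommGroup V] [Module ℂ V] (ρ : Representation ℂ H V) (φ : G → V) : Prop :=
  (∃ K : Subgroup G, IsCompact (K : Set G) ∧ IsOpen (K : Set G) ∧
    ∀ k ∈ K, ∀ g : G, φ (k * g) = φ g) ∧
  (∃ C : Set G, IsCompact C ∧ Function.support φ ⊆ C * (H : Set G)) ∧
  (∀ (g : G) (h : H), φ (g * h) = ρ h⁻¹ (φ g))

/-- The averaging map `i(F)(g) = ∫_H π(h)(F(gh)) dh` from `C_c^∞(G, V)` to `ind_H^G V`. -/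
def indAvg {G : Type*} [Group G] [TopologicalSpace G] {H : Subgroup G}
    [MeasurableSpace H] (ν : Measure H) {V : Type*} [AddCommGroup V] [Module ℂ V]
    (ρ : Representation ℂ H V) (F : G → V) : G → V :=
  fun g => smInt ν (fun h : H => ρ h (F (g * h)))

open scoped ENNReal

section Aux

variable {V : Type*} [AddCommGroup V] [Module ℂ V]

theorem mem_SmCc {X : Type*} [TopologicalSpace X] {f : X → V} :
    f ∈ SmCc X V ↔ IsLocallyConstant f ∧ HasCompactSupport f := Iff.rfl

theorem SmCc.finite_range {X : Type*} [TopologicalSpace X] {f : X → V} (hf : f ∈ SmCc X V) :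
    (Set.range f).Finite := by
  obtain ⟨h1, h2⟩ := hf
  obtain ⟨t, ht⟩ := IsCompact.elim_finite_subcover (h2 : IsCompact (tsupport f))
    (fun v : V => f ⁻¹' {v}) (fun v => h1 _) (fun x _ => Set.mem_iUnion.2 ⟨f x, rfl⟩)
  refine Set.Finite.subset (Set.Finite.insert 0 t.finite_toSet) ?_
  rintro v ⟨x, rfl⟩
  by_cases hx : f x = 0
  · exact Or.inl hx
  · have : x ∈ tsupport f := subset_tsupport f hx
    obtain ⟨v', hv', hxv⟩ := Set.mem_iUnion₂.1 (ht this)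
    exact Or.inr (by simpa [Set.mem_preimage, hxv.symm] using hv')

set_option linter.unusedSectionVars false in
theorem fiber_clopen {X : Type*} [TopologicalSpace X] {f : X → V} (h1 : IsLocallyConstant f)
    (v : V) : IsClopen (f ⁻¹' {v}) := by
  refine ⟨?_, h1 _⟩
  rw [← isOpen_compl_iff, ← Set.preimage_compl]
  exact h1 _

theorem fiber_compact {X : Type*} [TopologicalSpace X] {f : X → V} (hf : f ∈ SmCc X V)
    {v : V} (hv : v ≠ 0) : IsCompact (f ⁻¹' {v}) := by
  refine IsCompact.of_isClosed_subset (hf.2 : IsCompact (tsupport f))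
    (fiber_clopen hf.1 v).1 ?_
  refine (subset_tsupport f).trans' ?_
  intro x hx
  simp only [Set.mem_preimage, Set.mem_singleton_iff] at hx
  simp [Function.mem_support, hx, hv]

theorem smInt_eq_sum {X : Type*} [MeasurableSpace X] (μ : Measure X) (f : X → V) (t : Finset V)
    (h : ∀ v : V, v ∉ t → v = 0 ∨ f ⁻¹' {v} = ∅) :
    smInt μ f = ∑ v ∈ t, (((μ (f ⁻¹' {v})).toReal : ℝ) : ℂ) • v := by
  refine finsum_eq_sum_of_support_subset _ ?_
  intro v hv
  simp only [Function.mem_support] at hv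
  by_contra hvt
  rcases h v hvt with rfl | he
  · exact hv (smul_zero _)
  · rw [he] at hv
    simp at hv

theorem smInt_zero {X : Type*} [MeasurableSpace X] (μ : Measure X) :
    smInt μ (fun _ : X => (0 : V)) = 0 := by
  rw [smInt_eq_sum μ _ ∅ ?_, Finset.sum_empty]
  intro v _
  by_cases hv : v = 0
  · exact Or.inl hv
  · refine Or.inr ?_
    ext x
    simp [hv, Ne.symm hv]

theorem smInt_indicator {X : Type*} [MeasurableSpace X] (μ : Measure X) (C : Set X) (v : V) :
    smInt μ (C.indicator fun _ => v) = ((μ C).toReal : ℂ) • v := by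
  by_cases hv : v = 0
  · subst hv
    rw [smul_zero]
    have : (C.indicator fun _ => (0 : V)) = fun _ : X => (0 : V) := by
      ext x; simp
    rw [this, smInt_zero]
  · rw [smInt_eq_sum μ _ {v} ?_, Finset.sum_singleton]
    · have : (C.indicator fun _ => v) ⁻¹' {v} = C := by
        ext x
        by_cases hx : x ∈ C <;> simp [Set.indicator_apply, hx, hv, Ne.symm hv]
      rw [this]
    · intro w hw
      simp only [Finset.mem_singleton] at hw
      by_cases hw0 : w = 0
      · exact Or.inl hw0
      · refine Or.inr ?_
        ext x
        simp only [Set.mem_preimage, Set.mem_singleton_iff, Set.indicator_apply,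
          Set.mem_empty_iff_false, iff_false]
        by_cases hx : x ∈ C <;> simp [hx, Ne.symm hw0, hv, Ne.symm hw]

end Aux

section Aux2

variable {V : Type*} [AddCommGroup V] [Module ℂ V]
variable {X : Type*} [TopologicalSpace X] [MeasurableSpace X] [BorelSpace X]

theorem smInt_pair (μ : Measure X) [IsFiniteMeasureOnCompacts μ] {f g : X → V}
    (hf : f ∈ SmCc X V) (hg : g ∈ SmCc X V) (c : V × V → V) (hc : c (0, 0) = 0) :
    smInt μ (fun x => c (f x, g x)) =
      ∑ p ∈ (SmCc.finite_range hf).toFinset ×ˢ (SmCc.finite_range hg).toFinset,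
        (((μ (f ⁻¹' {p.1} ∩ g ⁻¹' {p.2})).toReal : ℝ) : ℂ) • c p := by
  classical
  set tf := (SmCc.finite_range hf).toFinset with htf
  set tg := (SmCc.finite_range hg).toFinset with htg
  set P : V × V → Set X := fun p => f ⁻¹' {p.1} ∩ g ⁻¹' {p.2} with hP
  have hΦmem : ∀ x : X, (f x, g x) ∈ tf ×ˢ tg := by
    intro x
    rw [Finset.mem_product]
    constructor <;> [rw [htf]; rw [htg]] <;> rw [Set.Finite.mem_toFinset] <;>
      exact Set.mem_range_self x
  have hxP : ∀ {x : X} {p : V × V}, x ∈ P p ↔ (f x, g x) = p := by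
    intro x p
    simp only [hP, Set.mem_inter_iff, Set.mem_preimage, Set.mem_singleton_iff, Prod.ext_iff]
  rw [smInt_eq_sum μ _ ((tf ×ˢ tg).image c) ?_]
  swap
  · intro w hw
    refine Or.inr ?_
    ext x
    simp only [Set.mem_preimage, Set.mem_singleton_iff, Set.mem_empty_iff_false, iff_false]
    intro hx
    refine hw ?_
    rw [← hx]
    exact Finset.mem_image_of_mem c (hΦmem x)
  · rw [← Finset.sum_fiberwise_of_maps_to (g := c)
      (fun p hp => Finset.mem_image_of_mem c hp)
      (fun p => (((μ (P p)).toReal : ℝ) : ℂ) • c p)]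
    refine Finset.sum_congr rfl ?_
    intro w hw
    by_cases hw0 : w = 0
    · subst hw0
      rw [smul_zero]
      refine (Finset.sum_eq_zero ?_).symm
      intro p hp
      rw [(Finset.mem_filter.1 hp).2, smul_zero]
    · have hpre : (fun x => c (f x, g x)) ⁻¹' {w}
          = ⋃ p ∈ (tf ×ˢ tg).filter (fun p => c p = w), P p := by
        ext x
        simp only [Set.mem_preimage, Set.mem_singleton_iff, Set.mem_iUnion, Finset.mem_filter,
          exists_prop]
        constructor
        · intro hx
          exact ⟨(f x, g x), ⟨hΦmem x, hx⟩, hxP.2 rfl⟩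
        · rintro ⟨p, ⟨_, hcp⟩, hxp⟩
          rw [hxP.1 hxp]
          exact hcp
      have hdisj : ((((tf ×ˢ tg).filter (fun p => c p = w)) : Finset (V × V)) :
          Set (V × V)).PairwiseDisjoint P := by
        intro p _ q _ hpq
        rw [Function.onFun, Set.disjoint_left]
        intro x hxp hxq
        exact hpq ((hxP.1 hxp).symm.trans (hxP.1 hxq))
      have hmeas : ∀ p ∈ (tf ×ˢ tg).filter (fun p => c p = w), MeasurableSet (P p) :=
        fun p _ => ((hf.1 _).measurableSet).inter ((hg.1 _).measurableSet)
      have hfin : ∀ p ∈ (tf ×ˢ tg).filter (fun p => c p = w), μ (P p) ≠ ∞ := by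
        intro p hp
        have hp0 : p.1 ≠ 0 ∨ p.2 ≠ 0 := by
          by_contra hcon
          push_neg at hcon
          have hpe : p = (0, 0) := Prod.ext hcon.1 hcon.2
          rw [hpe] at hp
          exact hw0 ((Finset.mem_filter.1 hp).2.symm.trans hc)
        rcases hp0 with h1 | h2
        · exact ne_of_lt (lt_of_le_of_lt (measure_mono Set.inter_subset_left)
            (fiber_compact hf h1).measure_lt_top)
        · exact ne_of_lt (lt_of_le_of_lt (measure_mono Set.inter_subset_right)
            (fiber_compact hg h2).measure_lt_top)
      rw [hpre, measure_biUnion_finset hdisj hmeas, ENNReal.toReal_sum hfin]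
      rw [Complex.ofReal_sum, Finset.sum_smul]
      refine Finset.sum_congr rfl ?_
      intro p hp
      rw [(Finset.mem_filter.1 hp).2]

end Aux2

section Aux3

variable {V : Type*} [AddCommGroup V] [Module ℂ V]
variable {X : Type*} [TopologicalSpace X] [MeasurableSpace X] [BorelSpace X]

theorem smInt_add (μ : Measure X) [IsFiniteMeasureOnCompacts μ] {f g : X → V}
    (hf : f ∈ SmCc X V) (hg : g ∈ SmCc X V) :
    smInt μ (fun x => f x + g x) = smInt μ f + smInt μ g := by
  have h1 := smInt_pair μ hf hg (fun p => p.1 + p.2) (by simp)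
  have h2 := smInt_pair μ hf hg Prod.fst rfl
  have h3 := smInt_pair μ hf hg Prod.snd rfl
  simp only at h1 h2 h3
  rw [h1, h2, h3, ← Finset.sum_add_distrib]
  refine Finset.sum_congr rfl fun p _ => ?_
  rw [smul_add]

theorem smInt_sub (μ : Measure X) [IsFiniteMeasureOnCompacts μ] {f g : X → V}
    (hf : f ∈ SmCc X V) (hg : g ∈ SmCc X V) :
    smInt μ (fun x => f x - g x) = smInt μ f - smInt μ g := by
  have h1 := smInt_pair μ hf hg (fun p => p.1 - p.2) (by simp)
  have h2 := smInt_pair μ hf hg Prod.fst rfl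
  have h3 := smInt_pair μ hf hg Prod.snd rfl
  simp only at h1 h2 h3
  rw [h1, h2, h3, ← Finset.sum_sub_distrib]
  refine Finset.sum_congr rfl fun p _ => ?_
  rw [smul_sub]

theorem smInt_smul (μ : Measure X) [IsFiniteMeasureOnCompacts μ] {f : X → V}
    (hf : f ∈ SmCc X V) (a : ℂ) :
    smInt μ (fun x => a • f x) = a • smInt μ f := by
  have h1 := smInt_pair μ hf hf (fun p => a • p.1) (by simp)
  have h2 := smInt_pair μ hf hf Prod.fst rfl
  simp only at h1 h2
  rw [h1, h2, Finset.smul_sum]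
  refine Finset.sum_congr rfl fun p _ => ?_
  rw [smul_comm]

theorem smInt_translate {Y : Type*} [Group Y] [MeasurableSpace Y]
    (μ : Measure Y) (Δ : Y → ℝ) (hΔpos : ∀ h : Y, 0 < Δ h)
    (hΔ : ∀ (h₀ : Y) (s : Set Y), μ ((fun h => h * h₀) ⁻¹' s) = ENNReal.ofReal (Δ h₀) * μ s)
    (f : Y → V) (h₀ : Y) :
    smInt μ (fun h => f (h * h₀)) = ((Δ h₀ : ℝ) : ℂ) • smInt μ f := by
  unfold smInt
  rw [smul_finsum]
  congr 1
  funext v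
  have hpre : (fun h => f (h * h₀)) ⁻¹' {v} = (fun h => h * h₀) ⁻¹' (f ⁻¹' {v}) := rfl
  rw [hpre, hΔ, ENNReal.toReal_mul, ENNReal.toReal_ofReal (hΔpos h₀).le]
  push_cast
  rw [mul_smul]

end Aux3

section Aux4

variable {V : Type*} [AddCommGroup V] [Module ℂ V]

theorem isLocallyConstant_indicator {X : Type*} [TopologicalSpace X] {f : X → V}
    (hf : IsLocallyConstant f) {C : Set X} (hC : IsClopen C) :
    IsLocallyConstant (C.indicator f) := by
  rw [IsLocallyConstant.iff_exists_open]
  intro x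
  by_cases hx : x ∈ C
  · obtain ⟨U, hUo, hxU, hU⟩ := (IsLocallyConstant.iff_exists_open f).1 hf x
    refine ⟨U ∩ C, hUo.inter hC.2, ⟨hxU, hx⟩, ?_⟩
    rintro y ⟨hyU, hyC⟩
    rw [Set.indicator_of_mem hyC, Set.indicator_of_mem hx, hU y hyU]
  · refine ⟨Cᶜ, hC.1.isOpen_compl, hx, ?_⟩
    intro y hy
    rw [Set.indicator_of_notMem hy, Set.indicator_of_notMem hx]

theorem indicator_mem_SmCc {X : Type*} [TopologicalSpace X] {f : X → V}
    (hf : f ∈ SmCc X V) {C : Set X} (hC : IsClopen C) : C.indicator f ∈ SmCc X V :=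
  ⟨isLocallyConstant_indicator hf.1 hC, hf.2.mono (by rw [Set.support_indicator]; exact Set.inter_subset_right)⟩

theorem const_indicator_mem_SmCc {X : Type*} [TopologicalSpace X] [T2Space X] {C : Set X}
    (hC : IsClopen C) (hCc : IsCompact C) (v : V) :
    C.indicator (fun _ => v) ∈ SmCc X V := by
  refine ⟨isLocallyConstant_indicator (IsLocallyConstant.const v) hC, ?_⟩
  exact HasCompactSupport.intro hCc (fun x hx => Set.indicator_of_notMem hx _)

/-- Uniform left invariance of a locally constant compactly supported function. -/
theorem exists_invariance {X : Type*} [Group X] [TopologicalSpace X] [IsTopologicalGroup X]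
    [T2Space X] (hB : HasCompactOpenBasis X) {f : X → V}
    (hf : f ∈ SmCc X V) :
    ∃ K : Subgroup X, IsCompact (K : Set X) ∧ IsOpen (K : Set X) ∧
      ∀ k ∈ K, ∀ x, f (k * x) = f x := by
  classical
  have hV : ∀ x : X, (fun u => u * x) ⁻¹' (f ⁻¹' {f x}) ∈ nhds (1 : X) := by
    intro x
    refine IsOpen.mem_nhds ((hf.1 _).preimage (continuous_mul_right x)) ?_
    simp
  choose Kx hKxc hKxo hKxsub using fun x => hB _ (hV x)
  obtain ⟨K₀, hK₀c, hK₀o, -⟩ := hB Set.univ Filter.univ_mem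
  have hcover : tsupport f ⊆ ⋃ x : X, (fun g => g * x⁻¹) ⁻¹' (Kx x) := by
    intro x _
    refine Set.mem_iUnion.2 ⟨x, ?_⟩
    simp [Subgroup.one_mem]
  obtain ⟨s, hs⟩ := IsCompact.elim_finite_subcover (hf.2 : IsCompact (tsupport f)) _
    (fun x => (hKxo x).preimage (continuous_mul_right x⁻¹)) hcover
  have hKset : ((K₀ ⊓ ⨅ x ∈ s, Kx x : Subgroup X) : Set X)
      = (K₀ : Set X) ∩ ⋂ x ∈ s, (Kx x : Set X) := by
    ext g
    simp [Subgroup.mem_inf, Subgroup.mem_iInf, Set.mem_iInter₂]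
  refine ⟨K₀ ⊓ ⨅ x ∈ s, Kx x, ?_, ?_, ?_⟩
  · rw [hKset]
    exact IsCompact.of_isClosed_subset hK₀c
      ((hK₀c.isClosed).inter (isClosed_biInter fun x _ => (hKxc x).isClosed))
      Set.inter_subset_left
  · rw [hKset]
    exact hK₀o.inter (isOpen_biInter_finset fun x _ => hKxo x)
  · intro k hk x
    have hks : ∀ x' ∈ s, k ∈ Kx x' := by
      intro x' hx'
      have h2 := (Subgroup.mem_inf.1 hk).2
      rw [Subgroup.mem_iInf] at h2
      have h3 := h2 x'
      rw [Subgroup.mem_iInf] at h3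
      exact h3 hx'
    by_cases hx : ∃ x' ∈ s, x ∈ (fun g => g * x'⁻¹) ⁻¹' (Kx x' : Set X)
    · obtain ⟨x', hx's, hxw⟩ := hx
      have hxw' : x * x'⁻¹ ∈ (Kx x' : Set X) := hxw
      have hxk : x = (x * x'⁻¹) * x' := (inv_mul_cancel_right x x').symm
      have hfx : f x = f x' := by
        have := hKxsub x' hxw'
        simp only [Set.mem_preimage, Set.mem_singleton_iff] at this
        rw [hxk]
        exact this
      have hfkx : f (k * x) = f x' := by
        have hmem : k * (x * x'⁻¹) ∈ (Kx x' : Set X) := mul_mem (hks x' hx's) hxw'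
        have := hKxsub x' hmem
        simp only [Set.mem_preimage, Set.mem_singleton_iff] at this
        rw [hxk, ← mul_assoc]
        exact this
      rw [hfkx, hfx]
    · push_neg at hx
      have hfx : f x = 0 := by
        refine image_eq_zero_of_notMem_tsupport ?_
        intro hmem
        obtain ⟨x', hx'⟩ := Set.mem_iUnion.1 (hs hmem)
        obtain ⟨hx's, hxw⟩ := Set.mem_iUnion.1 hx'
        exact hx x' hx's hxw
      have hfkx : f (k * x) = 0 := by
        refine image_eq_zero_of_notMem_tsupport ?_
        intro hmem
        obtain ⟨x', hx'⟩ := Set.mem_iUnion.1 (hs hmem)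
        obtain ⟨hx's, hxw⟩ := Set.mem_iUnion.1 hx'
        have hxw' : (k * x) * x'⁻¹ ∈ (Kx x' : Set X) := hxw
        have : x * x'⁻¹ ∈ (Kx x' : Set X) := by
          have h4 : k⁻¹ * ((k * x) * x'⁻¹) = x * x'⁻¹ := by group
          rw [← h4]
          exact mul_mem (inv_mem (hks x' hx's)) hxw'
        exact hx x' hx's this
      rw [hfx, hfkx]

end Aux4

section Aux5

theorem subgroup_hasCompactOpenBasis {G : Type*} [Group G] [TopologicalSpace G]
    (hG : HasCompactOpenBasis G) (H : Subgroup G) (hHcl : IsClosed (H : Set G)) :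
    HasCompactOpenBasis ↥H := by
  intro U hU
  rw [show (1 : ↥H) = (⟨1, H.one_mem⟩ : ↥H) from rfl] at hU
  rw [nhds_induced] at hU
  obtain ⟨W, hW, hWU⟩ := Filter.mem_comap.1 hU
  obtain ⟨K, hKc, hKo, hKW⟩ := hG W hW
  have hset : ((K.subgroupOf H : Subgroup ↥H) : Set ↥H) = (Subtype.val) ⁻¹' (K : Set G) := by
    ext h
    simp [Subgroup.mem_subgroupOf]
  refine ⟨K.subgroupOf H, ?_, ?_, ?_⟩
  · rw [hset]
    exact (hHcl.isClosedEmbedding_subtypeVal).isCompact_preimage hKc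
  · rw [hset]
    exact hKo.preimage continuous_subtype_val
  · rw [hset]
    exact (Set.preimage_mono hKW).trans hWU

/-- right coset `K·y` as a set. -/
def rcoset {G : Type*} [Group G] (K : Subgroup G) (y : G) : Set G :=
  {g : G | g * y⁻¹ ∈ (K : Set G)}

theorem mem_rcoset {G : Type*} [Group G] {K : Subgroup G} {y g : G} :
    g ∈ rcoset K y ↔ g * y⁻¹ ∈ K := Iff.rfl

theorem rcoset_open {G : Type*} [Group G] [TopologicalSpace G] [IsTopologicalGroup G]
    {K : Subgroup G} (hKo : IsOpen (K : Set G)) (y : G) : IsOpen (rcoset K y) :=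
  hKo.preimage (continuous_mul_right y⁻¹)

theorem rcoset_eq_image {G : Type*} [Group G] (K : Subgroup G) (y : G) :
    rcoset K y = (fun k => k * y) '' (K : Set G) := by
  ext g
  constructor
  · intro hg
    exact ⟨g * y⁻¹, hg, by group⟩
  · rintro ⟨k, hk, rfl⟩
    simpa [mem_rcoset] using hk

theorem rcoset_compact {G : Type*} [Group G] [TopologicalSpace G] [IsTopologicalGroup G]
    {K : Subgroup G} (hKc : IsCompact (K : Set G)) (y : G) : IsCompact (rcoset K y) := by
  rw [rcoset_eq_image]
  exact hKc.image (continuous_mul_right y)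

theorem rcoset_clopen {G : Type*} [Group G] [TopologicalSpace G] [IsTopologicalGroup G]
    [T2Space G] {K : Subgroup G} (hKc : IsCompact (K : Set G)) (hKo : IsOpen (K : Set G))
    (y : G) : IsClopen (rcoset K y) :=
  ⟨(rcoset_compact hKc y).isClosed, rcoset_open hKo y⟩

theorem mem_rcoset_mul_left {G : Type*} [Group G] {K : Subgroup G} {y g : G} {k : G}
    (hk : k ∈ K) : k * g ∈ rcoset K y ↔ g ∈ rcoset K y := by
  rw [mem_rcoset, mem_rcoset, mul_assoc]
  exact mul_mem_cancel_left hk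

theorem mem_rcoset_self {G : Type*} [Group G] (K : Subgroup G) (y : G) : y ∈ rcoset K y := by
  simpa [mem_rcoset] using K.one_mem

/-- double coset `K·x·H` as a set. -/
def dcoset {G : Type*} [Group G] (K H : Subgroup G) (x : G) : Set G :=
  {g : G | ∃ k ∈ (K : Set G), ∃ h ∈ (H : Set G), g = k * x * h}

theorem mem_dcoset {G : Type*} [Group G] {K H : Subgroup G} {x g : G} :
    g ∈ dcoset K H x ↔ ∃ k ∈ (K : Set G), ∃ h ∈ (H : Set G), g = k * x * h := Iff.rfl

theorem mem_dcoset_self {G : Type*} [Group G] (K H : Subgroup G) (x : G) : x ∈ dcoset K H x :=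
  ⟨1, K.one_mem, 1, H.one_mem, by group⟩

theorem dcoset_open {G : Type*} [Group G] [TopologicalSpace G] [IsTopologicalGroup G]
    {K : Subgroup G} (H : Subgroup G) (hKo : IsOpen (K : Set G)) (x : G) :
    IsOpen (dcoset K H x) := by
  rw [isOpen_iff_forall_mem_open]
  rintro g ⟨k, hk, h, hh, rfl⟩
  refine ⟨rcoset K (x * h), ?_, rcoset_open hKo _, ?_⟩
  · rintro g' hg'
    rw [mem_rcoset] at hg'
    exact ⟨g' * (x * h)⁻¹, hg', h, hh, by group⟩
  · rw [mem_rcoset]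
    have : k * x * h * (x * h)⁻¹ = k := by group
    rw [this]
    exact hk

theorem dcoset_mul_left_mem {G : Type*} [Group G] {K H : Subgroup G} {x g : G} {k : G}
    (hk : k ∈ K) : k * g ∈ dcoset K H x ↔ g ∈ dcoset K H x := by
  constructor
  · rintro ⟨k', hk', h, hh, he⟩
    refine ⟨k⁻¹ * k', mul_mem (inv_mem hk) hk', h, hh, ?_⟩
    calc g = k⁻¹ * (k * g) := by group
    _ = k⁻¹ * (k' * x * h) := by rw [he]
    _ = k⁻¹ * k' * x * h := by group
  · rintro ⟨k', hk', h, hh, rfl⟩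
    exact ⟨k * k', mul_mem hk hk', h, hh, by group⟩

theorem dcoset_mul_right_mem {G : Type*} [Group G] {K H : Subgroup G} {x g : G} {h₀ : G}
    (hh₀ : h₀ ∈ H) : g * h₀ ∈ dcoset K H x ↔ g ∈ dcoset K H x := by
  constructor
  · rintro ⟨k', hk', h, hh, he⟩
    refine ⟨k', hk', h * h₀⁻¹, mul_mem hh (inv_mem hh₀), ?_⟩
    calc g = (g * h₀) * h₀⁻¹ := by group
    _ = k' * x * h * h₀⁻¹ := by rw [he]
    _ = k' * x * (h * h₀⁻¹) := by group
  · rintro ⟨k', hk', h, hh, rfl⟩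
    exact ⟨k', hk', h * h₀, mul_mem hh hh₀, by group⟩

theorem dcoset_closed {G : Type*} [Group G] [TopologicalSpace G] [IsTopologicalGroup G]
    {K : Subgroup G} (H : Subgroup G) (hKo : IsOpen (K : Set G)) (x : G) :
    IsClosed (dcoset K H x) := by
  rw [← isOpen_compl_iff, isOpen_iff_forall_mem_open]
  intro g hg
  refine ⟨dcoset K H g, ?_, dcoset_open H hKo g, mem_dcoset_self K H g⟩
  rintro g' ⟨k, hk, h, hh, rfl⟩
  intro hcon
  refine hg ?_
  obtain ⟨k', hk', h', hh', he⟩ := hcon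
  refine ⟨k⁻¹ * k', mul_mem (inv_mem hk) hk', h' * h⁻¹, mul_mem hh' (inv_mem hh), ?_⟩
  calc g = k⁻¹ * (k * g * h) * h⁻¹ := by group
  _ = k⁻¹ * (k' * x * h') * h⁻¹ := by rw [he]
  _ = k⁻¹ * k' * x * (h' * h⁻¹) := by group

end Aux5

section Main

variable {G : Type*} [Group G] [TopologicalSpace G] [IsTopologicalGroup G] [T2Space G]
variable {V : Type*} [AddCommGroup V] [Module ℂ V]
variable {H : Subgroup G} [MeasurableSpace H] [BorelSpace H]

theorem twst_mem_SmCc {ρ : Representation ℂ H V} (hHcl : IsClosed (H : Set G))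
    (hρ : SmoothRep ρ) {F : G → V} (hF : F ∈ SmCc G V) (x : G) :
    (fun h : H => ρ h (F (x * ↑h))) ∈ SmCc (↥H) V := by
  have hΦ : Topology.IsClosedEmbedding (fun h : H => x * ↑h) :=
    (Homeomorph.mulLeft x).isClosedEmbedding.comp hHcl.isClosedEmbedding_subtypeVal
  constructor
  · rw [IsLocallyConstant.iff_exists_open]
    intro h₀
    obtain ⟨U, hUo, hUfix⟩ := hρ (F (x * ↑h₀))
    refine ⟨((fun h : H => x * ↑h) ⁻¹' (F ⁻¹' {F (x * ↑h₀)}))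
      ∩ ((fun h : H => h₀⁻¹ * h) ⁻¹' (U : Set H)), ?_, ⟨?_, ?_⟩, ?_⟩
    · exact ((hF.1 _).preimage hΦ.continuous).inter (hUo.preimage (continuous_mul_left h₀⁻¹))
    · simp
    · simpa using U.one_mem
    · rintro h ⟨h1, h2⟩
      have hFh : F (x * ↑h) = F (x * ↑h₀) := h1
      have hdec : h = h₀ * (h₀⁻¹ * h) := by group
      rw [hFh, hdec, map_mul, Module.End.mul_apply,
        hUfix _ (by simpa using h2)]
  · refine HasCompactSupport.intro (hΦ.isCompact_preimage (hF.2 : IsCompact (tsupport F))) ?_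
    intro h hh
    have hz : F (x * ↑h) = 0 := image_eq_zero_of_notMem_tsupport (by exact hh)
    rw [hz, map_zero]

private theorem ennreal_cancel_aux {a c : ENNReal} (h0 : a ≠ 0) (hfin : a ≠ ⊤)
    (he : a = c * a) : c = 1 := by
  have hinv := ENNReal.mul_inv_cancel h0 hfin
  calc c = c * (a * a⁻¹) := by rw [hinv, mul_one]
  _ = (c * a) * a⁻¹ := by rw [mul_assoc]
  _ = a * a⁻¹ := by rw [← he]
  _ = 1 := hinv

theorem delta_eq_one_of (ν : Measure H) {Δ : H → ℝ}
    (hΔ : ∀ (h₀ : H) (s : Set H),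
      ν ((fun h : H => h * h₀) ⁻¹' s) = ENNReal.ofReal (Δ h₀) * ν s)
    {k₀ : H} {S : Set H} (hS : (fun h : H => h * k₀) ⁻¹' S = S)
    (h0 : ν S ≠ 0) (hfin : ν S ≠ ⊤) : Δ k₀ = 1 := by
  have he := hΔ k₀ S
  rw [hS] at he
  have h1 : ENNReal.ofReal (Δ k₀) = 1 := ennreal_cancel_aux h0 hfin he
  rwa [ENNReal.ofReal_eq_one] at h1

theorem delta_inv (hG : HasCompactOpenBasis G) (hHcl : IsClosed (H : Set G))
    (ν : Measure H) [ν.IsHaarMeasure] {Δ : H → ℝ} (hΔpos : ∀ h : H, 0 < Δ h)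
    (hΔ : ∀ (h₀ : H) (s : Set H),
      ν ((fun h : H => h * h₀) ⁻¹' s) = ENNReal.ofReal (Δ h₀) * ν s)
    (h : H) : Δ h⁻¹ = (Δ h)⁻¹ := by
  obtain ⟨K₀, hc, ho, -⟩ := subgroup_hasCompactOpenBasis hG H hHcl Set.univ Filter.univ_mem
  set S : Set H := (K₀ : Set H) with hSdef
  have h0 : ν S ≠ 0 := (ho.measure_pos ν ⟨1, K₀.one_mem⟩).ne'
  have hfin : ν S ≠ ⊤ := hc.measure_lt_top.ne
  have hsete : (fun x : H => x * h) ⁻¹' ((fun x : H => x * h⁻¹) ⁻¹' S) = S := by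
    ext g
    simp [mul_inv_cancel_right]
  have e1 := hΔ h ((fun x : H => x * h⁻¹) ⁻¹' S)
  rw [hsete, hΔ h⁻¹ S, ← mul_assoc, ← ENNReal.ofReal_mul (hΔpos h).le] at e1
  have h1 : Δ h * Δ h⁻¹ = 1 := by
    rw [← ENNReal.ofReal_eq_one]
    exact ennreal_cancel_aux h0 hfin e1
  exact (inv_eq_of_mul_eq_one_right h1).symm

end Main

section Core

variable {G : Type*} [Group G] [TopologicalSpace G] [IsTopologicalGroup G] [T2Space G]
variable {V : Type*} [AddCommGroup V] [Module ℂ V]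
variable {H : Subgroup G} [MeasurableSpace H] [BorelSpace H]

/-- The generating set in the statement of the theorem. -/
def genSet (ρ : Representation ℂ H V) (Δ : H → ℝ) : Set (G → V) :=
  {f : G → V | ∃ (h : H) (F' : G → V), F' ∈ SmCc G V ∧
    f = (fun x => (((Δ h)⁻¹ : ℝ) : ℂ) • ρ h (F' (x * h))) - F'}

theorem twist_translate_mem_SmCc {ρ : Representation ℂ H V} {F' : G → V}
    (hF' : F' ∈ SmCc G V) (h : H) :
    (fun x : G => ρ h (F' (x * ↑h))) ∈ SmCc G V :=
  (ccMap (Homeomorph.mulRight (↑h : G)) (ρ h) ⟨F', hF'⟩).2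

theorem translate_mem_SmCc {Y : Type*} [Group Y] [TopologicalSpace Y] [IsTopologicalGroup Y]
    {f : Y → V} (hf : f ∈ SmCc Y V) (h : Y) :
    (fun y : Y => f (y * h)) ∈ SmCc Y V :=
  (ccMap (Homeomorph.mulRight h) (LinearMap.id (R := ℂ) (M := V)) ⟨f, hf⟩).2

theorem genSet_subset_SmCc {ρ : Representation ℂ H V} {Δ : H → ℝ} :
    genSet (G := G) ρ Δ ⊆ (SmCc G V : Set (G → V)) := by
  rintro f ⟨h, F', hF', rfl⟩
  refine Submodule.sub_mem _ ?_ hF'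
  exact Submodule.smul_mem _ _ (twist_translate_mem_SmCc hF' h)

theorem span_to_kernel {ρ : Representation ℂ H V} {Δ : H → ℝ}
    (hHcl : IsClosed (H : Set G)) (hρ : SmoothRep ρ)
    (ν : Measure H) [ν.IsHaarMeasure]
    (hΔpos : ∀ h : H, 0 < Δ h)
    (hΔ : ∀ (h₀ : H) (s : Set H),
      ν ((fun h : H => h * h₀) ⁻¹' s) = ENNReal.ofReal (Δ h₀) * ν s)
    {F : G → V} (hFspan : F ∈ Submodule.span ℂ (genSet ρ Δ)) :
    indAvg ν ρ F = 0 := by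
  refine (Submodule.span_induction
    (p := fun f _ => f ∈ SmCc G V ∧ indAvg ν ρ f = 0) ?_ ?_ ?_ ?_ hFspan).2
  · rintro f ⟨h, F', hF', rfl⟩
    refine ⟨genSet_subset_SmCc ⟨h, F', hF', rfl⟩, ?_⟩
    funext g
    set ψ : H → V := fun h' : H => ρ h' (F' (g * ↑h')) with hψdef
    have hψmem : ψ ∈ SmCc (↥H) V := twst_mem_SmCc hHcl hρ hF' g
    have hψtr : (fun h' : H => ψ (h' * h)) ∈ SmCc (↥H) V := translate_mem_SmCc hψmem h
    have hψtr' : (fun h' : H => (((Δ h)⁻¹ : ℝ) : ℂ) • ψ (h' * h)) ∈ SmCc (↥H) V :=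
      Submodule.smul_mem _ _ hψtr
    have heq : (fun h' : H => ρ h'
        ((((fun y => (((Δ h)⁻¹ : ℝ) : ℂ) • ρ h (F' (y * ↑h))) - F') : G → V) (g * ↑h')))
        = fun h' : H => (((Δ h)⁻¹ : ℝ) : ℂ) • ψ (h' * h) - ψ h' := by
      funext h'
      simp only [Pi.sub_apply]
      rw [map_sub]
      congr 1
      rw [(ρ h').map_smul]
      congr 1
      rw [hψdef]
      simp only []
      rw [← Module.End.mul_apply, ← map_mul]
      congr 2
      push_cast
      rw [mul_assoc]
    have e1 : smInt ν (fun h' : H => (((Δ h)⁻¹ : ℝ) : ℂ) • ψ (h' * h) - ψ h')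
        = smInt ν (fun h' : H => (((Δ h)⁻¹ : ℝ) : ℂ) • ψ (h' * h)) - smInt ν ψ :=
      smInt_sub ν hψtr' hψmem
    have e2 : smInt ν (fun h' : H => (((Δ h)⁻¹ : ℝ) : ℂ) • ψ (h' * h))
        = (((Δ h)⁻¹ : ℝ) : ℂ) • smInt ν (fun h' : H => ψ (h' * h)) :=
      smInt_smul ν hψtr _
    show smInt ν (fun h' : H => ρ h'
        ((((fun y => (((Δ h)⁻¹ : ℝ) : ℂ) • ρ h (F' (y * ↑h))) - F') : G → V) (g * ↑h'))) = 0
    rw [heq, e1, e2, smInt_translate ν Δ hΔpos hΔ ψ h, smul_smul, ← Complex.ofReal_mul,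
      inv_mul_cancel₀ (hΔpos h).ne', Complex.ofReal_one, one_smul, sub_self]
  · refine ⟨Submodule.zero_mem _, ?_⟩
    funext g
    have heq : (fun h' : H => ρ h' ((0 : G → V) (g * ↑h'))) = fun _ : H => (0 : V) := by
      funext h'; simp
    show smInt ν (fun h' : H => ρ h' ((0 : G → V) (g * ↑h'))) = 0
    rw [heq, smInt_zero]
  · rintro f₁ f₂ - - ⟨hm₁, hk₁⟩ ⟨hm₂, hk₂⟩
    refine ⟨Submodule.add_mem _ hm₁ hm₂, ?_⟩
    funext g
    have heq : (fun h' : H => ρ h' ((f₁ + f₂) (g * ↑h')))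
        = fun h' : H => ρ h' (f₁ (g * ↑h')) + ρ h' (f₂ (g * ↑h')) := by
      funext h'; simp
    have e1 : smInt ν (fun h' : H => ρ h' (f₁ (g * ↑h')) + ρ h' (f₂ (g * ↑h')))
        = smInt ν (fun h' : H => ρ h' (f₁ (g * ↑h')))
          + smInt ν (fun h' : H => ρ h' (f₂ (g * ↑h'))) :=
      smInt_add ν (twst_mem_SmCc hHcl hρ hm₁ g) (twst_mem_SmCc hHcl hρ hm₂ g)
    show smInt ν (fun h' : H => ρ h' ((f₁ + f₂) (g * ↑h'))) = 0
    rw [heq, e1, show smInt ν (fun h' : H => ρ h' (f₁ (g * ↑h'))) = 0 from congrFun hk₁ g,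
      show smInt ν (fun h' : H => ρ h' (f₂ (g * ↑h'))) = 0 from congrFun hk₂ g, add_zero]
  · rintro a f - ⟨hm, hk⟩
    refine ⟨Submodule.smul_mem _ a hm, ?_⟩
    funext g
    have heq : (fun h' : H => ρ h' ((a • f) (g * ↑h')))
        = fun h' : H => a • ρ h' (f (g * ↑h')) := by
      funext h'; simp
    have e1 : smInt ν (fun h' : H => a • ρ h' (f (g * ↑h')))
        = a • smInt ν (fun h' : H => ρ h' (f (g * ↑h'))) :=
      smInt_smul ν (twst_mem_SmCc hHcl hρ hm g) a
    show smInt ν (fun h' : H => ρ h' ((a • f) (g * ↑h'))) = 0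
    rw [heq, e1, show smInt ν (fun h' : H => ρ h' (f (g * ↑h'))) = 0 from congrFun hk g,
      smul_zero]

end Core

section Core2

variable {G : Type*} [Group G] [TopologicalSpace G] [IsTopologicalGroup G] [T2Space G]
variable {V : Type*} [AddCommGroup V] [Module ℂ V]
variable {H : Subgroup G} [MeasurableSpace H] [BorelSpace H]

theorem rcoset_shift_mem_iff {K : Subgroup G} {x : G} (h₀ : H) (y : G) :
    y * ↑(h₀⁻¹) ∈ rcoset K x ↔ y ∈ rcoset K (x * ↑h₀) := by
  have e : y * ↑(h₀⁻¹) * x⁻¹ = y * (x * ↑h₀)⁻¹ := by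
    push_cast
    group
  rw [mem_rcoset, mem_rcoset, e]

theorem rho_inv_apply {ρ : Representation ℂ H V} (h₀ : H) (v : V) :
    ρ h₀⁻¹ (ρ h₀ v) = v := by
  rw [← Module.End.mul_apply, ← map_mul, inv_mul_cancel, map_one, Module.End.one_apply]

theorem piece_reduction {ρ : Representation ℂ H V} {Δ : H → ℝ} (hΔpos : ∀ h : H, 0 < Δ h)
    {K : Subgroup G} (hKc : IsCompact (K : Set G)) (hKo : IsOpen (K : Set G))
    (x : G) (h₀ : H) (v : V) :
    ((rcoset K (x * ↑h₀)).indicator (fun _ => v)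
      - fun y => ((Δ h₀⁻¹ : ℝ) : ℂ) • (rcoset K x).indicator (fun _ => ρ h₀ v) y)
      ∈ Submodule.span ℂ (genSet (G := G) ρ Δ) := by
  set w := ρ h₀ v with hw
  set c : ℂ := ((Δ h₀⁻¹ : ℝ) : ℂ) with hc
  have hF' : (rcoset K x).indicator (fun _ => w) ∈ SmCc G V :=
    const_indicator_mem_SmCc (rcoset_clopen hKc hKo x) (rcoset_compact hKc x) w
  have hgen : ((fun y => (((Δ h₀⁻¹)⁻¹ : ℝ) : ℂ) • ρ h₀⁻¹
        ((rcoset K x).indicator (fun _ => w) (y * ↑(h₀⁻¹))))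
      - (rcoset K x).indicator (fun _ => w)) ∈ genSet ρ Δ := ⟨h₀⁻¹, _, hF', rfl⟩
  have hsm := Submodule.smul_mem _ c (Submodule.subset_span hgen)
  have heq : c • ((fun y => (((Δ h₀⁻¹)⁻¹ : ℝ) : ℂ) • ρ h₀⁻¹
        ((rcoset K x).indicator (fun _ => w) (y * ↑(h₀⁻¹))))
      - (rcoset K x).indicator (fun _ => w))
      = (rcoset K (x * ↑h₀)).indicator (fun _ => v)
        - fun y => c • (rcoset K x).indicator (fun _ => w) y := by
    funext y
    simp only [Pi.smul_apply, Pi.sub_apply]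
    by_cases hy : y ∈ rcoset K (x * ↑h₀)
    · rw [Set.indicator_of_mem ((rcoset_shift_mem_iff h₀ y).2 hy),
        Set.indicator_of_mem hy, hw, rho_inv_apply, smul_sub, smul_smul, hc,
        ← Complex.ofReal_mul, mul_inv_cancel₀ (hΔpos h₀⁻¹).ne', Complex.ofReal_one, one_smul]
    · rw [Set.indicator_of_notMem (fun hmem => hy ((rcoset_shift_mem_iff h₀ y).1 hmem)),
        Set.indicator_of_notMem hy, map_zero, smul_zero, zero_sub, zero_sub, smul_neg]
  rw [heq] at hsm
  exact hsm

end Core2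

section Core3

variable {G : Type*} [Group G] [TopologicalSpace G] [IsTopologicalGroup G] [T2Space G]
variable {V : Type*} [AddCommGroup V] [Module ℂ V]
variable {H : Subgroup G} [MeasurableSpace H] [BorelSpace H]

theorem coset_induction {ρ : Representation ℂ H V} {Δ : H → ℝ}
    (hHcl : IsClosed (H : Set G)) (hρ : SmoothRep ρ)
    (ν : Measure H) [ν.IsHaarMeasure]
    (hΔpos : ∀ h : H, 0 < Δ h)
    (hΔ : ∀ (h₀ : H) (s : Set H),
      ν ((fun h : H => h * h₀) ⁻¹' s) = ENNReal.ofReal (Δ h₀) * ν s)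
    {K : Subgroup G} (hKc : IsCompact (K : Set G)) (hKo : IsOpen (K : Set G)) (x : G)
    (s : Finset H) :
    ∀ F : G → V, F ∈ SmCc G V → (∀ k ∈ K, ∀ g : G, F (k * g) = F g) →
      tsupport F ⊆ (⋃ h ∈ s, rcoset K (x * ↑h)) →
      ∃ u : V, (F - (rcoset K x).indicator (fun _ => u)) ∈ Submodule.span ℂ (genSet ρ Δ) ∧
        smInt ν (fun h : H => ρ h (F (x * ↑h)))
          = smInt ν (fun h : H => ρ h ((rcoset K x).indicator (fun _ => u) (x * ↑h))) := by
  classical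
  induction s using Finset.induction_on with
  | empty =>
    intro F hF hinv hsupp
    have hF0 : F = 0 := by
      funext y
      by_contra hy
      have := hsupp (subset_tsupport F (Function.mem_support.2 hy))
      simpa using this
    have h0 : (rcoset K x).indicator (fun _ => (0 : V)) = (0 : G → V) := by
      funext y; simp
    refine ⟨0, ?_, ?_⟩
    · rw [hF0, h0, sub_zero]
      exact Submodule.zero_mem _
    · rw [hF0, h0]
  | @insert h₀ s hh₀s ih =>
    intro F hF hinv hsupp
    have hCc : IsClopen (rcoset K (x * ↑h₀)) := rcoset_clopen hKc hKo _
    have hCcomp : IsCompact (rcoset K (x * ↑h₀)) := rcoset_compact hKc _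
    set v := F (x * ↑h₀) with hv
    set F₁ : G → V := (rcoset K (x * ↑h₀)).indicator (fun _ => v) with hF₁
    have hF₁mem : F₁ ∈ SmCc G V := const_indicator_mem_SmCc hCc hCcomp v
    have hconst : ∀ g ∈ rcoset K (x * ↑h₀), F g = v := by
      intro g hg
      rw [mem_rcoset] at hg
      have he : g = (g * (x * ↑h₀)⁻¹) * (x * ↑h₀) := by group
      rw [hv, he]
      exact hinv _ hg _
    set F₂ : G → V := F - F₁ with hF₂
    have hF₂mem : F₂ ∈ SmCc G V := Submodule.sub_mem _ hF hF₁mem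
    have hF₂inv : ∀ k ∈ K, ∀ g : G, F₂ (k * g) = F₂ g := by
      intro k hk g
      show F (k * g) - F₁ (k * g) = F g - F₁ g
      rw [hinv k hk g]
      congr 1
      by_cases hg : g ∈ rcoset K (x * ↑h₀)
      · rw [hF₁, Set.indicator_of_mem ((mem_rcoset_mul_left hk).2 hg),
          Set.indicator_of_mem hg]
      · rw [hF₁, Set.indicator_of_notMem (fun hm => hg ((mem_rcoset_mul_left hk).1 hm)),
          Set.indicator_of_notMem hg]
    have hF₂supp : tsupport F₂ ⊆ ⋃ h ∈ s, rcoset K (x * ↑h) := by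
      have hclosed : IsClosed (⋃ h ∈ s, rcoset K (x * ↑h)) :=
        Set.Finite.isClosed_biUnion s.finite_toSet
          (fun h _ => (rcoset_compact hKc _).isClosed)
      refine closure_minimal ?_ hclosed
      intro y hy
      rw [Function.mem_support] at hy
      by_cases hyC : y ∈ rcoset K (x * ↑h₀)
      · exfalso
        apply hy
        show F y - F₁ y = 0
        rw [hconst y hyC, hF₁, Set.indicator_of_mem hyC, sub_self]
      · have hyF : F y ≠ 0 := by
          intro h0
          apply hy
          show F y - F₁ y = 0
          rw [h0, hF₁, Set.indicator_of_notMem hyC, sub_zero]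
        have hmem := hsupp (subset_tsupport F (Function.mem_support.2 hyF))
        obtain ⟨h, hh, hyh⟩ := Set.mem_iUnion₂.1 hmem
        rcases Finset.mem_insert.1 hh with rfl | hh'
        · exact absurd hyh hyC
        · exact Set.mem_biUnion hh' hyh
    obtain ⟨u₂, hspan₂, hint₂⟩ := ih F₂ hF₂mem hF₂inv hF₂supp
    set c : ℂ := ((Δ h₀⁻¹ : ℝ) : ℂ) with hc
    set w : V := ρ h₀ v with hw
    refine ⟨c • w + u₂, ?_, ?_⟩
    · have hpiece := piece_reduction (ρ := ρ) (Δ := Δ) hΔpos hKc hKo x h₀ v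
      have hsum := Submodule.add_mem _ hpiece hspan₂
      have heq : ((rcoset K (x * ↑h₀)).indicator (fun _ => v)
            - fun y => ((Δ h₀⁻¹ : ℝ) : ℂ) • (rcoset K x).indicator (fun _ => ρ h₀ v) y)
          + (F₂ - (rcoset K x).indicator (fun _ => u₂))
          = F - (rcoset K x).indicator (fun _ => c • w + u₂) := by
        funext y
        simp only [Pi.add_apply, Pi.sub_apply]
        by_cases hy : y ∈ rcoset K x
        · rw [Set.indicator_of_mem hy, Set.indicator_of_mem hy, Set.indicator_of_mem hy]
          show F₁ y - c • w + (F y - F₁ y - u₂) = F y - (c • w + u₂)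
          abel
        · rw [Set.indicator_of_notMem hy, Set.indicator_of_notMem hy,
            Set.indicator_of_notMem hy]
          show F₁ y - c • (0 : V) + (F y - F₁ y - 0) = F y - 0
          rw [smul_zero]
          abel
      rw [heq] at hsum
      exact hsum
    · have hTmem₁ : (fun h : H => ρ h (F₁ (x * ↑h))) ∈ SmCc (↥H) V :=
        twst_mem_SmCc hHcl hρ hF₁mem x
      have hTmem₂ : (fun h : H => ρ h (F₂ (x * ↑h))) ∈ SmCc (↥H) V :=
        twst_mem_SmCc hHcl hρ hF₂mem x
      have hsplit : (fun h : H => ρ h (F (x * ↑h)))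
          = fun h : H => ρ h (F₁ (x * ↑h)) + ρ h (F₂ (x * ↑h)) := by
        funext h
        rw [← map_add]
        congr 1
        show F (x * ↑h) = F₁ (x * ↑h) + (F (x * ↑h) - F₁ (x * ↑h))
        abel
      have e0 : smInt ν (fun h : H => ρ h (F (x * ↑h)))
          = smInt ν (fun h : H => ρ h (F₁ (x * ↑h)))
            + smInt ν (fun h : H => ρ h (F₂ (x * ↑h))) := by
        rw [hsplit]
        exact smInt_add ν hTmem₁ hTmem₂
      have hIndw : (rcoset K x).indicator (fun _ => w) ∈ SmCc G V :=
        const_indicator_mem_SmCc (rcoset_clopen hKc hKo x) (rcoset_compact hKc x) w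
      have hIndu₂ : (rcoset K x).indicator (fun _ => u₂) ∈ SmCc G V :=
        const_indicator_mem_SmCc (rcoset_clopen hKc hKo x) (rcoset_compact hKc x) u₂
      have hTIndw : (fun h : H => ρ h ((rcoset K x).indicator (fun _ => w) (x * ↑h)))
          ∈ SmCc (↥H) V := twst_mem_SmCc hHcl hρ hIndw x
      have hTIndu₂ : (fun h : H => ρ h ((rcoset K x).indicator (fun _ => u₂) (x * ↑h)))
          ∈ SmCc (↥H) V := twst_mem_SmCc hHcl hρ hIndu₂ x
      have htr : (fun h : H => ρ h (F₁ (x * ↑h)))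
          = fun h : H => (fun h' : H =>
              ρ h' ((rcoset K x).indicator (fun _ => w) (x * ↑h'))) (h * h₀⁻¹) := by
        funext h
        simp only []
        by_cases hm : x * ↑h ∈ rcoset K (x * ↑h₀)
        · have hm' : x * ↑(h * h₀⁻¹) ∈ rcoset K x := by
            rw [mem_rcoset]
            have e : x * ↑(h * h₀⁻¹) * x⁻¹ = (x * ↑h) * (x * ↑h₀)⁻¹ := by
              push_cast
              group
            rw [e]
            exact hm
          have hval : ρ (h * h₀⁻¹) (ρ h₀ v) = ρ h v := by
            rw [← Module.End.mul_apply, ← map_mul, inv_mul_cancel_right]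
          rw [hF₁, Set.indicator_of_mem hm, Set.indicator_of_mem hm', hw, hval]
        · have hm' : x * ↑(h * h₀⁻¹) ∉ rcoset K x := by
            intro hmem
            apply hm
            rw [mem_rcoset] at hmem ⊢
            have e : x * ↑(h * h₀⁻¹) * x⁻¹ = (x * ↑h) * (x * ↑h₀)⁻¹ := by
              push_cast
              group
            rw [e] at hmem
            exact hmem
          rw [hF₁, Set.indicator_of_notMem hm, Set.indicator_of_notMem hm',
            map_zero, map_zero]
      have e1 : smInt ν (fun h : H => ρ h (F₁ (x * ↑h)))
          = c • smInt ν (fun h' : H =>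
              ρ h' ((rcoset K x).indicator (fun _ => w) (x * ↑h'))) := by
        have e1' := smInt_translate ν Δ hΔpos hΔ
          (fun h' : H => ρ h' ((rcoset K x).indicator (fun _ => w) (x * ↑h'))) h₀⁻¹
        rw [htr, e1', hc]
      have hrhs : (fun h : H => ρ h ((rcoset K x).indicator (fun _ => c • w + u₂) (x * ↑h)))
          = fun h : H => c • ρ h ((rcoset K x).indicator (fun _ => w) (x * ↑h))
            + ρ h ((rcoset K x).indicator (fun _ => u₂) (x * ↑h)) := by
        funext h
        by_cases hm : x * ↑h ∈ rcoset K x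
        · rw [Set.indicator_of_mem hm, Set.indicator_of_mem hm, Set.indicator_of_mem hm,
            map_add, (ρ (h : H)).map_smul]
        · rw [Set.indicator_of_notMem hm, Set.indicator_of_notMem hm,
            Set.indicator_of_notMem hm]
          simp
      have hTc : (fun h : H => c • ρ h ((rcoset K x).indicator (fun _ => w) (x * ↑h)))
          ∈ SmCc (↥H) V := Submodule.smul_mem _ _ hTIndw
      have e2a : smInt ν (fun h : H =>
            c • ρ h ((rcoset K x).indicator (fun _ => w) (x * ↑h)))
          = c • smInt ν (fun h : H =>
              ρ h ((rcoset K x).indicator (fun _ => w) (x * ↑h))) :=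
        smInt_smul ν hTIndw c
      have e2b : smInt ν (fun h : H =>
            c • ρ h ((rcoset K x).indicator (fun _ => w) (x * ↑h))
              + ρ h ((rcoset K x).indicator (fun _ => u₂) (x * ↑h)))
          = smInt ν (fun h : H =>
              c • ρ h ((rcoset K x).indicator (fun _ => w) (x * ↑h)))
            + smInt ν (fun h : H =>
              ρ h ((rcoset K x).indicator (fun _ => u₂) (x * ↑h))) :=
        smInt_add ν hTc hTIndu₂
      rw [e0, e1, hint₂, hrhs, e2b, e2a]

end Core3

section Core4

variable {G : Type*} [Group G] [TopologicalSpace G] [IsTopologicalGroup G] [T2Space G]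
variable {V : Type*} [AddCommGroup V] [Module ℂ V]
variable {H : Subgroup G} [MeasurableSpace H] [BorelSpace H]

theorem indicator_mem_span_of_int_zero {ρ : Representation ℂ H V} {Δ : H → ℝ}
    (hHcl : IsClosed (H : Set G)) (hρ : SmoothRep ρ)
    (ν : Measure H) [ν.IsHaarMeasure]
    (hΔ : ∀ (h₀ : H) (s : Set H),
      ν ((fun h : H => h * h₀) ⁻¹' s) = ENNReal.ofReal (Δ h₀) * ν s)
    {K : Subgroup G} (hKc : IsCompact (K : Set G)) (hKo : IsOpen (K : Set G)) (x : G) (u : V)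
    (hzero : smInt ν (fun h : H => ρ h ((rcoset K x).indicator (fun _ => u) (x * ↑h))) = 0) :
    ((rcoset K x).indicator (fun _ => u) : G → V) ∈ Submodule.span ℂ (genSet ρ Δ) := by
  classical
  by_cases hu : u = 0
  · subst hu
    have h0 : ((rcoset K x).indicator (fun _ => (0 : V)) : G → V) = 0 := by
      funext y; simp
    rw [h0]
    exact Submodule.zero_mem _
  set θ : H → V := fun h : H => ρ h ((rcoset K x).indicator (fun _ => u) (x * ↑h)) with hθ
  have hIndu : ((rcoset K x).indicator (fun _ => u) : G → V) ∈ SmCc G V :=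
    const_indicator_mem_SmCc (rcoset_clopen hKc hKo x) (rcoset_compact hKc x) u
  have hθmem : θ ∈ SmCc (↥H) V := twst_mem_SmCc hHcl hρ hIndu x
  set KH : Set H := {h : H | x * ↑h ∈ rcoset K x} with hKH
  have hθin : ∀ h ∈ KH, θ h = ρ h u := by
    intro h hh
    show ρ h ((rcoset K x).indicator (fun _ => u) (x * ↑h)) = ρ h u
    rw [Set.indicator_of_mem (show x * ↑h ∈ rcoset K x from hh)]
  have hθout : ∀ h ∉ KH, θ h = 0 := by
    intro h hh
    show ρ h ((rcoset K x).indicator (fun _ => u) (x * ↑h)) = 0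
    rw [Set.indicator_of_notMem (show x * ↑h ∉ rcoset K x from hh), map_zero]
  have hρne : ∀ h : H, ρ h u ≠ 0 := by
    intro h hcon
    apply hu
    rw [← rho_inv_apply (ρ := ρ) h u, hcon, map_zero]
  have hΦ : Topology.IsClosedEmbedding (fun h : H => x * ↑h) :=
    (Homeomorph.mulLeft x).isClosedEmbedding.comp hHcl.isClosedEmbedding_subtypeVal
  have hKHopen : IsOpen KH := (rcoset_open hKo x).preimage hΦ.continuous
  have hKHcompact : IsCompact KH := hΦ.isCompact_preimage (rcoset_compact hKc x)
  have hKHone : (1 : H) ∈ KH := by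
    show x * ↑(1 : H) ∈ rcoset K x
    simpa using mem_rcoset_self K x
  have hν0 : ν KH ≠ 0 := (hKHopen.measure_pos ν ⟨1, hKHone⟩).ne'
  have hνfin : ν KH ≠ ⊤ := hKHcompact.measure_lt_top.ne
  have hconjK : ∀ k₀ : H, k₀ ∈ KH → ∀ y : G, (y * ↑k₀ ∈ rcoset K x ↔ y ∈ rcoset K x) := by
    intro k₀ hk₀ y
    have hk₀K : x * ↑k₀ * x⁻¹ ∈ K := hk₀
    rw [mem_rcoset, mem_rcoset]
    have e : y * ↑k₀ * x⁻¹ = (y * x⁻¹) * (x * ↑k₀ * x⁻¹) := by group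
    rw [e]
    exact mul_mem_cancel_right hk₀K
  set t : Finset V := (SmCc.finite_range hθmem).toFinset.erase 0 with ht
  have hmem_t : ∀ w : V, w ∈ t ↔ (w ≠ 0 ∧ w ∈ Set.range θ) := by
    intro w
    rw [ht, Finset.mem_erase, Set.Finite.mem_toFinset]
  -- the integral is the sum over t
  have hint : smInt ν θ = ∑ w ∈ t, (((ν (θ ⁻¹' {w})).toReal : ℝ) : ℂ) • w := by
    refine smInt_eq_sum ν θ t ?_
    intro w hw
    by_cases hw0 : w = 0
    · exact Or.inl hw0
    · refine Or.inr ?_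
      ext h
      simp only [Set.mem_preimage, Set.mem_singleton_iff, Set.mem_empty_iff_false, iff_false]
      intro hcon
      exact hw ((hmem_t w).2 ⟨hw0, ⟨h, hcon⟩⟩)
  -- fibers partition KH
  have hfibsub : ∀ w ∈ t, θ ⁻¹' {w} ⊆ KH := by
    intro w hw h hh
    by_contra hcon
    have := hθout h hcon
    rw [Set.mem_preimage, Set.mem_singleton_iff] at hh
    rw [hh] at this
    exact ((hmem_t w).1 hw).1 this
  have hcoverKH : KH = ⋃ w ∈ t, θ ⁻¹' {w} := by
    ext h
    constructor
    · intro hh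
      refine Set.mem_iUnion₂.2 ⟨θ h, ?_, by simp⟩
      refine (hmem_t _).2 ⟨?_, ⟨h, rfl⟩⟩
      rw [hθin h hh]
      exact hρne h
    · intro hh
      obtain ⟨w, hw, hhw⟩ := Set.mem_iUnion₂.1 hh
      exact hfibsub w hw hhw
  have hmeassum : ∑ w ∈ t, ν (θ ⁻¹' {w}) = ν KH := by
    rw [hcoverKH]
    refine (measure_biUnion_finset ?_ ?_).symm
    · intro p _ q _ hpq
      rw [Function.onFun, Set.disjoint_left]
      intro h hp hq
      rw [Set.mem_preimage, Set.mem_singleton_iff] at hp hq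
      exact hpq (hp.symm.trans hq)
    · exact fun w _ => (hθmem.1 _).measurableSet
  have hfibfin : ∀ w ∈ t, ν (θ ⁻¹' {w}) ≠ ⊤ :=
    fun w hw => (lt_of_le_of_lt (measure_mono (hfibsub w hw)) hνfin.lt_top).ne
  -- span membership of the difference indicators
  have hspanw : ∀ w ∈ t,
      (((rcoset K x).indicator (fun _ => w) - (rcoset K x).indicator (fun _ => u) : G → V))
        ∈ Submodule.span ℂ (genSet ρ Δ) := by
    intro w hw
    obtain ⟨k₀, hk₀w⟩ := ((hmem_t w).1 hw).2
    have hk₀KH : k₀ ∈ KH := by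
      by_contra hcon
      rw [hθout k₀ hcon] at hk₀w
      exact ((hmem_t w).1 hw).1 hk₀w.symm
    have hρk₀ : ρ k₀ u = w := by
      rw [← hk₀w, hθin k₀ hk₀KH]
    have hSinv : (fun h : H => h * k₀) ⁻¹' KH = KH := by
      ext h
      show x * ↑(h * k₀) ∈ rcoset K x ↔ x * ↑h ∈ rcoset K x
      have e : x * ↑(h * k₀) = (x * ↑h) * ↑k₀ := by push_cast; group
      rw [e]
      exact hconjK k₀ hk₀KH _
    have hΔk₀ : Δ k₀ = 1 := delta_eq_one_of ν hΔ hSinv hν0 hνfin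
    have hgen : ((fun y => (((Δ k₀)⁻¹ : ℝ) : ℂ) • ρ k₀
          ((rcoset K x).indicator (fun _ => u) (y * ↑k₀)))
        - (rcoset K x).indicator (fun _ => u)) ∈ genSet ρ Δ := ⟨k₀, _, hIndu, rfl⟩
    refine Submodule.span_mono (le_refl _) ?_
    have heq : ((fun y => (((Δ k₀)⁻¹ : ℝ) : ℂ) • ρ k₀
          ((rcoset K x).indicator (fun _ => u) (y * ↑k₀)))
        - (rcoset K x).indicator (fun _ => u))
        = ((rcoset K x).indicator (fun _ => w) - (rcoset K x).indicator (fun _ => u) : G → V) := by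
      funext y
      simp only [Pi.sub_apply, hΔk₀]
      norm_num
      by_cases hy : y ∈ rcoset K x
      · rw [Set.indicator_of_mem ((hconjK k₀ hk₀KH y).2 hy), Set.indicator_of_mem hy, hρk₀]
      · rw [Set.indicator_of_notMem (fun hc => hy ((hconjK k₀ hk₀KH y).1 hc)),
          Set.indicator_of_notMem hy, map_zero]
    rw [← heq]
    exact Submodule.subset_span hgen
  -- the combination
  set r : ℂ := (((ν KH).toReal : ℝ) : ℂ) with hr
  have hrne : r ≠ 0 := by
    rw [hr]
    simp only [ne_eq, Complex.ofReal_eq_zero]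
    exact ENNReal.toReal_ne_zero.2 ⟨hν0, hνfin⟩
  have hE : (∑ w ∈ t, (((ν (θ ⁻¹' {w})).toReal : ℝ) : ℂ) •
        (((rcoset K x).indicator (fun _ => w) - (rcoset K x).indicator (fun _ => u)) : G → V))
      ∈ Submodule.span ℂ (genSet ρ Δ) :=
    Submodule.sum_mem _ (fun w hw => Submodule.smul_mem _ _ (hspanw w hw))
  have hsum_c : ∑ w ∈ t, (((ν (θ ⁻¹' {w})).toReal : ℝ) : ℂ) = r := by
    rw [hr, ← Complex.ofReal_sum]
    congr 1
    rw [← ENNReal.toReal_sum hfibfin, hmeassum]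
  have hEeq : (∑ w ∈ t, (((ν (θ ⁻¹' {w})).toReal : ℝ) : ℂ) •
        (((rcoset K x).indicator (fun _ => w) - (rcoset K x).indicator (fun _ => u)) : G → V))
      = -(r • ((rcoset K x).indicator (fun _ => u) : G → V)) := by
    funext y
    rw [Finset.sum_apply]
    simp only [Pi.smul_apply, Pi.sub_apply, Pi.neg_apply]
    by_cases hy : y ∈ rcoset K x
    · simp only [Set.indicator_of_mem hy]
      rw [Finset.sum_congr rfl (fun w _ => smul_sub _ w u), Finset.sum_sub_distrib,
        ← Finset.sum_smul, hsum_c]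
      have hzz : (∑ w ∈ t, (((ν (θ ⁻¹' {w})).toReal : ℝ) : ℂ) • w) = 0 := by
        rw [← hint]
        exact hzero
      rw [hzz, zero_sub]
    · simp only [Set.indicator_of_notMem hy]
      simp
  rw [hEeq] at hE
  have := Submodule.smul_mem _ (-r)⁻¹ hE
  rw [← neg_smul, smul_smul, inv_mul_cancel₀ (neg_ne_zero.2 hrne), one_smul] at this
  exact this

end Core4

section Core5

variable {G : Type*} [Group G] [TopologicalSpace G] [IsTopologicalGroup G] [T2Space G]
variable {V : Type*} [AddCommGroup V] [Module ℂ V]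
variable {H : Subgroup G} [MeasurableSpace H] [BorelSpace H]

set_option maxHeartbeats 1000000 in
theorem single_coset {ρ : Representation ℂ H V} {Δ : H → ℝ}
    (hHcl : IsClosed (H : Set G)) (hρ : SmoothRep ρ)
    (ν : Measure H) [ν.IsHaarMeasure]
    (hΔpos : ∀ h : H, 0 < Δ h)
    (hΔ : ∀ (h₀ : H) (s : Set H),
      ν ((fun h : H => h * h₀) ⁻¹' s) = ENNReal.ofReal (Δ h₀) * ν s)
    {K : Subgroup G} (hKc : IsCompact (K : Set G)) (hKo : IsOpen (K : Set G)) (x : G)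
    {F : G → V} (hF : F ∈ SmCc G V) (hinv : ∀ k ∈ K, ∀ g : G, F (k * g) = F g)
    (hsupp : Function.support F ⊆ dcoset K H x)
    (hker : smInt ν (fun h : H => ρ h (F (x * ↑h))) = 0) :
    F ∈ Submodule.span ℂ (genSet ρ Δ) := by
  have htsupp : tsupport F ⊆ dcoset K H x :=
    closure_minimal hsupp (dcoset_closed H hKo x)
  have hcover : tsupport F ⊆ ⋃ h : H, rcoset K (x * ↑h) := by
    intro y hy
    obtain ⟨k, hk, h, hh, rfl⟩ := htsupp hy
    refine Set.mem_iUnion.2 ⟨⟨h, hh⟩, ?_⟩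
    rw [mem_rcoset]
    have e : k * x * h * (x * ↑(⟨h, hh⟩ : H))⁻¹ = k := by
      show k * x * h * (x * h)⁻¹ = k
      group
    rw [e]
    exact hk
  obtain ⟨s, hs⟩ := IsCompact.elim_finite_subcover (hF.2 : IsCompact (tsupport F))
    (fun h : H => rcoset K (x * ↑h)) (fun h => rcoset_open hKo _) hcover
  obtain ⟨u, hspan, hint⟩ := coset_induction hHcl hρ ν hΔpos hΔ hKc hKo x s F hF hinv hs
  have hzero : smInt ν (fun h : H =>
      ρ h ((rcoset K x).indicator (fun _ => u) (x * ↑h))) = 0 := by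
    rw [← hint]
    exact hker
  have hind := indicator_mem_span_of_int_zero (Δ := Δ) hHcl hρ ν hΔ hKc hKo x u hzero
  have he : F = (F - (rcoset K x).indicator (fun _ => u))
      + (rcoset K x).indicator (fun _ => u) := by
    funext y
    simp
  rw [he]
  exact Submodule.add_mem _ hspan hind

set_option maxHeartbeats 1000000 in
theorem outer_induction {ρ : Representation ℂ H V} {Δ : H → ℝ}
    (hHcl : IsClosed (H : Set G)) (hρ : SmoothRep ρ)
    (ν : Measure H) [ν.IsHaarMeasure]
    (hΔpos : ∀ h : H, 0 < Δ h)
    (hΔ : ∀ (h₀ : H) (s : Set H),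
      ν ((fun h : H => h * h₀) ⁻¹' s) = ENNReal.ofReal (Δ h₀) * ν s)
    {K : Subgroup G} (hKc : IsCompact (K : Set G)) (hKo : IsOpen (K : Set G))
    (s : Finset G) :
    ∀ F : G → V, F ∈ SmCc G V → (∀ k ∈ K, ∀ g : G, F (k * g) = F g) →
      indAvg ν ρ F = 0 → tsupport F ⊆ (⋃ y ∈ s, dcoset K H y) →
      F ∈ Submodule.span ℂ (genSet ρ Δ) := by
  classical
  induction s using Finset.induction_on with
  | empty =>
    intro F hF hinv hker hsupp
    have hF0 : F = 0 := by
      funext y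
      by_contra hy
      have := hsupp (subset_tsupport F (Function.mem_support.2 hy))
      simpa using this
    rw [hF0]
    exact Submodule.zero_mem _
  | @insert y s hys ih =>
    intro F hF hinv hker hsupp
    have hDclopen : IsClopen (dcoset K H y) := ⟨dcoset_closed H hKo y, dcoset_open H hKo y⟩
    set F₁ : G → V := (dcoset K H y).indicator F with hF₁
    have hF₁mem : F₁ ∈ SmCc G V := indicator_mem_SmCc hF hDclopen
    set F₂ : G → V := F - F₁ with hF₂
    have hF₂mem : F₂ ∈ SmCc G V := Submodule.sub_mem _ hF hF₁mem
    have hF₁inv : ∀ k ∈ K, ∀ g : G, F₁ (k * g) = F₁ g := by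
      intro k hk g
      by_cases hg : g ∈ dcoset K H y
      · rw [hF₁, Set.indicator_of_mem ((dcoset_mul_left_mem hk).2 hg),
          Set.indicator_of_mem hg]
        exact hinv k hk g
      · rw [hF₁, Set.indicator_of_notMem (fun hm => hg ((dcoset_mul_left_mem hk).1 hm)),
          Set.indicator_of_notMem hg]
    have hF₂inv : ∀ k ∈ K, ∀ g : G, F₂ (k * g) = F₂ g := by
      intro k hk g
      show F (k * g) - F₁ (k * g) = F g - F₁ g
      rw [hinv k hk g, hF₁inv k hk g]
    have hF₁supp : Function.support F₁ ⊆ dcoset K H y :=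
      Set.support_indicator_subset
    have hker1 : indAvg ν ρ F₁ = 0 := by
      funext g
      show smInt ν (fun h : H => ρ h (F₁ (g * ↑h))) = 0
      by_cases hg : g ∈ dcoset K H y
      · have he : (fun h : H => ρ h (F₁ (g * ↑h))) = fun h : H => ρ h (F (g * ↑h)) := by
          funext h
          rw [hF₁, Set.indicator_of_mem ((dcoset_mul_right_mem h.2).2 hg)]
        rw [he]
        exact congrFun hker g
      · have he : (fun h : H => ρ h (F₁ (g * ↑h))) = fun _ : H => (0 : V) := by
          funext h
          rw [hF₁, Set.indicator_of_notMem
            (fun hm => hg ((dcoset_mul_right_mem h.2).1 hm)), map_zero]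
        rw [he]
        exact smInt_zero ν
    have hker2 : indAvg ν ρ F₂ = 0 := by
      funext g
      show smInt ν (fun h : H => ρ h ((F (g * ↑h)) - F₁ (g * ↑h))) = 0
      by_cases hg : g ∈ dcoset K H y
      · have he : (fun h : H => ρ h ((F (g * ↑h)) - F₁ (g * ↑h))) = fun _ : H => (0 : V) := by
          funext h
          rw [hF₁, Set.indicator_of_mem ((dcoset_mul_right_mem h.2).2 hg), sub_self, map_zero]
        rw [he]
        exact smInt_zero ν
      · have he : (fun h : H => ρ h ((F (g * ↑h)) - F₁ (g * ↑h)))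
            = fun h : H => ρ h (F (g * ↑h)) := by
          funext h
          rw [hF₁, Set.indicator_of_notMem
            (fun hm => hg ((dcoset_mul_right_mem h.2).1 hm)), sub_zero]
        rw [he]
        exact congrFun hker g
    have hF₂supp : tsupport F₂ ⊆ ⋃ y' ∈ s, dcoset K H y' := by
      have hclosed : IsClosed (⋃ y' ∈ s, dcoset K H y') :=
        Set.Finite.isClosed_biUnion s.finite_toSet (fun y' _ => dcoset_closed H hKo y')
      refine closure_minimal ?_ hclosed
      intro z hz
      rw [Function.mem_support] at hz
      by_cases hzD : z ∈ dcoset K H y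
      · exfalso
        apply hz
        show F z - F₁ z = 0
        rw [hF₁, Set.indicator_of_mem hzD, sub_self]
      · have hzF : F z ≠ 0 := by
          intro h0
          apply hz
          show F z - F₁ z = 0
          rw [h0, hF₁, Set.indicator_of_notMem hzD, sub_zero]
        have hmem := hsupp (subset_tsupport F (Function.mem_support.2 hzF))
        obtain ⟨y', hy', hzy'⟩ := Set.mem_iUnion₂.1 hmem
        rcases Finset.mem_insert.1 hy' with rfl | hy''
        · exact absurd hzy' hzD
        · exact Set.mem_biUnion hy'' hzy'
    have h1 : F₁ ∈ Submodule.span ℂ (genSet ρ Δ) := by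
      refine single_coset hHcl hρ ν hΔpos hΔ hKc hKo y hF₁mem hF₁inv hF₁supp ?_
      exact congrFun hker1 y
    have h2 : F₂ ∈ Submodule.span ℂ (genSet ρ Δ) := ih F₂ hF₂mem hF₂inv hker2 hF₂supp
    have he : F = F₁ + F₂ := by
      funext z
      show F z = F₁ z + (F z - F₁ z)
      abel
    rw [he]
    exact Submodule.add_mem _ h1 h2

end Core5


/-- The kernel of the averaging map `i(F)(g) = ∫_H π(h)(F(gh)) dh` on
`C_c^∞(G, V)` is the linear span of the functions
`x ↦ Δ_H(h)⁻¹ π(h)(F(xh)) − F(x)`, where `Δ_H` is the modular function of `H`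
(characterized by `ν((·h₀)⁻¹ s) = Δ_H(h₀) ν(s)`). -/
theorem indAvg_kernel_eq_span
    (G : Type*) [Group G] [TopologicalSpace G] [IsTopologicalGroup G] [T2Space G]
    [LocallyCompactSpace G] [TotallyDisconnectedSpace G] [SigmaCompactSpace G]
    (hG : HasCompactOpenBasis G)
    (H : Subgroup G) (hHcl : IsClosed (H : Set G))
    [MeasurableSpace H] [BorelSpace H] (ν : Measure H) [ν.IsHaarMeasure]
    (Δ : H → ℝ) (hΔpos : ∀ h : H, 0 < Δ h)
    (hΔ : ∀ (h₀ : H) (s : Set H),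
      ν ((fun h : H => h * h₀) ⁻¹' s) = ENNReal.ofReal (Δ h₀) * ν s)
    (V : Type*) [AddCommGroup V] [Module ℂ V]
    (ρ : Representation ℂ H V) (hρ : SmoothRep ρ)
    (F : G → V) (hF : F ∈ SmCc G V) :
    indAvg ν ρ F = 0 ↔
      F ∈ Submodule.span ℂ
        {f : G → V | ∃ (h : H) (F' : G → V), F' ∈ SmCc G V ∧
          f = (fun x => (((Δ h)⁻¹ : ℝ) : ℂ) • ρ h (F' (x * h))) - F'} := by
  have hsets : {f : G → V | ∃ (h : H) (F' : G → V), F' ∈ SmCc G V ∧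
      f = (fun x => (((Δ h)⁻¹ : ℝ) : ℂ) • ρ h (F' (x * h))) - F'} = genSet ρ Δ := rfl
  rw [hsets]
  constructor
  · intro hker
    obtain ⟨K, hKc, hKo, hinv⟩ := exists_invariance hG hF
    have hcover : tsupport F ⊆ ⋃ y : G, dcoset K H y :=
      fun y _ => Set.mem_iUnion.2 ⟨y, mem_dcoset_self K H y⟩
    obtain ⟨s, hs⟩ := IsCompact.elim_finite_subcover (hF.2 : IsCompact (tsupport F))
      (fun y : G => dcoset K H y) (fun y => dcoset_open H hKo y) hcover
    exact outer_induction hHcl hρ ν hΔpos hΔ hKc hKo s F hF hinv hker hs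
  · intro hsp
    exact span_to_kernel hHcl hρ ν hΔpos hΔ hsp
end
end

section
/- Let G be an l-group and H a closed subgroup of G. Equip C_c^∞(H) with the left regular H-action (h₀·ψ)(h) = ψ(h₀^{-1}h) and C_c^∞(G) with the left regular G-action (g₀·f)(g) = f(g₀^{-1}g). Then the map Φ: C_c^∞(G) → ind_H^G C_c^∞(H), defined by Φ(f)(g)(h) = f(gh) for g ∈ G, h ∈ H, is a well-defined G-equivariant linear isomorphism. -/
open MeasureTheory
open scoped Pointwise

noncomputable section

/-- Membership in `ind_H^G C_c^∞(H)`, where `H` acts on `C_c^∞(H)` by the left regular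
representation `(h₀·ψ)(h) = ψ(h₀⁻¹h)` (so `π(h)⁻¹ψ = ψ(h·)`), written out for functions
`φ : G → (H → ℂ)`. -/
def IsIndCcH {G : Type*} [Group G] [TopologicalSpace G] (H : Subgroup G)
    (φ : G → (H → ℂ)) : Prop :=
  (∀ g : G, φ g ∈ SmCc H ℂ) ∧
  (∃ K : Subgroup G, IsCompact (K : Set G) ∧ IsOpen (K : Set G) ∧
    ∀ k ∈ K, ∀ g : G, φ (k * g) = φ g) ∧
  (∃ C : Set G, IsCompact C ∧ ∀ g : G, φ g ≠ 0 → g ∈ C * (H : Set G)) ∧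
  (∀ (g : G) (h : H), φ (g * h) = fun x => φ g (h * x))


/-- A finite infimum of open subgroups is open. -/
theorem finsetInf_isOpen {G ι : Type*} [Group G] [TopologicalSpace G]
    (s : Finset ι) (Kf : ι → Subgroup G) (h : ∀ i ∈ s, IsOpen ((Kf i : Subgroup G) : Set G)) :
    IsOpen ((s.inf Kf : Subgroup G) : Set G) := by
  classical
  induction s using Finset.induction_on with
  | empty => simpa using isOpen_univ
  | insert a s' hx ih =>
    rw [Finset.inf_insert, Subgroup.coe_inf]
    exact (h a (Finset.mem_insert_self a s')).inter
      (ih fun i hi => h i (Finset.mem_insert_of_mem hi))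

/-- A locally constant compactly supported function on an `l`-group is invariant under left
translation by some compact open subgroup. -/
theorem smcc_exists_inv {G : Type*} [Group G] [TopologicalSpace G] [IsTopologicalGroup G]
    [T2Space G] (hG : HasCompactOpenBasis G) {f : G → ℂ} (hf : f ∈ SmCc G ℂ) :
    ∃ K : Subgroup G, IsCompact (K : Set G) ∧ IsOpen (K : Set G) ∧
      ∀ k ∈ K, ∀ x : G, f (k * x) = f x := by
  classical
  have hpt : ∀ x : G, ∃ K : Subgroup G, IsCompact (K : Set G) ∧ IsOpen (K : Set G) ∧
      ∀ k ∈ K, f (k * x) = f x := by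
    intro x
    have hopen : IsOpen {g : G | f g = f x} := hf.1.isOpen_fiber (f x)
    have hW : IsOpen ((fun k : G => k * x) ⁻¹' {g | f g = f x}) :=
      hopen.preimage (continuous_mul_right x)
    have h1 : (1 : G) ∈ (fun k : G => k * x) ⁻¹' {g | f g = f x} := by simp
    obtain ⟨K, hKc, hKo, hKsub⟩ := hG _ (hW.mem_nhds h1)
    exact ⟨K, hKc, hKo, fun k hk => hKsub hk⟩
  choose Kf hKfc hKfo hKf using hpt
  obtain ⟨t, -, hcover⟩ := hf.2.elim_nhds_subcover
    (fun x => (fun g : G => g * x⁻¹) ⁻¹' (Kf x : Set G))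
    (fun x _ => ((hKfo x).preimage (continuous_mul_right x⁻¹)).mem_nhds (by
      simpa using (Kf x).one_mem))
  obtain ⟨K₀, hK₀c, hK₀o, -⟩ := hG Set.univ Filter.univ_mem
  set K : Subgroup G := K₀ ⊓ t.inf Kf with hKdef
  have hKle : ∀ i ∈ t, K ≤ Kf i := fun i hi =>
    inf_le_right.trans (Finset.inf_le hi)
  have hKo' : IsOpen (K : Set G) := by
    rw [hKdef, Subgroup.coe_inf]
    exact hK₀o.inter (finsetInf_isOpen t Kf fun i _ => hKfo i)
  have hKcl : IsClosed (K : Set G) := Subgroup.isClosed_of_isOpen K hKo'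
  have hKc' : IsCompact (K : Set G) :=
    hK₀c.of_isClosed_subset hKcl (SetLike.coe_subset_coe.mpr inf_le_left)
  refine ⟨K, hKc', hKo', ?_⟩
  intro k hk x
  have hmemCov : ∀ y : G, y ∈ tsupport f → ∃ i ∈ t, y * i⁻¹ ∈ Kf i := by
    intro y hy
    have := hcover hy
    simpa using this
  by_cases hx : ∃ i ∈ t, x * i⁻¹ ∈ Kf i
  · obtain ⟨i, hi, hxi⟩ := hx
    have h1 : f x = f i := by
      have := hKf i (x * i⁻¹) hxi
      simpa [inv_mul_cancel_right] using this
    have h2 : f (k * x) = f i := by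
      have hki : (k * x) * i⁻¹ ∈ Kf i := by
        have : k * (x * i⁻¹) ∈ Kf i := (Kf i).mul_mem (hKle i hi hk) hxi
        simpa [mul_assoc] using this
      have := hKf i ((k * x) * i⁻¹) hki
      simpa [inv_mul_cancel_right] using this
    rw [h2, h1]
  · have hx' : x ∉ tsupport f := fun h => hx (hmemCov x h)
    have hkx : k * x ∉ tsupport f := by
      intro h
      obtain ⟨i, hi, hxi⟩ := hmemCov _ h
      refine hx ⟨i, hi, ?_⟩
      have : k⁻¹ * (k * x * i⁻¹) ∈ Kf i :=
        (Kf i).mul_mem (hKle i hi (K.inv_mem hk)) hxi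
      simpa [mul_assoc] using this
    rw [image_eq_zero_of_notMem_tsupport hx', image_eq_zero_of_notMem_tsupport hkx]

/-- For a closed subgroup `H` of an `l`-group `G`, the map
`Φ(f)(g)(h) = f(gh)` is a well-defined `G`-equivariant linear isomorphism from `C_c^∞(G)`
(with the left regular `G`-action) onto `ind_H^G C_c^∞(H)` (where `H` carries the left
regular `H`-action on `C_c^∞(H)`). -/
theorem ccG_iso_ind_ccH
    (G : Type*) [Group G] [TopologicalSpace G] [IsTopologicalGroup G] [T2Space G]
    [LocallyCompactSpace G] [TotallyDisconnectedSpace G] [SigmaCompactSpace G]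
    (hG : HasCompactOpenBasis G)
    (H : Subgroup G) (hHcl : IsClosed (H : Set G))
    (Φ : (G → ℂ) → (G → (H → ℂ)))
    (hΦ : ∀ (f : G → ℂ) (g : G) (h : H), Φ f g h = f (g * h)) :
    -- `Φ` is well defined from `C_c^∞(G)` into `ind_H^G C_c^∞(H)`
    (∀ f ∈ SmCc G ℂ, IsIndCcH H (Φ f)) ∧
    -- `Φ` is linear
    (∀ f f' : G → ℂ, Φ (f + f') = Φ f + Φ f') ∧
    (∀ (c : ℂ) (f : G → ℂ), Φ (c • f) = c • Φ f) ∧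
    -- `Φ` is `G`-equivariant for the left regular actions
    (∀ (g₀ : G) (f : G → ℂ), Φ (fun x => f (g₀⁻¹ * x)) = fun g => Φ f (g₀⁻¹ * g)) ∧
    -- `Φ` is injective on `C_c^∞(G)` and surjective onto `ind_H^G C_c^∞(H)`
    (∀ f ∈ SmCc G ℂ, Φ f = 0 → f = 0) ∧
    (∀ φ : G → (H → ℂ), IsIndCcH H φ → ∃ f ∈ SmCc G ℂ, Φ f = φ) := by
  classical
  refine ⟨?_, ?_, ?_, ?_, ?_, ?_⟩
  · -- well-definedness
    intro f hf
    refine ⟨?_, ?_, ?_, ?_⟩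
    · intro g
      have hfun : Φ f g = f ∘ (fun h : H => g * (h : G)) := funext fun h => hΦ f g h
      constructor
      · rw [hfun]
        exact hf.1.comp_continuous (continuous_const.mul continuous_subtype_val)
      · -- compact support
        have hT : IsCompact ((fun x : G => g⁻¹ * x) '' tsupport f) :=
          hf.2.image (continuous_mul_left g⁻¹)
        have hpre : IsCompact (Subtype.val ⁻¹' ((fun x : G => g⁻¹ * x) '' tsupport f) :
            Set H) :=
          hHcl.isClosedEmbedding_subtypeVal.isCompact_preimage hT
        refine HasCompactSupport.intro hpre ?_
        intro h hh
        rw [hΦ]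
        by_contra hne
        refine hh ?_
        exact ⟨g * h, subset_tsupport f hne, by simp [mul_assoc]⟩
    · -- smoothness: invariance under a compact open subgroup
      obtain ⟨K, hKc, hKo, hKinv⟩ := smcc_exists_inv hG hf
      refine ⟨K, hKc, hKo, ?_⟩
      intro k hk g
      funext h
      rw [hΦ, hΦ, mul_assoc]
      exact hKinv k hk (g * h)
    · -- support compact modulo H
      refine ⟨tsupport f, hf.2, ?_⟩
      intro g hg
      obtain ⟨h, hh⟩ : ∃ h : H, Φ f g h ≠ 0 := by
        by_contra hc
        push_neg at hc
        exact hg (funext hc)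
      rw [hΦ] at hh
      exact Set.mem_mul.mpr ⟨g * h, subset_tsupport f hh, (h : G)⁻¹, H.inv_mem h.2,
        by simp⟩
    · -- H-equivariance
      intro g h
      funext x
      rw [hΦ, hΦ]
      simp [mul_assoc]
  · -- additivity
    intro f f'
    funext g h
    simp [hΦ]
  · -- scalar multiplication
    intro c f
    funext g h
    simp [hΦ]
  · -- G-equivariance
    intro g₀ f
    funext g h
    rw [hΦ, hΦ, mul_assoc]
  · -- injectivity
    intro f hf h0
    funext x
    have hx : Φ f x 1 = f x := by rw [hΦ]; simp
    rw [h0] at hx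
    simpa using hx.symm
  · -- surjectivity
    rintro φ ⟨hφ1, ⟨K, hKc, hKo, hKinv⟩, ⟨C, hCc, hCsupp⟩, hφ4⟩
    refine ⟨fun g => φ g 1, ⟨?_, ?_⟩, ?_⟩
    · -- locally constant
      rw [IsLocallyConstant.iff_exists_open]
      intro x
      refine ⟨(fun g : G => g * x⁻¹) ⁻¹' (K : Set G),
        hKo.preimage (continuous_mul_right x⁻¹), by simpa using K.one_mem, ?_⟩
      intro y hy
      have := hKinv (y * x⁻¹) hy x
      rw [inv_mul_cancel_right] at this
      rw [this]
    · -- compact support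
      obtain ⟨t, -, hcover⟩ := hCc.elim_nhds_subcover
        (fun c => (fun g : G => g * c⁻¹) ⁻¹' (K : Set G))
        (fun c _ => ((hKo.preimage (continuous_mul_right c⁻¹)).mem_nhds (by simpa using K.one_mem)))
      have hDc : IsCompact (⋃ c ∈ t, ((K : Set G) * {c}) *
          (Subtype.val '' tsupport (φ c))) :=
        t.isCompact_biUnion fun c _ =>
          (hKc.mul isCompact_singleton).mul ((hφ1 c).2.image continuous_subtype_val)
      refine HasCompactSupport.intro hDc ?_
      intro g hg
      by_contra hne
      refine hg ?_
      have hφg : φ g ≠ 0 := by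
        intro h0
        rw [h0] at hne
        exact hne rfl
      obtain ⟨c, hc, b, hb, hcb⟩ := Set.mem_mul.mp (hCsupp g hφg)
      have hcK : ∃ i ∈ t, c * i⁻¹ ∈ K := by
        have := hcover hc
        simpa using this
      obtain ⟨i, hi, hki⟩ := hcK
      have hgdec : g = (c * i⁻¹) * (i * b) := by
        rw [← hcb]; group
      have hφgi : φ g = φ (i * b) := by
        rw [hgdec]
        exact hKinv (c * i⁻¹) hki (i * b)
      have hφib : φ (i * b) 1 = φ i ⟨b, hb⟩ := by
        have h4 := hφ4 i ⟨b, hb⟩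
        have : φ (i * b) = fun x => φ i (⟨b, hb⟩ * x) := h4
        rw [this]
        simp
      have hmem : (⟨b, hb⟩ : H) ∈ tsupport (φ i) := by
        refine subset_tsupport (φ i) ?_
        simp only [Function.mem_support]
        rw [← hφib, ← hφgi]
        exact hne
      refine Set.mem_iUnion₂.mpr ⟨i, hi, ?_⟩
      refine Set.mem_mul.mpr ⟨c, ?_, b, ⟨⟨b, hb⟩, hmem, rfl⟩, hcb⟩
      exact Set.mem_mul.mpr ⟨c * i⁻¹, hki, i, rfl, by group⟩
    · -- Φ f = φ
      funext g h
      rw [hΦ]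
      have h4 := hφ4 g h
      calc φ (g * h) 1 = φ g (h * 1) := by rw [h4]
        _ = φ g h := by rw [mul_one]
end
end

section
/- Let G be an l-group and let P and H be closed subgroups of G such that G is the union of finitely many (H,P)-double cosets. Let ∅ = U₀ ⊂ U₁ ⊂ ⋯ ⊂ U_n = G be open subsets of G such that for each i ≥ 1, U_i ∖ U_{i−1} is a single double coset H x_i P. Let (δ, V) be a smooth P-module and set I_i = {φ ∈ ind_P^G V : supp φ ⊆ U_i}. Then each I_i is stable under the left-translation action of H, and for each i the H-module I_i / I_{i−1} is isomorphic to ind_{H ∩ x_i P x_i^{-1}}^H (δ^{x_i}|_{H ∩ x_i P x_i^{-1}}), where δ^{x_i} is the smooth representation of x_i P x_i^{-1} on V defined by δ^{x_i}(x_i p x_i^{-1}) = δ(p) for p ∈ P; in the case x_i = e this isomorphism is induced by restriction of functions from G to H. -/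
open MeasureTheory
open scoped Pointwise

noncomputable section

/-- Membership in `ind_{H ∩ xPx⁻¹}^H (δ^x |_{H ∩ xPx⁻¹})`, written out for functions
`ψ : H → V`:  here `δ^x` is the representation of `xPx⁻¹` on `V` given by
`δ^x(xpx⁻¹) = δ(p)`. -/
def IsIndTwist {G : Type*} [Group G] [TopologicalSpace G] (H P : Subgroup G) {V : Type*}
    [AddCommGroup V] [Module ℂ V] (ρ : Representation ℂ P V) (xi : G) (ψ : H → V) : Prop :=
  (∃ K : Subgroup H, IsCompact (K : Set H) ∧ IsOpen (K : Set H) ∧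
    ∀ k ∈ K, ∀ h : H, ψ (k * h) = ψ h) ∧
  (∃ C : Set H, IsCompact C ∧ Function.support ψ ⊆
      C * (((P.map (MulAut.conj xi).toMonoidHom).subgroupOf H : Subgroup H) : Set H)) ∧
  (∀ (h q : H) (p : G) (hp : p ∈ P), (q : G) = xi * p * xi⁻¹ →
    ψ (h * q) = ρ (⟨p, hp⟩ : P)⁻¹ (ψ h))

set_option maxHeartbeats 1000000

section FiltrationAux
set_option linter.unusedSectionVars false
variable {G : Type*} [Group G] [TopologicalSpace G] [IsTopologicalGroup G]

lemma cos_in_nhd (hG : HasCompactOpenBasis G) {W : Set G} (hW : IsOpen W) (h1 : (1:G) ∈ W) :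
    ∃ K : Subgroup G, IsCompact (K : Set G) ∧ IsOpen (K : Set G) ∧ (K : Set G) ⊆ W :=
  hG W (hW.mem_nhds h1)

lemma cos_tube (hG : HasCompactOpenBasis G) {U : Set G} (hU : IsOpen U) {y : G} (hy : y ∈ U) :
    ∃ K : Subgroup G, IsCompact (K : Set G) ∧ IsOpen (K : Set G) ∧
      ∀ k ∈ (K : Set G), k * y ∈ U := by
  obtain ⟨K, hc, ho, hsub⟩ := cos_in_nhd hG (hU.preimage (continuous_mul_right y))
    (by simpa using hy)
  exact ⟨K, hc, ho, fun k hk => hsub hk⟩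

lemma countable_cover_left [SigmaCompactSpace G] {A : Set G} (hA : IsClosed A)
    {K : Set G} (hK : IsOpen K) (h1 : (1:G) ∈ K) :
    ∃ T : Set G, T.Countable ∧ T ⊆ A ∧ ∀ a ∈ A, ∃ t ∈ T, t⁻¹ * a ∈ K := by
  have hcov : ∀ n : ℕ, ∃ F : Finset ↥A,
      ∀ a ∈ A ∩ compactCovering G n, ∃ t ∈ F, (↑t)⁻¹ * a ∈ K := by
    intro n
    have hScpt : IsCompact (A ∩ compactCovering G n) :=
      (isCompact_compactCovering G n).inter_left hA
    rcases hScpt.elim_finite_subcover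
        (fun a : ↥A => ((fun g => (↑a)⁻¹ * g) ⁻¹' K))
        (fun a => hK.preimage (continuous_mul_left _))
        (fun a ha => Set.mem_iUnion.2 ⟨⟨a, ha.1⟩, by simpa using h1⟩) with ⟨F, hF⟩
    refine ⟨F, fun a ha => ?_⟩
    rcases Set.mem_iUnion₂.1 (hF ha) with ⟨t, htF, hta⟩
    exact ⟨t, htF, hta⟩
  choose F hF using hcov
  refine ⟨⋃ n, (fun t : ↥A => (t : G)) '' (F n : Set ↥A),
    Set.countable_iUnion (fun n => ((F n).finite_toSet.image _).countable), ?_, ?_⟩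
  · rintro t ⟨_, ⟨n, rfl⟩, ⟨u, _, rfl⟩⟩; exact u.2
  · intro a ha
    have : a ∈ ⋃ n, compactCovering G n := by
      rw [iUnion_compactCovering]; trivial
    rcases Set.mem_iUnion.1 this with ⟨n, hn⟩
    rcases hF n a ⟨ha, hn⟩ with ⟨t, htF, hta⟩
    exact ⟨↑t, Set.mem_iUnion.2 ⟨n, Set.mem_image_of_mem _ htF⟩, hta⟩

lemma countable_cover_right [SigmaCompactSpace G] {A : Set G} (hA : IsClosed A)
    {K : Set G} (hK : IsOpen K) (h1 : (1:G) ∈ K) :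
    ∃ T : Set G, T.Countable ∧ T ⊆ A ∧ ∀ a ∈ A, ∃ t ∈ T, a * t⁻¹ ∈ K := by
  have hcov : ∀ n : ℕ, ∃ F : Finset ↥A,
      ∀ a ∈ A ∩ compactCovering G n, ∃ t ∈ F, a * (↑t)⁻¹ ∈ K := by
    intro n
    have hScpt : IsCompact (A ∩ compactCovering G n) :=
      (isCompact_compactCovering G n).inter_left hA
    rcases hScpt.elim_finite_subcover
        (fun a : ↥A => ((fun g => g * (↑a)⁻¹) ⁻¹' K))
        (fun a => hK.preimage (continuous_mul_right _))
        (fun a ha => Set.mem_iUnion.2 ⟨⟨a, ha.1⟩, by simpa using h1⟩) with ⟨F, hF⟩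
    refine ⟨F, fun a ha => ?_⟩
    rcases Set.mem_iUnion₂.1 (hF ha) with ⟨t, htF, hta⟩
    exact ⟨t, htF, hta⟩
  choose F hF using hcov
  refine ⟨⋃ n, (fun t : ↥A => (t : G)) '' (F n : Set ↥A),
    Set.countable_iUnion (fun n => ((F n).finite_toSet.image _).countable), ?_, ?_⟩
  · rintro t ⟨_, ⟨n, rfl⟩, ⟨u, _, rfl⟩⟩; exact u.2
  · intro a ha
    have : a ∈ ⋃ n, compactCovering G n := by
      rw [iUnion_compactCovering]; trivial
    rcases Set.mem_iUnion.1 this with ⟨n, hn⟩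
    rcases hF n a ⟨ha, hn⟩ with ⟨t, htF, hta⟩
    exact ⟨↑t, Set.mem_iUnion.2 ⟨n, Set.mem_image_of_mem _ htF⟩, hta⟩

lemma rho_fix_inv {G : Type*} [Group G] [TopologicalSpace G] {P : Subgroup G}
    {V : Type*} [AddCommGroup V] [Module ℂ V] {ρ : Representation ℂ P V}
    {p : P} {v : V} (h : ρ p v = v) : ρ p⁻¹ v = v := by
  conv_lhs => rw [← h]
  rw [← Module.End.mul_apply, ← map_mul, inv_mul_cancel, map_one, Module.End.one_apply]

lemma baire_nbhd {G : Type*} [Group G] [TopologicalSpace G] [IsTopologicalGroup G] [T2Space G]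
    [LocallyCompactSpace G] [SigmaCompactSpace G]
    (hG : HasCompactOpenBasis G)
    (H P : Subgroup G) (hHcl : IsClosed (H : Set G)) (hPcl : IsClosed (P : Set G))
    (x : G) (Ui Uim : Set G) (hUi : IsOpen Ui) (hUim : IsOpen Uim)
    (hcell : Ui \ Uim = {y : G | ∃ h ∈ H, ∃ p ∈ P, y = h * x * p})
    (K₀ : Subgroup G) (hK₀c : IsCompact (K₀ : Set G)) (hK₀o : IsOpen (K₀ : Set G))
    (y : G) (hy : y ∈ Ui \ Uim) :
    ∃ N : Set G, IsOpen N ∧ y ∈ N ∧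
      ∀ z ∈ N ∩ (Ui \ Uim), ∃ a ∈ (K₀ : Set G) ∩ H, ∃ q ∈ (K₀ : Set G) ∩ P,
        z = a * y * q := by
  have hy' := hy
  rw [hcell] at hy'
  obtain ⟨h₀, hh₀, p₀, hp₀, hy0⟩ := hy'
  -- membership in the cell in terms of y
  have hcy : ∀ z, z ∈ Ui \ Uim ↔ ∃ h ∈ (H : Set G), ∃ p ∈ (P : Set G), z = h * y * p := by
    intro z
    rw [hcell]
    constructor
    · rintro ⟨h, hh, p, hp, rfl⟩
      refine ⟨h * h₀⁻¹, mul_mem hh (inv_mem hh₀), p₀⁻¹ * p, mul_mem (inv_mem hp₀) hp, ?_⟩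
      rw [hy0]; group
    · rintro ⟨h, hh, p, hp, rfl⟩
      refine ⟨h * h₀, mul_mem hh hh₀, p₀ * p, mul_mem hp₀ hp, ?_⟩
      rw [hy0]; group
  obtain ⟨T, hTc, hTA, hTcov⟩ := countable_cover_left (G := G) hHcl hK₀o K₀.one_mem
  obtain ⟨T', hT'c, hT'A, hT'cov⟩ := countable_cover_right (G := G) hPcl hK₀o K₀.one_mem
  obtain ⟨K1, hK1c, hK1o, hK1tube⟩ := cos_tube hG hUi hy.1
  set Ky : Set G := (fun k => k * y) '' (K1 : Set G) with hKy
  have hKyo : IsOpen Ky := isOpenMap_mul_right y _ hK1o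
  set Z : Set G := Ky ∩ Uimᶜ with hZ
  have hZc : IsCompact Z :=
    (hK1c.image (continuous_mul_right y)).inter_right (isClosed_compl_iff.2 hUim)
  have hZsub : Z ⊆ Ui \ Uim := by
    rintro z ⟨⟨k, hk, rfl⟩, hz2⟩
    exact ⟨hK1tube k hk, hz2⟩
  have hyZ : y ∈ Z := ⟨⟨1, one_mem K1, one_mul y⟩, hy.2⟩
  -- the pieces
  set S : ↥T × ↥T' → Set G := fun i =>
    (fun aq : G × G => (i.1 : G) * aq.1 * y * aq.2 * (i.2 : G)) ''
      ((((K₀ : Set G) ∩ H)) ×ˢ (((K₀ : Set G) ∩ P))) with hS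
  have hScpt : ∀ i, IsCompact (S i) := by
    intro i
    refine ((hK₀c.inter_right hHcl).prod (hK₀c.inter_right hPcl)).image ?_
    exact ((((continuous_const.mul continuous_fst).mul continuous_const).mul
      continuous_snd).mul continuous_const)
  have hcover : ∀ z ∈ Ui \ Uim, ∃ i : ↥T × ↥T', z ∈ S i := by
    intro z hz
    rcases (hcy z).1 hz with ⟨h, hh, p, hp, rfl⟩
    rcases hTcov h hh with ⟨t, htT, htk⟩
    rcases hT'cov p hp with ⟨t', ht'T, ht'k⟩
    refine ⟨(⟨t, htT⟩, ⟨t', ht'T⟩), ⟨(t⁻¹ * h, p * t'⁻¹),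
      ⟨⟨htk, mul_mem (inv_mem (hTA htT)) hh⟩, ⟨ht'k, mul_mem hp (inv_mem (hT'A ht'T))⟩⟩, ?_⟩⟩
    show t * (t⁻¹ * h) * y * (p * t'⁻¹) * t' = h * y * p
    group
  -- Baire category on Z
  haveI : CompactSpace ↥Z := isCompact_iff_compactSpace.mp hZc
  haveI : Nonempty ↥Z := ⟨⟨y, hyZ⟩⟩
  haveI := hTc.to_subtype
  haveI := hT'c.to_subtype
  have hfcl : ∀ i : ↥T × ↥T', IsClosed (Subtype.val ⁻¹' S i : Set ↥Z) :=
    fun i => ((hScpt i).isClosed).preimage continuous_subtype_val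
  have hfun : (⋃ i : ↥T × ↥T', (Subtype.val ⁻¹' S i : Set ↥Z)) = Set.univ := by
    rw [Set.eq_univ_iff_forall]
    intro z
    rcases hcover z.1 (hZsub z.2) with ⟨i, hi⟩
    exact Set.mem_iUnion.2 ⟨i, hi⟩
  obtain ⟨i, zv, hzv⟩ := nonempty_interior_of_iUnion_of_closed hfcl hfun
  rcases mem_interior.1 hzv with ⟨O, hOsub, hOopen, hzvO⟩
  rcases isOpen_induced_iff.1 hOopen with ⟨N₀, hN₀o, hN₀⟩
  have hz₀N₀ : (zv : G) ∈ N₀ := by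
    have : zv ∈ Subtype.val ⁻¹' N₀ := by rw [hN₀]; exact hzvO
    exact this
  have hN₀Z : ∀ w ∈ N₀ ∩ Z, w ∈ S i := by
    rintro w ⟨hw1, hw2⟩
    have : (⟨w, hw2⟩ : ↥Z) ∈ O := by rw [← hN₀]; exact hw1
    exact hOsub this
  set N₁ : Set G := N₀ ∩ Ky with hN₁
  have hN₁o : IsOpen N₁ := hN₀o.inter hKyo
  have hN₁cell : ∀ w ∈ N₁ ∩ (Ui \ Uim), w ∈ S i := by
    rintro w ⟨⟨hw0, hwK⟩, hwcell⟩
    exact hN₀Z w ⟨hw0, hwK, hwcell.2⟩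
  have hz₀Z : (zv : G) ∈ Z := zv.2
  have hz₀N₁ : (zv : G) ∈ N₁ := ⟨hz₀N₀, hz₀Z.1⟩
  have hz₀S : (zv : G) ∈ S i := hN₁cell _ ⟨hz₀N₁, hZsub hz₀Z⟩
  rcases hz₀S with ⟨⟨a₀, q₀⟩, ⟨⟨ha₀K, ha₀H⟩, hq₀K, hq₀P⟩, hz₀eq⟩
  set c : G := (i.1 : G) * a₀ with hc
  set d : G := q₀ * (i.2 : G) with hd
  set N : Set G := (fun w => c⁻¹ * w * d⁻¹) '' N₁ with hNdef
  have hNo : IsOpen N := by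
    have : IsOpenMap fun w => c⁻¹ * w * d⁻¹ :=
      (isOpenMap_mul_right d⁻¹).comp (isOpenMap_mul_left c⁻¹)
    exact this _ hN₁o
  refine ⟨N, hNo, ⟨(zv : G), hz₀N₁, ?_⟩, ?_⟩
  · show c⁻¹ * (zv : G) * d⁻¹ = y
    rw [← hz₀eq]; simp [hc, hd]; group
  · rintro z ⟨⟨w, hwN₁, hzw⟩, hzcell⟩
    have hwz : w = c * z * d := by rw [← hzw]; group
    have hwcell : w ∈ Ui \ Uim := by
      rcases (hcy z).1 hzcell with ⟨h, hh, p, hp, hzhp⟩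
      refine (hcy w).2 ⟨(i.1 : G) * a₀ * h, mul_mem (mul_mem (hTA i.1.2) ha₀H) hh,
        p * (q₀ * (i.2 : G)), mul_mem hp (mul_mem hq₀P (hT'A i.2.2)), ?_⟩
      rw [hwz, hzhp, hc, hd]; group
    rcases hN₁cell w ⟨hwN₁, hwcell⟩ with ⟨⟨a₁, q₁⟩, ⟨⟨ha₁K, ha₁H⟩, hq₁K, hq₁P⟩, hweq⟩
    refine ⟨a₀⁻¹ * a₁, ⟨mul_mem (inv_mem ha₀K) ha₁K, mul_mem (inv_mem ha₀H) ha₁H⟩,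
      q₁ * q₀⁻¹, ⟨mul_mem hq₁K (inv_mem hq₀K), mul_mem hq₁P (inv_mem hq₀P)⟩, ?_⟩
    have : c * z * d = (i.1 : G) * a₁ * y * q₁ * (i.2 : G) := by rw [← hwz, ← hweq]
    have hz' : z = c⁻¹ * ((i.1 : G) * a₁ * y * q₁ * (i.2 : G)) * d⁻¹ := by
      rw [← this]; group
    rw [hz', hc, hd]; group

lemma rho_ne_zero {G : Type*} [Group G] [TopologicalSpace G] {P : Subgroup G}
    {V : Type*} [AddCommGroup V] [Module ℂ V] (ρ : Representation ℂ P V)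
    (p : P) {v : V} (hv : v ≠ 0) : ρ p v ≠ 0 := by
  intro h0
  apply hv
  have : ρ p⁻¹ (ρ p v) = ρ p⁻¹ 0 := by rw [h0]
  rwa [← Module.End.mul_apply, ← map_mul, inv_mul_cancel, map_one, Module.End.one_apply,
    map_zero] at this

lemma key2a {G : Type*} [Group G] [TopologicalSpace G] [IsTopologicalGroup G] [T2Space G]
    [LocallyCompactSpace G] [SigmaCompactSpace G]
    (hG : HasCompactOpenBasis G)
    (H P : Subgroup G) (hHcl : IsClosed (H : Set G)) (hPcl : IsClosed (P : Set G))
    (x : G) (Ui Uim : Set G) (hUi : IsOpen Ui) (hUim : IsOpen Uim)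
    (hcell : Ui \ Uim = {y : G | ∃ h ∈ H, ∃ p ∈ P, y = h * x * p})
    {V : Type*} [AddCommGroup V] [Module ℂ V] (ρ : Representation ℂ P V)
    (φ : G → V) (hφ : IsInd P ρ φ) (hsupp : Function.support φ ⊆ Ui) :
    ∃ D : Set G, IsCompact D ∧ D ⊆ (H : Set G) ∧
      ∀ h ∈ (H : Set G), φ (h * x) ≠ 0 →
        ∃ d ∈ D, ∃ p ∈ (P : Set G), x * p * x⁻¹ ∈ (H : Set G) ∧ h = d * (x * p * x⁻¹) := by
  classical
  obtain ⟨⟨K, hKc, hKo, hKinv⟩, ⟨C, hCc, hCsupp⟩, heq⟩ := hφ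
  -- support is K-left-invariant
  have hsuppK : ∀ k ∈ K, ∀ g, φ g ≠ 0 → φ (k * g) ≠ 0 := by
    intro k hk g hg
    rwa [hKinv k hk g]
  -- a point of the cell is automatically in Ui \ Uim
  have hmemcell : ∀ h ∈ (H : Set G), ∀ p ∈ (P : Set G), h * x * p ∈ Ui \ Uim := by
    intro h hh p hp
    rw [hcell]
    exact ⟨h, hh, p, hp, rfl⟩
  -- main auxiliary claim, for each c in C
  have P1 : ∀ c : G, ∃ D' : Set G, IsCompact D' ∧ D' ⊆ (H : Set G) ∧
      ∀ h ∈ (H : Set G), φ (h * x) ≠ 0 →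
        (∃ k ∈ (K : Set G), ∃ p ∈ (P : Set G), h * x = k * c * p) →
        ∃ d ∈ D', ∃ p ∈ (P : Set G), x * p * x⁻¹ ∈ (H : Set G) ∧ h = d * (x * p * x⁻¹) := by
    intro c
    by_cases hw : ∃ g, (∃ k ∈ (K : Set G), ∃ p ∈ (P : Set G), g = k * c * p) ∧
        φ g ≠ 0 ∧ g ∉ Uim
    · obtain ⟨gc, ⟨k₀, hk₀, p₀, hp₀, hgc⟩, hgcne, hgcUim⟩ := hw
      -- K * gc ⊆ support φ ⊆ Ui
      have hKgc : ∀ k ∈ (K : Set G), k * gc ∈ Ui := by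
        intro k hk
        exact hsupp (hsuppK k hk gc hgcne)
      set Z : Set G := ((fun k => k * gc) '' (K : Set G)) ∩ Uimᶜ with hZdef
      have hZc : IsCompact Z :=
        (hKc.image (continuous_mul_right gc)).inter_right (isClosed_compl_iff.2 hUim)
      have hZcell : Z ⊆ Ui \ Uim := by
        rintro z ⟨⟨k, hk, rfl⟩, hz2⟩
        exact ⟨hKgc k hk, hz2⟩
      -- choose Baire neighbourhoods at each point of Z
      have hbn : ∀ w : ↥Z, ∃ N : Set G, IsOpen N ∧ (w : G) ∈ N ∧
          (∀ z ∈ N ∩ (Ui \ Uim), ∃ a ∈ (K : Set G) ∩ H, ∃ q ∈ (K : Set G) ∩ P,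
            z = a * (w : G) * q) ∧
          ∃ hw ∈ (H : Set G), ∃ pw ∈ (P : Set G), (w : G) = hw * x * pw := by
        intro w
        obtain ⟨N, hNo, hNmem, hNctl⟩ := baire_nbhd hG H P hHcl hPcl x Ui Uim hUi hUim hcell
          K hKc hKo (w : G) (hZcell w.2)
        have := hZcell w.2
        rw [hcell] at this
        obtain ⟨hw, hhw, pw, hpw, hweq⟩ := this
        exact ⟨N, hNo, hNmem, hNctl, hw, hhw, pw, hpw, hweq⟩
      choose N hNo hNmem hNctl hwh hwhH hwp hwpP hweq using hbn
      obtain ⟨sc, hsc⟩ := hZc.elim_finite_subcover N hNo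
        (fun z hz => Set.mem_iUnion.2 ⟨⟨z, hz⟩, hNmem _⟩)
      refine ⟨⋃ w ∈ sc, (fun a => a * hwh w) '' ((K : Set G) ∩ H), ?_, ?_, ?_⟩
      · refine sc.finite_toSet.isCompact_biUnion (fun w _ => ?_)
        exact (hKc.inter_right hHcl).image (continuous_mul_right _)
      · rintro d ⟨_, ⟨w, rfl⟩, _, ⟨hws, rfl⟩, ⟨a, ⟨haK, haH⟩, rfl⟩⟩
        exact mul_mem haH (hwhH w)
      · rintro h hh hne ⟨k, hk, p, hp, hhx⟩
        -- pass to the element w₁ = h x p⁻¹p₀-ish inside Z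
        have hceq : c = k₀⁻¹ * gc * p₀⁻¹ := by rw [hgc]; group
        have hhx2 : h * x = (k * k₀⁻¹) * gc * (p₀⁻¹ * p) := by
          rw [hhx, hceq]; group
        set w₁ : G := (k * k₀⁻¹) * gc with hw₁def
        have hw₁K : w₁ ∈ (fun k => k * gc) '' (K : Set G) :=
          ⟨k * k₀⁻¹, mul_mem hk (inv_mem hk₀), rfl⟩
        have hw₁cell : w₁ ∈ Ui \ Uim := by
          have : w₁ = h * x * (p₀⁻¹ * p)⁻¹ := by rw [hhx2]; group
          rw [this]
          exact hmemcell h hh _ (inv_mem (mul_mem (inv_mem hp₀) hp))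
        have hw₁Z : w₁ ∈ Z := ⟨hw₁K, hw₁cell.2⟩
        rcases Set.mem_iUnion₂.1 (hsc hw₁Z) with ⟨w, hws, hwN⟩
        rcases hNctl w w₁ ⟨hwN, hw₁cell⟩ with ⟨a, ⟨haK, haH⟩, q, ⟨hqK, hqP⟩, hw₁eq⟩
        -- now h * x = a * hwh w * x * (hwp w * q * (p₀⁻¹ * p)⁻¹⁻¹ ...)
        have hx3 : h * x = a * hwh w * x * (hwp w * (q * (p₀⁻¹ * p))) := by
          have h1 : h * x = w₁ * (p₀⁻¹ * p) := by simp only [hhx2, hw₁def, mul_assoc]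
          rw [h1, hw₁eq, hweq w]; group
        set pp : G := hwp w * (q * (p₀⁻¹ * p)) with hppdef
        have hppP : pp ∈ (P : Set G) :=
          mul_mem (hwpP w) (mul_mem hqP (mul_mem (inv_mem hp₀) hp))
        have hhd : h = (a * hwh w) * (x * pp * x⁻¹) := by
          have : h = h * x * x⁻¹ := by group
          rw [this, hx3]; group
        have hmH : x * pp * x⁻¹ ∈ (H : Set G) := by
          have : x * pp * x⁻¹ = (a * hwh w)⁻¹ * h := by rw [hhd]; group
          rw [this]
          exact mul_mem (inv_mem (mul_mem haH (hwhH w))) hh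
        exact ⟨a * hwh w,
          Set.mem_biUnion hws ⟨a, ⟨haK, haH⟩, rfl⟩, pp, hppP, hmH, hhd⟩
    · refine ⟨∅, isCompact_empty, by simp, ?_⟩
      rintro h hh hne ⟨k, hk, p, hp, hhx⟩
      exfalso
      refine hw ⟨h * x, ⟨k, hk, p, hp, hhx⟩, hne, ?_⟩
      have := hmemcell h hh 1 (one_mem P)
      rw [mul_one] at this
      exact this.2
  choose Dof hDc hDH hDmain using P1
  obtain ⟨s, hs⟩ := hCc.elim_finite_subcover
      (fun c : ↥C => ((fun g => g * (↑c)⁻¹) ⁻¹' (K : Set G)))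
      (fun c => hKo.preimage (continuous_mul_right _))
      (fun c hc => Set.mem_iUnion.2 ⟨⟨c, hc⟩, by simpa using K.one_mem⟩)
  refine ⟨⋃ c ∈ s, Dof ↑c, s.finite_toSet.isCompact_biUnion (fun c _ => hDc ↑c),
    ?_, ?_⟩
  · rintro d hd
    rcases Set.mem_iUnion₂.1 hd with ⟨c, hcs, hdc⟩
    exact hDH ↑c hdc
  · intro h hh hne
    have hxs : h * x ∈ C * (P : Set G) := hCsupp hne
    rcases Set.mem_mul.1 hxs with ⟨c₁, hc₁, p, hp, hcp⟩
    rcases Set.mem_iUnion₂.1 (hs hc₁) with ⟨c, hcs, hck⟩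
    have hdec : ∃ k ∈ (K : Set G), ∃ p' ∈ (P : Set G), h * x = k * ↑c * p' := by
      refine ⟨c₁ * (↑c)⁻¹, hck, p, hp, ?_⟩
      rw [← hcp]; group
    rcases hDmain ↑c h hh hne hdec with ⟨d, hd, p', hp', hmH, hhd⟩
    exact ⟨d, Set.mem_biUnion hcs hd, p', hp', hmH, hhd⟩

lemma surj {G : Type*} [Group G] [TopologicalSpace G] [IsTopologicalGroup G] [T2Space G]
    [LocallyCompactSpace G] [SigmaCompactSpace G]
    (hG : HasCompactOpenBasis G)
    (H P : Subgroup G) (hHcl : IsClosed (H : Set G)) (hPcl : IsClosed (P : Set G))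
    (x : G) (Ui Uim : Set G) (hUi : IsOpen Ui) (hUim : IsOpen Uim)
    (hcell : Ui \ Uim = {y : G | ∃ h ∈ H, ∃ p ∈ P, y = h * x * p})
    (hUiP : ∀ g ∈ Ui, ∀ p ∈ (P : Set G), g * p ∈ Ui)
    {V : Type*} [AddCommGroup V] [Module ℂ V] (ρ : Representation ℂ P V) (hρ : SmoothRep ρ)
    (ψ : ↥H → V) (hψ : IsIndTwist H P ρ x ψ) :
    ∃ φ : G → V, IsInd P ρ φ ∧ Function.support φ ⊆ Ui ∧
      (fun h : ↥H => φ ((h : G) * x)) = ψ := by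
  classical
  by_cases hψ0 : ψ = 0
  · obtain ⟨K, hKc, hKo, -⟩ := hG Set.univ Filter.univ_mem
    refine ⟨0, ⟨⟨K, hKc, hKo, fun _ _ _ => rfl⟩, ⟨∅, isCompact_empty, by simp⟩,
      fun g h => by simp⟩, by simp, by rw [hψ0]; rfl⟩
  obtain ⟨⟨Kψ, hKψc, hKψo, hKψinv⟩, ⟨Cψ, hCψc, hCψsupp⟩, Eψ⟩ := hψ
  obtain ⟨Wψ, hWψo, hWψeq⟩ := isOpen_induced_iff.1 hKψo
  have h1Wψ : (1 : G) ∈ Wψ := by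
    have h' : (1 : ↥H) ∈ Subtype.val ⁻¹' Wψ := by rw [hWψeq]; exact Kψ.one_mem
    simpa using h'
  -- the local data at each point b of H
  have main : ∀ b : ↥H, ∃ K : Subgroup G, IsCompact (K : Set G) ∧ IsOpen (K : Set G) ∧
      ((K : Set G) ⊆ Wψ) ∧
      (∀ k ∈ (K : Set G), k * ((b : G) * x) ∈ Ui) ∧
      (∀ p : ↥P, ((b : G) * x) * (p : G) * ((b : G) * x)⁻¹ ∈ (K : Set G) →
        ρ p (ψ b) = ψ b) ∧
      (∀ (h : ↥H) (k : G) (p : ↥P), k ∈ (K : Set G) →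
        ((h : G) * x = k * ((b : G) * x) * (p : G)) → ψ h = ρ p⁻¹ (ψ b)) := by
    intro b
    set y : G := (b : G) * x with hydef
    have hycell : y ∈ Ui \ Uim := by
      rw [hcell]
      exact ⟨(b : G), b.2, 1, one_mem P, by rw [mul_one]⟩
    obtain ⟨Uρ, hUρo, hUρfix⟩ := hρ (ψ b)
    obtain ⟨Wv, hWvo, hWveq⟩ := isOpen_induced_iff.1 hUρo
    have h1Wv : (1 : G) ∈ Wv := by
      have h' : (1 : ↥P) ∈ Subtype.val ⁻¹' Wv := by rw [hWveq]; exact Uρ.one_mem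
      simpa using h'
    set W : Set G := Wψ ∩ Wv ∩ ((fun g => y⁻¹ * g * y) ⁻¹' Wv) ∩ ((fun g => g * y) ⁻¹' Ui)
      with hWdef
    have hWo : IsOpen W :=
      ((hWψo.inter hWvo).inter (hWvo.preimage
        ((continuous_mul_left y⁻¹).mul continuous_const))).inter
        (hUi.preimage (continuous_mul_right y))
    have h1W : (1 : G) ∈ W := by
      refine ⟨⟨⟨h1Wψ, h1Wv⟩, ?_⟩, ?_⟩
      · show y⁻¹ * 1 * y ∈ Wv; simpa using h1Wv
      · show 1 * y ∈ Ui; simpa using hycell.1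
    obtain ⟨K₀, hK₀c, hK₀o, hK₀W⟩ := cos_in_nhd hG hWo h1W
    obtain ⟨N, hNo, hNy, hNctl⟩ := baire_nbhd hG H P hHcl hPcl x Ui Uim hUi hUim hcell
      K₀ hK₀c hK₀o y hycell
    obtain ⟨K, hKc, hKo, hKsub⟩ := cos_in_nhd hG
      (hK₀o.inter (hNo.preimage (continuous_mul_right y)))
      ⟨K₀.one_mem, by simpa using hNy⟩
    have hKK₀ : (K : Set G) ⊆ (K₀ : Set G) := fun k hk => (hKsub hk).1
    have hKW : (K : Set G) ⊆ W := fun k hk => hK₀W (hKK₀ hk)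
    refine ⟨K, hKc, hKo, fun k hk => (hKW hk).1.1.1, fun k hk => (hKW hk).2, ?_, ?_⟩
    · -- conjugated stabilizer property
      intro p hp
      have : y⁻¹ * (y * (p : G) * y⁻¹) * y ∈ Wv := (hKW hp).1.2
      have hpWv : (p : G) ∈ Wv := by
        have e : y⁻¹ * (y * (p : G) * y⁻¹) * y = (p : G) := by group
        rwa [e] at this
      have hpU : p ∈ Uρ := by
        have h' : p ∈ Subtype.val ⁻¹' Wv := hpWv
        rwa [hWveq] at h'
      exact hUρfix p hpU
    · -- the key value property
      intro h k p hk heq2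
      have hkyN : k * y ∈ N := (hKsub hk).2
      have hkycell : k * y ∈ Ui \ Uim := by
        rw [hcell]
        refine ⟨(h : G), h.2, (p : G)⁻¹, inv_mem p.2, ?_⟩
        rw [heq2]; group
      obtain ⟨a, ⟨haK₀, haH⟩, q, ⟨hqK₀, hqP⟩, hkyeq⟩ := hNctl (k * y) ⟨hkyN, hkycell⟩
      have hx3 : (h : G) * x = a * (b : G) * (x * (q * (p : G)) * x⁻¹) * x := by
        rw [heq2, hkyeq, hydef]; group
      set m : G := x * (q * (p : G)) * x⁻¹ with hmdef
      have hm_eq : m = (a * (b : G))⁻¹ * (h : G) := by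
        have : (h : G) = a * (b : G) * m := by
          have : (h : G) = (h : G) * x * x⁻¹ := by group
          rw [this, hx3]; group
        rw [this]; group
      have hmH : m ∈ (H : Set G) := by
        rw [hm_eq]
        exact mul_mem (inv_mem (mul_mem haH b.2)) h.2
      have huKψ : (⟨a, haH⟩ : ↥H) ∈ Kψ := by
        have h' : (⟨a, haH⟩ : ↥H) ∈ Subtype.val ⁻¹' Wψ := (hK₀W haK₀).1.1.1
        rwa [hWψeq] at h'
      have hdec : h = (⟨a, haH⟩ : ↥H) * (b * ⟨m, hmH⟩) := by
        apply Subtype.ext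
        show (h : G) = a * ((b : G) * m)
        rw [hm_eq]; group
      have hψh : ψ h = ψ (b * ⟨m, hmH⟩) := by
        rw [hdec]; exact hKψinv _ huKψ _
      have hqpP : q * (p : G) ∈ P := mul_mem hqP p.2
      have hEv : ψ (b * ⟨m, hmH⟩) = ρ (⟨q * (p : G), hqpP⟩ : ↥P)⁻¹ (ψ b) :=
        Eψ b ⟨m, hmH⟩ (q * (p : G)) hqpP hmdef
      have hsplit : (⟨q * (p : G), hqpP⟩ : ↥P) = ⟨q, hqP⟩ * p := Subtype.ext rfl
      have hqfix : ρ (⟨q, hqP⟩ : ↥P) (ψ b) = ψ b := by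
        have hqWv : q ∈ Wv := (hK₀W hqK₀).1.1.2
        have hqU : (⟨q, hqP⟩ : ↥P) ∈ Uρ := by
          have h' : (⟨q, hqP⟩ : ↥P) ∈ Subtype.val ⁻¹' Wv := hqWv
          rwa [hWveq] at h'
        exact hUρfix _ hqU
      rw [hψh, hEv, hsplit, mul_inv_rev, map_mul, Module.End.mul_apply, rho_fix_inv hqfix]
  choose Kb hKbc hKbo hKbWψ hKbtube hKbstab hKbval using main
  -- finite cover of Cψ by the sets attached to its points
  obtain ⟨s, hs⟩ := hCψc.elim_finite_subcover
      (fun c : ↥Cψ => ((fun h : ↥H => (h : G) * (((c : ↥H) : G))⁻¹) ⁻¹' (Kb (c : ↥H) : Set G)))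
      (fun c => (hKbo _).preimage (continuous_subtype_val.mul continuous_const))
      (fun c hc => Set.mem_iUnion.2 ⟨⟨c, hc⟩, by
        show ((c : ↥H) : G) * (((c : ↥H) : G))⁻¹ ∈ (Kb c : Set G)
        rw [mul_inv_cancel]
        exact (Kb c).one_mem⟩)
  set l := s.toList with hl
  set n := l.length with hn'
  have hn : 0 < n := by
    obtain ⟨h₀, hne⟩ := Function.ne_iff.1 hψ0
    have hmem : h₀ ∈ Function.support ψ := by simpa using hne
    obtain ⟨c, hc, mm, hmm, hcmh⟩ := Set.mem_mul.1 (hCψsupp hmem)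
    obtain ⟨cc, hccs, -⟩ := Set.mem_iUnion₂.1 (hs hc)
    have hlne : l ≠ [] := by
      intro h0
      have := Finset.mem_toList.2 hccs
      rw [← hl] at this
      rw [h0] at this
      exact List.not_mem_nil this
    exact List.length_pos_iff.2 hlne
  set b : Fin n → ↥H := fun j => ((l.get j : ↥Cψ) : ↥H) with hbdef
  set Kj : Fin n → Subgroup G := fun j => Kb (b j) with hKjdef
  set yj : Fin n → G := fun j => ((b j : ↥H) : G) * x with hyjdef
  set Q : Fin n → G → Prop := fun j g => ∃ kp : G × G, kp.1 ∈ (Kj j : Set G) ∧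
    kp.2 ∈ (P : Set G) ∧ g = kp.1 * yj j * kp.2 with hQdef
  set Φ : Fin n → G → V := fun j g =>
    if hg : Q j g then ρ (⟨hg.choose.2, hg.choose_spec.2.1⟩ : ↥P)⁻¹ (ψ (b j)) else 0
    with hΦdef
  have welldef : ∀ (j : Fin n) (g k : G) (p : ↥P), k ∈ (Kj j : Set G) →
      g = k * yj j * (p : G) → Φ j g = ρ p⁻¹ (ψ (b j)) := by
    intro j g k p hk hgeq
    have hQg : Q j g := ⟨(k, (p : G)), hk, p.2, hgeq⟩
    simp only [hΦdef]
    rw [dif_pos hQg]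
    obtain ⟨hsel1, hsel2, hseleq⟩ := hQg.choose_spec
    have h3 : hQg.choose.1 * yj j * hQg.choose.2 = k * yj j * (p : G) := by
      rw [← hseleq, hgeq]
    have h5 : hQg.choose.2 = (yj j)⁻¹ * (hQg.choose.1)⁻¹ * (k * (yj j * (p : G))) := by
      rw [show k * (yj j * (p:G)) = k * yj j * (p:G) by group, ← h3]; group
    have hq'P : hQg.choose.2 * (p : G)⁻¹ ∈ P := mul_mem hsel2 (inv_mem p.2)
    have h4 : yj j * (hQg.choose.2 * (p : G)⁻¹) * (yj j)⁻¹ = (hQg.choose.1)⁻¹ * k := by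
      rw [h5]; group
    have hmem4 : ((b j : ↥H) : G) * x * (hQg.choose.2 * (p : G)⁻¹) *
        (((b j : ↥H) : G) * x)⁻¹ ∈ (Kb (b j) : Set G) := by
      have : yj j * (hQg.choose.2 * (p : G)⁻¹) * (yj j)⁻¹ ∈ (Kj j : Set G) := by
        rw [h4]; exact mul_mem (inv_mem hsel1) hk
      simpa [hyjdef, hKjdef] using this
    have hstab := hKbstab (b j) ⟨_, hq'P⟩ hmem4
    have hsplit : (⟨hQg.choose.2, hsel2⟩ : ↥P) = ⟨_, hq'P⟩ * p := Subtype.ext (by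
      show hQg.choose.2 = hQg.choose.2 * (p : G)⁻¹ * (p : G)
      group)
    rw [hsplit, mul_inv_rev, map_mul, Module.End.mul_apply, rho_fix_inv hstab]
  have hQnone : ∀ j g, ¬ Q j g → Φ j g = 0 := by
    intro j g h
    simp only [hΦdef]
    rw [dif_neg h]
  have hQleft : ∀ (j : Fin n) (k : G), k ∈ (Kj j : Set G) → ∀ g, Q j g → Q j (k * g) := by
    rintro j k hk g ⟨⟨k₁, p₁⟩, hk₁, hp₁, hgeq⟩
    exact ⟨(k * k₁, p₁), mul_mem hk hk₁, hp₁, by rw [hgeq]; group⟩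
  have hQleft_iff : ∀ (j : Fin n) (k : G), k ∈ (Kj j : Set G) →
      ∀ g, (Q j (k * g) ↔ Q j g) := by
    intro j k hk g
    constructor
    · intro h
      have := hQleft j k⁻¹ (inv_mem hk) _ h
      rwa [inv_mul_cancel_left] at this
    · exact hQleft j k hk g
  have hQright : ∀ (j : Fin n) (p : ↥P) (g), Q j g → Q j (g * (p : G)) := by
    rintro j p g ⟨⟨k₁, p₁⟩, hk₁, hp₁, hgeq⟩
    exact ⟨(k₁, p₁ * (p : G)), hk₁, mul_mem hp₁ p.2, by rw [hgeq]; group⟩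
  have hQright_iff : ∀ (j : Fin n) (p : ↥P) (g), (Q j (g * (p : G)) ↔ Q j g) := by
    intro j p g
    constructor
    · intro h
      have := hQright j p⁻¹ _ h
      rw [show (((p⁻¹ : ↥P) : G)) = ((p : G))⁻¹ from rfl, mul_inv_cancel_right] at this
      exact this
    · exact hQright j p g
  set Etil : Fin n → Set G := fun j => {g | Q j g} with hEdef
  set Ftil : Fin n → Set G := fun j => Etil j \ ⋃ r, ⋃ (_ : r < j), Etil r with hFdef
  have hFmem : ∀ j g, g ∈ Ftil j ↔ (Q j g ∧ ∀ r < j, ¬ Q r g) := by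
    intro j g
    constructor
    · rintro ⟨h1, h2⟩
      refine ⟨h1, fun r hr hQr => h2 (Set.mem_iUnion.2 ⟨r, Set.mem_iUnion.2 ⟨hr, hQr⟩⟩)⟩
    · rintro ⟨h1, h2⟩
      refine ⟨h1, fun hmem => ?_⟩
      obtain ⟨r, hr⟩ := Set.mem_iUnion.1 hmem
      obtain ⟨hlt, hQr⟩ := Set.mem_iUnion.1 hr
      exact h2 r hlt hQr
  set φv : G → V := fun g => ∑ j : Fin n, if g ∈ Ftil j then Φ j g else 0 with hφdef
  -- left invariance subgroup
  set KI : Subgroup G := ⨅ j : Fin n, Kj j with hKIdef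
  have hKIset : (KI : Set G) = ⋂ j : Fin n, (Kj j : Set G) := by
    rw [hKIdef]; exact Subgroup.coe_iInf
  have hKImem : ∀ k, k ∈ KI → ∀ j, k ∈ (Kj j : Set G) := by
    intro k hk j
    exact (Subgroup.mem_iInf.1 hk) j
  have j0 : Fin n := ⟨0, hn⟩
  have hKIc : IsCompact (KI : Set G) := by
    refine IsCompact.of_isClosed_subset (hKbc (b j0)) ?_ ?_
    · rw [hKIset]
      exact isClosed_iInter (fun j => (Kj j).isClosed_of_isOpen (hKbo (b j)))
    · rw [hKIset]
      exact Set.iInter_subset _ j0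
  have hKIo : IsOpen (KI : Set G) := by
    rw [hKIset]
    exact isOpen_iInter_of_finite (fun j => hKbo (b j))
  -- translation invariance of the pieces
  have hFleft : ∀ (j : Fin n) (k : G), k ∈ KI → ∀ g, (k * g ∈ Ftil j ↔ g ∈ Ftil j) := by
    intro j k hk g
    rw [hFmem, hFmem]
    constructor
    · rintro ⟨h1, h2⟩
      exact ⟨(hQleft_iff j k (hKImem k hk j) g).1 h1,
        fun r hr hQr => h2 r hr (hQleft r k (hKImem k hk r) g hQr)⟩
    · rintro ⟨h1, h2⟩
      exact ⟨hQleft j k (hKImem k hk j) g h1,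
        fun r hr hQr => h2 r hr ((hQleft_iff r k (hKImem k hk r) g).1 hQr)⟩
  have hΦleft : ∀ (j : Fin n) (k : G), k ∈ (Kj j : Set G) → ∀ g, Φ j (k * g) = Φ j g := by
    intro j k hk g
    by_cases hQg : Q j g
    · obtain ⟨⟨k₁, p₁⟩, hk₁, hp₁, hgeq⟩ := hQg
      rw [welldef j g k₁ ⟨p₁, hp₁⟩ hk₁ hgeq,
        welldef j (k * g) (k * k₁) ⟨p₁, hp₁⟩ (mul_mem hk hk₁) (by rw [hgeq]; group)]
    · rw [hQnone j g hQg, hQnone j (k * g) (fun hq => hQg ((hQleft_iff j k hk g).1 hq))]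
  have hsupp_ex : ∀ g, φv g ≠ 0 → ∃ j, g ∈ Ftil j := by
    intro g hg
    by_contra hno
    push_neg at hno
    apply hg
    simp only [hφdef]
    exact Finset.sum_eq_zero (fun j _ => if_neg (hno j))
  refine ⟨φv, ⟨⟨KI, hKIc, hKIo, ?_⟩,
    ⟨⋃ j, (fun k => k * yj j) '' (Kj j : Set G),
      isCompact_iUnion (fun j => (hKbc (b j)).image (continuous_mul_right _)), ?_⟩, ?_⟩,
    ?_, ?_⟩
  · -- left invariance
    intro k hk g
    simp only [hφdef]
    refine Finset.sum_congr rfl (fun j _ => ?_)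
    by_cases hg : g ∈ Ftil j
    · rw [if_pos ((hFleft j k hk g).2 hg), if_pos hg, hΦleft j k (hKImem k hk j) g]
    · rw [if_neg (fun hmem => hg ((hFleft j k hk g).1 hmem)), if_neg hg]
  · -- support compact modulo P
    intro g hg
    obtain ⟨j, hFj⟩ := hsupp_ex g hg
    obtain ⟨⟨k₁, p₁⟩, hk₁, hp₁, hgeq⟩ := ((hFmem j g).1 hFj).1
    exact Set.mem_mul.2 ⟨k₁ * yj j, Set.mem_iUnion.2 ⟨j, ⟨k₁, hk₁, rfl⟩⟩, p₁, hp₁, hgeq.symm⟩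
  · -- equivariance
    intro g hp
    simp only [hφdef]
    rw [map_sum]
    refine Finset.sum_congr rfl (fun j _ => ?_)
    have hmemiff : g * (hp : G) ∈ Ftil j ↔ g ∈ Ftil j := by
      rw [hFmem, hFmem]
      constructor
      · rintro ⟨h1, h2⟩
        exact ⟨(hQright_iff j hp g).1 h1, fun r hr hQr => h2 r hr (hQright r hp g hQr)⟩
      · rintro ⟨h1, h2⟩
        exact ⟨hQright j hp g h1, fun r hr hQr => h2 r hr ((hQright_iff r hp g).1 hQr)⟩
    by_cases hg : g ∈ Ftil j
    · rw [if_pos (hmemiff.2 hg), if_pos hg]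
      obtain ⟨⟨k₁, p₁⟩, hk₁, hp₁, hgeq⟩ := ((hFmem j g).1 hg).1
      rw [welldef j g k₁ ⟨p₁, hp₁⟩ hk₁ hgeq,
        welldef j (g * (hp : G)) k₁ (⟨p₁, hp₁⟩ * hp) hk₁ (by
          rw [hgeq, Subgroup.coe_mul]; group),
        mul_inv_rev, map_mul, Module.End.mul_apply]
    · rw [if_neg (fun hmem => hg (hmemiff.1 hmem)), if_neg hg, map_zero]
  · -- support in Ui
    intro g hg
    obtain ⟨j, hFj⟩ := hsupp_ex g hg
    obtain ⟨⟨k₁, p₁⟩, hk₁, hp₁, hgeq⟩ := ((hFmem j g).1 hFj).1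
    have h1 : k₁ * yj j ∈ Ui := hKbtube (b j) k₁ hk₁
    have h2 := hUiP _ h1 p₁ hp₁
    rw [hgeq]; exact h2
  · -- restriction to H equals ψ
    funext h
    show φv ((h : G) * x) = ψ h
    by_cases hQh : ∃ j, Q j ((h : G) * x)
    · obtain ⟨jw, hjw⟩ := hQh
      set SS := Finset.univ.filter (fun j : Fin n => Q j ((h : G) * x)) with hSS
      have hSSne : SS.Nonempty := ⟨jw, Finset.mem_filter.2 ⟨Finset.mem_univ _, hjw⟩⟩
      set j₀ := SS.min' hSSne with hj₀
      have hQj₀ : Q j₀ ((h : G) * x) := (Finset.mem_filter.1 (SS.min'_mem hSSne)).2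
      have hmin : ∀ r, r < j₀ → ¬ Q r ((h : G) * x) := by
        intro r hr hQr
        exact absurd (SS.min'_le r (Finset.mem_filter.2 ⟨Finset.mem_univ _, hQr⟩)) (not_le.2 hr)
      have hF : (h : G) * x ∈ Ftil j₀ := (hFmem j₀ _).2 ⟨hQj₀, hmin⟩
      obtain ⟨⟨k₁, p₁⟩, hk₁, hp₁, hgeq⟩ := hQj₀
      have hz1 : ∀ j ∈ Finset.univ, j ≠ j₀ →
          (if (h : G) * x ∈ Ftil j then Φ j ((h : G) * x) else 0) = 0 := by
        intro j _ hj
        refine if_neg (fun hFj => ?_)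
        obtain ⟨hQj, hminj⟩ := (hFmem j _).1 hFj
        rcases lt_or_gt_of_ne hj with hlt | hgt
        · exact hmin j hlt hQj
        · exact hminj j₀ hgt ⟨(k₁, p₁), hk₁, hp₁, hgeq⟩
      have hz2 : j₀ ∉ Finset.univ →
          (if (h : G) * x ∈ Ftil j₀ then Φ j₀ ((h : G) * x) else 0) = 0 :=
        fun habs => absurd (Finset.mem_univ j₀) habs
      simp only [hφdef]
      rw [Finset.sum_eq_single j₀ hz1 hz2, if_pos hF,
        welldef j₀ _ k₁ ⟨p₁, hp₁⟩ hk₁ hgeq,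
        hKbval (b j₀) h k₁ ⟨p₁, hp₁⟩ hk₁ hgeq]
    · push_neg at hQh
      have hψh : ψ h = 0 := by
        by_contra hne
        obtain ⟨c, hc, mm, hmm, hcmh⟩ := Set.mem_mul.1 (hCψsupp (by simpa using hne))
        obtain ⟨cc, hccs, hcO⟩ := Set.mem_iUnion₂.1 (hs hc)
        have hcl : cc ∈ l := by rw [hl]; exact Finset.mem_toList.2 hccs
        obtain ⟨j, hjget⟩ := List.mem_iff_get.1 hcl
        have hbj : b j = (cc : ↥H) := congrArg Subtype.val hjget
        have hmm' : mm ∈ (P.map (MulAut.conj x).toMonoidHom).subgroupOf H := hmm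
        rw [Subgroup.mem_subgroupOf] at hmm'
        obtain ⟨pm, hpm, hpme⟩ := Subgroup.mem_map.1 hmm'
        have hpme' : x * pm * x⁻¹ = ((mm : ↥H) : G) := by
          rw [← hpme]; rfl
        have hk : (c : G) * (((b j : ↥H) : G))⁻¹ ∈ (Kj j : Set G) := by
          simp only [hKjdef]
          rw [hbj]
          exact hcO
        apply hQh j
        refine ⟨((c : G) * (((b j : ↥H) : G))⁻¹, pm), hk, hpm, ?_⟩
        have hch : (c : G) * ((mm : ↥H) : G) = (h : G) := by
          rw [← hcmh]; rfl
        simp only [hyjdef]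
        rw [← hch, ← hpme']
        group
      rw [hψh]
      simp only [hφdef]
      exact Finset.sum_eq_zero (fun j _ => if_neg (fun hFj => hQh j ((hFmem j _).1 hFj).1))

end FiltrationAux

/-- Filtration of an induced representation along the finitely many
`(H,P)`-double cosets:  with `∅ = U₀ ⊂ U₁ ⊂ ⋯ ⊂ U_n = G` open, `U_i ∖ U_{i−1} = H xᵢ P`,
and `I_i = {φ ∈ ind_P^G V ∣ supp φ ⊆ U_i}`, each `I_i` is `H`-stable and
`I_i / I_{i−1} ≅ ind_{H ∩ xᵢPxᵢ⁻¹}^H (δ^{xᵢ}|)` as `H`-modules, the isomorphism being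
induced by `φ ↦ (h ↦ φ(h xᵢ))` (restriction of functions to `H` when `xᵢ = e`). -/
theorem induced_filtration_double_cosets
    (G : Type*) [Group G] [TopologicalSpace G] [IsTopologicalGroup G] [T2Space G]
    [LocallyCompactSpace G] [TotallyDisconnectedSpace G] [SigmaCompactSpace G]
    (hG : HasCompactOpenBasis G)
    (H P : Subgroup G) (hHcl : IsClosed (H : Set G)) (hPcl : IsClosed (P : Set G))
    (hfin : (Set.range fun g : G => {y : G | ∃ h ∈ H, ∃ p ∈ P, y = h * g * p}).Finite)
    (n : ℕ) (U : ℕ → Set G) (x : ℕ → G)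
    (hU0 : U 0 = ∅) (hUn : U n = Set.univ)
    (hUopen : ∀ i ≤ n, IsOpen (U i))
    (hUmono : ∀ i, 1 ≤ i → i ≤ n → U (i - 1) ⊆ U i)
    (hUcoset : ∀ i, 1 ≤ i → i ≤ n →
      U i \ U (i - 1) = {y : G | ∃ h ∈ H, ∃ p ∈ P, y = h * x i * p})
    (V : Type*) [AddCommGroup V] [Module ℂ V]
    (ρ : Representation ℂ P V) (hρ : SmoothRep ρ) :
    -- each `I_i` is stable under the left translation action of `H`
    (∀ i ≤ n, ∀ h₀ ∈ H, ∀ φ : G → V, IsInd P ρ φ → Function.support φ ⊆ U i →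
      (IsInd P ρ (fun g => φ (h₀⁻¹ * g)) ∧
        Function.support (fun g => φ (h₀⁻¹ * g)) ⊆ U i)) ∧
    -- the map `φ ↦ (h ↦ φ(h xᵢ))` realizes `I_i / I_{i−1} ≅ ind_{H ∩ xᵢPxᵢ⁻¹}^H (δ^{xᵢ}|)`
    (∀ i, 1 ≤ i → i ≤ n →
      -- it maps `I_i` into the induced module
      (∀ φ : G → V, IsInd P ρ φ → Function.support φ ⊆ U i →
        IsIndTwist H P ρ (x i) (fun h : H => φ (h * x i))) ∧
      -- it is `H`-equivariant
      (∀ (h₀ : H) (φ : G → V), IsInd P ρ φ →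
        (fun h : H => φ ((h₀ : G)⁻¹ * (h * x i))) =
          (fun h : H => φ (((h₀⁻¹ * h : H) : G) * x i))) ∧
      -- its kernel on `I_i` is exactly `I_{i−1}`
      (∀ φ : G → V, IsInd P ρ φ → Function.support φ ⊆ U i →
        ((fun h : H => φ (h * x i)) = 0 ↔ Function.support φ ⊆ U (i - 1))) ∧
      -- it maps `I_i` onto the induced module
      (∀ ψ : H → V, IsIndTwist H P ρ (x i) ψ →
        ∃ φ : G → V, IsInd P ρ φ ∧ Function.support φ ⊆ U i ∧
          (fun h : H => φ (h * x i)) = ψ)) := by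
  classical
  have hUinv : ∀ i ≤ n, ∀ g ∈ U i, ∀ h ∈ H, ∀ p ∈ P, h * g * p ∈ U i := by
    intro i
    induction i using Nat.strong_induction_on with
    | _ i IH =>
      intro hin g hg h hh p hp
      rcases Nat.eq_zero_or_pos i with h0 | h1
      · subst h0; rw [hU0] at hg; exact absurd hg (Set.notMem_empty g)
      · by_cases hgm : g ∈ U (i - 1)
        · exact hUmono i h1 hin (IH (i - 1) (Nat.sub_lt h1 one_pos)
            (le_trans (Nat.sub_le i 1) hin) g hgm h hh p hp)
        · have hcm : g ∈ U i \ U (i - 1) := ⟨hg, hgm⟩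
          rw [hUcoset i h1 hin] at hcm
          obtain ⟨h₁, hh₁, p₁, hp₁, rfl⟩ := hcm
          have he : h * (h₁ * x i * p₁) * p = (h * h₁) * x i * (p₁ * p) := by group
          rw [he]
          have hmem : (h * h₁) * x i * (p₁ * p) ∈ U i \ U (i - 1) := by
            rw [hUcoset i h1 hin]
            exact ⟨h * h₁, mul_mem hh hh₁, p₁ * p, mul_mem hp₁ hp, rfl⟩
          exact hmem.1
  constructor
  · -- H-stability of the filtration pieces
    intro i hin h₀ hh₀ φ hφ hsupp
    obtain ⟨⟨K, hKc, hKo, hKinv⟩, ⟨C, hCc, hCsupp⟩, heqv⟩ := hφ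
    constructor
    · refine ⟨⟨Subgroup.map (MulAut.conj h₀).toMonoidHom K, ?_, ?_, ?_⟩,
        ⟨(fun c => h₀ * c) '' C, hCc.image (continuous_mul_left h₀), ?_⟩, ?_⟩
      · rw [Subgroup.coe_map]
        refine hKc.image ?_
        have hfe : ⇑(MulAut.conj h₀).toMonoidHom = fun g : G => h₀ * g * h₀⁻¹ := by
          funext g; simp [MulAut.conj_apply]
        rw [hfe]
        exact (continuous_mul_left h₀).mul continuous_const
      · have hset : ((K.map (MulAut.conj h₀).toMonoidHom : Subgroup G) : Set G)
            = (fun g => h₀⁻¹ * g * h₀) ⁻¹' (K : Set G) := by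
          ext g
          rw [SetLike.mem_coe, Subgroup.mem_map_equiv]
          simp [MulAut.conj_symm_apply]
        rw [hset]
        exact hKo.preimage ((continuous_mul_left h₀⁻¹).mul continuous_const)
      · intro k hk g
        obtain ⟨k₀, hk₀, hke⟩ := Subgroup.mem_map.1 hk
        have hke' : k = h₀ * k₀ * h₀⁻¹ := by
          rw [← hke]; simp [MulAut.conj_apply]
        show φ (h₀⁻¹ * (k * g)) = φ (h₀⁻¹ * g)
        rw [hke']
        have he : h₀⁻¹ * (h₀ * k₀ * h₀⁻¹ * g) = k₀ * (h₀⁻¹ * g) := by group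
        rw [he]
        exact hKinv k₀ hk₀ _
      · intro g hg
        have hne : φ (h₀⁻¹ * g) ≠ 0 := hg
        obtain ⟨c, hc, p, hp, hcp⟩ := Set.mem_mul.1 (hCsupp hne)
        refine Set.mem_mul.2 ⟨h₀ * c, ⟨c, hc, rfl⟩, p, hp, ?_⟩
        rw [mul_assoc, hcp]
        exact mul_inv_cancel_left h₀ g
      · intro g hp
        show φ (h₀⁻¹ * (g * (hp : G))) = _
        rw [show h₀⁻¹ * (g * (hp : G)) = (h₀⁻¹ * g) * (hp : G) by group]
        exact heqv _ hp
    · intro g hg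
      have hw : h₀⁻¹ * g ∈ U i := hsupp hg
      have hmem := hUinv i hin _ hw h₀ hh₀ 1 (one_mem P)
      rwa [mul_one, mul_inv_cancel_left] at hmem
  · -- the filtration quotients
    intro i h1 hin
    have hUo : IsOpen (U i) := hUopen i hin
    have hUmo : IsOpen (U (i - 1)) := hUopen (i - 1) (le_trans (Nat.sub_le i 1) hin)
    have hcell := hUcoset i h1 hin
    have hUiP : ∀ g ∈ U i, ∀ p ∈ (P : Set G), g * p ∈ U i := by
      intro g hg p hp
      have hmem := hUinv i hin g hg 1 (one_mem H) p hp
      rwa [one_mul] at hmem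
    refine ⟨?_, ?_, ?_, ?_⟩
    · -- lands in the twisted induced module
      intro φ hφ hsupp
      obtain ⟨⟨K, hKc, hKo, hKinv⟩, -, heqv⟩ := id hφ
      have hset : ((K.subgroupOf H : Subgroup ↥H) : Set ↥H)
          = Subtype.val ⁻¹' (K : Set G) := by
        rw [Subgroup.coe_subgroupOf]; rfl
      refine ⟨⟨K.subgroupOf H, ?_, ?_, ?_⟩, ?_, ?_⟩
      · rw [hset]
        exact hHcl.isClosedEmbedding_subtypeVal.isCompact_preimage hKc
      · rw [hset]
        exact hKo.preimage continuous_subtype_val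
      · intro k hk h
        show φ ((↑(k * h) : G) * x i) = φ ((h : G) * x i)
        have hkK : (k : G) ∈ K := Subgroup.mem_subgroupOf.1 hk
        have he : (↑(k * h) : G) * x i = (k : G) * ((h : G) * x i) := by
          show ((k : G) * (h : G)) * x i = (k : G) * ((h : G) * x i)
          group
        rw [he]
        exact hKinv _ hkK _
      · obtain ⟨D, hDc, hDH, hDmain⟩ := key2a hG H P hHcl hPcl (x i) (U i) (U (i - 1))
          hUo hUmo hcell ρ φ hφ hsupp
        refine ⟨Subtype.val ⁻¹' D,
          hHcl.isClosedEmbedding_subtypeVal.isCompact_preimage hDc, ?_⟩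
        intro h hh
        have hne : φ ((h : G) * x i) ≠ 0 := hh
        obtain ⟨d, hd, p, hp, hmH, hhd⟩ := hDmain (h : G) h.2 hne
        refine Set.mem_mul.2 ⟨⟨d, hDH hd⟩, hd, ⟨x i * p * (x i)⁻¹, hmH⟩, ?_, ?_⟩
        · show (⟨x i * p * (x i)⁻¹, hmH⟩ : ↥H) ∈
            ((P.map (MulAut.conj (x i)).toMonoidHom).subgroupOf H : Subgroup ↥H)
          rw [Subgroup.mem_subgroupOf]
          exact Subgroup.mem_map.2 ⟨p, hp, by simp [MulAut.conj_apply]⟩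
        · exact Subtype.ext hhd.symm
      · intro h q p hp hq
        show φ ((↑(h * q) : G) * x i) = _
        have he : (↑(h * q) : G) * x i = ((h : G) * x i) * p := by
          show ((h : G) * (q : G)) * x i = ((h : G) * x i) * p
          rw [hq]; group
        rw [he]
        exact heqv _ ⟨p, hp⟩
    · -- H-equivariance of restriction
      intro h₀ φ hφ
      funext h
      exact congrArg φ (mul_assoc _ _ _).symm
    · -- kernel is the previous piece
      intro φ hφ hsupp
      obtain ⟨-, -, heqv⟩ := id hφ
      constructor
      · intro hres g hg
        by_contra hgm
        have hcm : g ∈ U i \ U (i - 1) := ⟨hsupp hg, hgm⟩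
        rw [hcell] at hcm
        obtain ⟨h₁, hh₁, p₁, hp₁, rfl⟩ := hcm
        have h0 : φ (h₁ * x i) = 0 := by
          have := congrFun hres ⟨h₁, hh₁⟩
          simpa using this
        have hz : φ (h₁ * x i * p₁) = 0 := by
          have := heqv (h₁ * x i) ⟨p₁, hp₁⟩
          rw [h0, map_zero] at this
          exact this
        exact hg hz
      · intro hsub
        funext h
        show φ ((h : G) * x i) = 0
        by_contra hne
        have hmem : (h : G) * x i ∈ U (i - 1) := hsub hne
        have hcm : (h : G) * x i ∈ U i \ U (i - 1) := by
          rw [hcell]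
          exact ⟨(h : G), h.2, 1, one_mem P, (mul_one _).symm⟩
        exact hcm.2 hmem
    · -- surjectivity
      intro ψ hψ
      exact surj hG H P hHcl hPcl (x i) (U i) (U (i - 1)) hUo hUmo hcell hUiP ρ hρ ψ hψ
end
end

section
/- Let G be a σ-compact l-group acting continuously on an l-space X (the action map G × X → X being continuous), with only finitely many G-orbits in X. Then there exist G-invariant open subsets ∅ = U₀ ⊂ U₁ ⊂ ⋯ ⊂ U_n = X such that for each i ≥ 1 the set U_i ∖ U_{i−1} is a single G-orbit. In particular, every G-orbit in X is locally closed. -/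
open scoped Pointwise

noncomputable section

/-- An `l`-space: a Hausdorff space with a basis of compact open sets (here expressed by:
every point of every open set lies in a compact open subset of it). -/
def IsLSpaceBasis (X : Type*) [TopologicalSpace X] : Prop :=
  ∀ U : Set X, IsOpen U → ∀ x ∈ U, ∃ K : Set X, IsCompact K ∧ IsOpen K ∧ x ∈ K ∧ K ⊆ U

open MulAction Set

set_option linter.unusedSectionVars false

section Aux
variable {G : Type*} [Group G] [TopologicalSpace G] [SigmaCompactSpace G]
variable {X : Type*} [TopologicalSpace X] [T2Space X] [LocallyCompactSpace X]
variable [MulAction G X] [ContinuousConstSMul G X]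

/-- Invariance of orbit sets and basic smul facts. -/
private lemma smul_mem_of_inv {A : Set X} (hinv : ∀ g : G, g • A = A) {g : G} {x : X}
    (hx : x ∈ A) : g • x ∈ A := by
  rw [← hinv g]; exact Set.smul_mem_smul_set hx

private lemma orbit_subset_of_inv {A : Set X} (hinv : ∀ g : G, g • A = A) {x : X}
    (hx : x ∈ A) : orbit G x ⊆ A := by
  rintro y ⟨g, rfl⟩; exact smul_mem_of_inv hinv hx

/-- Key Baire-category lemma: on a nonempty closed invariant set, some orbit is
relatively open, witnessed by an invariant open set `V`. -/
lemma exists_rel_open_orbit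
    (hcont : Continuous fun p : G × X => p.1 • p.2)
    (horb : (Set.range fun x : X => MulAction.orbit G x).Finite)
    {A : Set X} (hA : IsClosed A) (hne : A.Nonempty) (hinv : ∀ g : G, g • A = A) :
    ∃ x ∈ A, ∃ V : Set X, IsOpen V ∧ (∀ g : G, g • V = V) ∧ V ∩ A = orbit G x := by
  haveI : LocallyCompactSpace A := hA.locallyCompactSpace
  haveI : Nonempty A := hne.to_subtype
  -- the finite set of orbits of points of A
  set s : Set (Set X) := (fun x : X => orbit G x) '' A with hs_def
  have hs : s.Finite := horb.subset (Set.image_subset_range _ _)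
  haveI : Countable s := hs.countable.to_subtype
  -- representative of each orbit in s
  have hrep : ∀ O : s, ∃ a : X, a ∈ A ∧ orbit G a = (O : Set X) := by
    rintro ⟨O, a, ha, rfl⟩; exact ⟨a, ha, rfl⟩
  choose rep hrepA hrepO using hrep
  -- covering of A by compact sets
  set F : s × ℕ → Set A := fun p =>
    Subtype.val ⁻¹' ((fun g : G => g • rep p.1) '' compactCovering G p.2) with hF_def
  have hFc : ∀ p : s × ℕ, IsClosed (F p) := by
    intro p
    have hcomp : IsCompact ((fun g : G => g • rep p.1) '' compactCovering G p.2) :=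
      (isCompact_compactCovering G p.2).image
        (hcont.comp (continuous_id.prodMk continuous_const))
    exact IsClosed.preimage continuous_subtype_val hcomp.isClosed
  have hFsub : ∀ p : s × ℕ, F p ⊆ Subtype.val ⁻¹' (orbit G (rep p.1)) := by
    rintro p a ⟨g, _, hg⟩
    exact ⟨g, hg⟩
  have hFu : ⋃ p : s × ℕ, F p = Set.univ := by
    ext a
    simp only [Set.mem_iUnion, Set.mem_univ, iff_true]
    have haO : orbit G (a : X) ∈ s := ⟨a, a.2, rfl⟩
    have : (a : X) ∈ orbit G (rep ⟨_, haO⟩) := by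
      rw [hrepO ⟨_, haO⟩]; exact mem_orbit_self _
    obtain ⟨g, hg⟩ := this
    obtain ⟨n, hn⟩ := exists_mem_compactCovering g
    exact ⟨(⟨_, haO⟩, n), Set.mem_preimage.2 ⟨g, hn, hg⟩⟩
  obtain ⟨p, b, hb⟩ := nonempty_interior_of_iUnion_of_closed hFc hFu
  set x := rep p.1 with hx_def
  refine ⟨x, hrepA p.1, ?_⟩
  -- extract an open set W of X witnessing interiority
  have hmem : F p ∈ nhds b := mem_interior_iff_mem_nhds.1 hb
  rw [nhds_subtype] at hmem
  obtain ⟨t, ht, hts⟩ := hmem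
  obtain ⟨W, hWt, hWo, hbW⟩ := mem_nhds_iff.1 ht
  -- W ∩ A ⊆ orbit x
  have hWA : W ∩ A ⊆ orbit G x := by
    rintro y ⟨hyW, hyA⟩
    have : (⟨y, hyA⟩ : A) ∈ F p := hts (hWt hyW)
    exact hFsub p this
  have hbA : (b : X) ∈ A := b.2
  have hborb : (b : X) ∈ orbit G x := hWA ⟨hbW, hbA⟩
  refine ⟨⋃ g : G, g • W, isOpen_iUnion fun g => hWo.smul g, ?_, ?_⟩
  · intro g
    rw [Set.smul_set_iUnion]
    apply subset_antisymm
    · exact Set.iUnion_subset fun g' => by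
        rw [smul_smul]; exact Set.subset_iUnion (fun h : G => h • W) (g * g')
    · exact Set.iUnion_subset fun h => by
        have : h • W = g • ((g⁻¹ * h) • W) := by rw [smul_smul, mul_inv_cancel_left]
        rw [this]; exact Set.subset_iUnion (fun g' : G => g • g' • W) (g⁻¹ * h)
  · apply subset_antisymm
    · rintro y ⟨hyV, hyA⟩
      obtain ⟨g, hg⟩ := Set.mem_iUnion.1 hyV
      obtain ⟨w, hw, rfl⟩ := hg
      have hwA : w ∈ A := by
        have : g⁻¹ • (g • w) ∈ A := smul_mem_of_inv hinv hyA
        simpa using this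
      obtain ⟨h, hh⟩ := hWA ⟨hw, hwA⟩
      refine ⟨g * h, ?_⟩
      show (g * h) • x = g • w
      rw [mul_smul]
      rw [show h • x = w from hh]
    · rintro y ⟨g, rfl⟩
      obtain ⟨h, hh⟩ := hborb
      constructor
      · refine Set.mem_iUnion.2 ⟨g * h⁻¹, ?_⟩
        refine ⟨b, hbW, ?_⟩
        show (g * h⁻¹) • (b : X) = g • x
        rw [← show h • x = (b : X) from hh, mul_smul, inv_smul_smul]
      · exact smul_mem_of_inv hinv (hrepA p.1)
lemma chain_from
    (hcont : Continuous fun p : G × X => p.1 • p.2)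
    (horb : (Set.range fun x : X => MulAction.orbit G x).Finite) :
    ∀ n : ℕ, ∀ U₀ : Set X, IsOpen U₀ → (∀ g : G, g • U₀ = U₀) →
    ({O ∈ Set.range (fun x : X => orbit G x) | ¬ O ⊆ U₀}).ncard = n →
    ∃ V : ℕ → Set X, V 0 = U₀ ∧ V n = Set.univ ∧ (∀ i ≤ n, IsOpen (V i)) ∧
      (∀ i ≤ n, ∀ g : G, g • V i = V i) ∧
      ∀ i < n, V i ⊆ V (i + 1) ∧ ∃ x : X, V (i + 1) \ V i = orbit G x := by
  intro n
  induction n with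
  | zero =>
    intro U₀ hUo hUinv hcard
    have hSfin : ({O ∈ Set.range (fun x : X => orbit G x) | ¬ O ⊆ U₀}).Finite :=
      horb.subset (sep_subset _ _)
    have hS : {O ∈ Set.range (fun x : X => orbit G x) | ¬ O ⊆ U₀} = ∅ :=
      (Set.ncard_eq_zero hSfin).1 hcard
    have hU : U₀ = Set.univ := by
      ext y
      simp only [Set.mem_univ, iff_true]
      by_contra hy
      have : orbit G y ∈ ({O ∈ Set.range (fun x : X => orbit G x) | ¬ O ⊆ U₀}) :=
        ⟨⟨y, rfl⟩, fun h => hy (h (mem_orbit_self y))⟩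
      rw [hS] at this; exact this
    exact ⟨fun _ => U₀, rfl, hU, fun _ _ => hUo, fun _ _ => hUinv, fun i hi => absurd hi (by omega)⟩
  | succ n IH =>
    intro U₀ hUo hUinv hcard
    set S := {O ∈ Set.range (fun x : X => orbit G x) | ¬ O ⊆ U₀} with hS_def
    have hSfin : S.Finite := horb.subset (sep_subset _ _)
    have hSne : S.Nonempty := Set.nonempty_of_ncard_ne_zero (by omega)
    obtain ⟨O, ⟨⟨z, rfl⟩, hOz⟩⟩ := hSne
    obtain ⟨y, hyO, hyU⟩ := Set.not_subset.1 hOz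
    -- the complement is closed, nonempty, invariant
    have hcinv : ∀ g : G, g • U₀ᶜ = U₀ᶜ := fun g => by
      rw [Set.smul_set_compl, hUinv]
    obtain ⟨x, hxA, V, hVo, hVinv, hVA⟩ :=
      exists_rel_open_orbit hcont horb (isClosed_compl_iff.2 hUo) ⟨y, hyU⟩ hcinv
    set U₁ := U₀ ∪ V with hU₁_def
    have hU₁o : IsOpen U₁ := hUo.union hVo
    have hU₁inv : ∀ g : G, g • U₁ = U₁ := fun g => by
      rw [Set.smul_set_union, hUinv, hVinv]
    have hsub : U₀ ⊆ U₁ := Set.subset_union_left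
    have hdiff : U₁ \ U₀ = orbit G x := by
      rw [← hVA]; rw [hU₁_def]
      ext w
      simp only [Set.mem_diff, Set.mem_union, Set.mem_inter_iff, Set.mem_compl_iff]
      tauto
    have horbx_sub : orbit G x ⊆ U₁ := by
      rw [← hVA]; exact (Set.inter_subset_left).trans Set.subset_union_right
    have hxnotU : x ∉ U₀ := hxA
    -- new count
    have hset : {O ∈ Set.range (fun x : X => orbit G x) | ¬ O ⊆ U₁} = S \ {orbit G x} := by
      ext O
      constructor
      · rintro ⟨hOr, hOs⟩
        refine ⟨⟨hOr, fun h => hOs (h.trans hsub)⟩, ?_⟩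
        intro h
        rw [Set.mem_singleton_iff] at h
        exact hOs (h ▸ horbx_sub)
      · rintro ⟨⟨hOr, hOs⟩, hne⟩
        refine ⟨hOr, fun h => ?_⟩
        obtain ⟨z', rfl⟩ := hOr
        obtain ⟨w, hwO, hwU⟩ := Set.not_subset.1 hOs
        have hwU₁ : w ∈ U₁ := h hwO
        have hwV : w ∈ V ∩ U₀ᶜ := ⟨hwU₁.resolve_left hwU, hwU⟩
        rw [hVA] at hwV
        have : orbit G z' = orbit G x := by
          rw [← orbit_eq_iff.2 hwO, orbit_eq_iff.2 hwV]
        exact hne (Set.mem_singleton_iff.2 this)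
    have hxS : orbit G x ∈ S := ⟨⟨x, rfl⟩, fun h => hxnotU (h (mem_orbit_self x))⟩
    have hcard' : ({O ∈ Set.range (fun x : X => orbit G x) | ¬ O ⊆ U₁}).ncard = n := by
      rw [hset, Set.ncard_diff_singleton_of_mem hxS, hcard]
      omega
    obtain ⟨W, hW0, hWn, hWo, hWinv, hWstep⟩ := IH U₁ hU₁o hU₁inv hcard'
    refine ⟨fun i => Nat.rec U₀ (fun j _ => W j) i, rfl, hWn, ?_, ?_, ?_⟩
    · rintro (_ | j) hj
      · exact hUo
      · exact hWo j (by omega)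
    · rintro (_ | j) hj
      · exact hUinv
      · exact hWinv j (by omega)
    · rintro (_ | j) hj
      · refine ⟨?_, x, ?_⟩
        · show U₀ ⊆ W 0
          rw [hW0]; exact hsub
        · show W 0 \ U₀ = orbit G x
          rw [hW0]; exact hdiff
      · exact hWstep j (by omega)
end Aux

/-- If a σ-compact `l`-group `G` acts continuously on an `l`-space `X`
with finitely many orbits, then there is a chain `∅ = U₀ ⊂ U₁ ⊂ ⋯ ⊂ U_n = X` of
`G`-invariant open sets such that each `U_{i+1} ∖ U_i` is a single orbit; in particular
every orbit is locally closed. -/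

theorem orbit_filtration
    (G : Type*) [Group G] [TopologicalSpace G] [IsTopologicalGroup G] [T2Space G]
    [LocallyCompactSpace G] [TotallyDisconnectedSpace G] [SigmaCompactSpace G]
    (X : Type*) [TopologicalSpace X] [T2Space X] (hX : IsLSpaceBasis X)
    [MulAction G X] (hcont : Continuous fun p : G × X => p.1 • p.2)
    (horb : (Set.range fun x : X => MulAction.orbit G x).Finite) :
    (∃ (n : ℕ) (U : ℕ → Set X),
      U 0 = ∅ ∧ U n = Set.univ ∧
      (∀ i ≤ n, IsOpen (U i)) ∧
      (∀ i ≤ n, ∀ g : G, g • U i = U i) ∧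
      (∀ i < n, U i ⊆ U (i + 1) ∧ ∃ x : X, U (i + 1) \ U i = MulAction.orbit G x)) ∧
    ∀ x : X, IsLocallyClosed (MulAction.orbit G x) := by
  classical
  haveI : ContinuousConstSMul G X :=
    ⟨fun g => hcont.comp (continuous_const.prodMk continuous_id)⟩
  haveI : LocallyCompactSpace X := by
    constructor
    intro x U hU
    obtain ⟨V, hVU, hVo, hxV⟩ := mem_nhds_iff.1 hU
    obtain ⟨K, hKc, hKo, hxK, hKV⟩ := hX V hVo x hxV
    exact ⟨K, hKo.mem_nhds hxK, hKV.trans hVU, hKc⟩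
  obtain ⟨V, hV0, hVn, hVo, hVinv, hVstep⟩ :=
    chain_from hcont horb
      ({O ∈ Set.range (fun x : X => MulAction.orbit G x) | ¬ O ⊆ (∅ : Set X)}).ncard
      ∅ isOpen_empty (fun g => by simp) rfl
  set n := ({O ∈ Set.range (fun x : X => MulAction.orbit G x) | ¬ O ⊆ (∅ : Set X)}).ncard
  refine ⟨⟨n, V, hV0, hVn, hVo, hVinv, hVstep⟩, ?_⟩
  intro x
  have hex : ∃ i, x ∈ V i := ⟨n, by rw [hVn]; trivial⟩
  set i := Nat.find hex with hi_def
  have hin : i ≤ n := Nat.find_le (by rw [hVn]; trivial)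
  have hipos : i ≠ 0 := by
    intro h
    have := Nat.find_spec hex
    rw [← hi_def, h, hV0] at this
    exact this
  obtain ⟨j, hj⟩ : ∃ j, i = j + 1 := ⟨i - 1, by omega⟩
  have hjn : j < n := by omega
  obtain ⟨-, y, hdiff⟩ := hVstep j hjn
  have hxin : x ∈ V (j + 1) := by rw [← hj]; exact Nat.find_spec hex
  have hxnot : x ∉ V j := Nat.find_min hex (by omega)
  have hxorb : x ∈ MulAction.orbit G y := hdiff ▸ ⟨hxin, hxnot⟩
  have horbeq : MulAction.orbit G x = MulAction.orbit G y := MulAction.orbit_eq_iff.2 hxorb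
  exact ⟨V (j + 1), (V j)ᶜ, hVo (j + 1) (by omega), (hVo j (by omega)).isClosed_compl,
    by rw [horbeq, ← hdiff, Set.diff_eq]⟩
end
end

section
/- Let G be an l-group, H a closed subgroup of G, p: G → G/H the canonical projection, and s: G/H → G a continuous section of p (i.e. p ∘ s = id). Then the linear map T: C_c^∞(G/H) ⊗ C_c^∞(H) → C_c^∞(G) determined by T(ψ ⊗ η)(g) = ψ(p(g))·η(s(p(g))^{-1} g) is a bijection, with inverse sending φ ∈ C_c^∞(G) to the function (x, h) ↦ φ(s(x)h) in C_c^∞(G/H × H) ≅ C_c^∞(G/H) ⊗ C_c^∞(H). Moreover, T intertwines the action of H given by the trivial action on C_c^∞(G/H) tensored with the right regular action (R_{h₀}η)(h) = η(h h₀) on C_c^∞(H), with the right regular action (R_{h₀}φ)(g) = φ(g h₀) of H on C_c^∞(G). -/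
open MeasureTheory
open scoped Pointwise

noncomputable section

theorem isLocallyConstant_if {X : Type*} [TopologicalSpace X] (p : X → Prop) [DecidablePred p]
    (hC : IsOpen {x | p x}) (hC' : IsClosed {x | p x}) :
    IsLocallyConstant (fun x => if p x then (1 : ℂ) else 0) := by
  intro S
  by_cases h1 : (1 : ℂ) ∈ S <;> by_cases h0 : (0 : ℂ) ∈ S
  · have : (fun x => if p x then (1 : ℂ) else 0) ⁻¹' S = Set.univ := by
      ext x; by_cases hx : p x <;> simp [hx, h1, h0]
    rw [this]; exact isOpen_univ
  · have : (fun x => if p x then (1 : ℂ) else 0) ⁻¹' S = {x | p x} := by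
      ext x; by_cases hx : p x <;> simp [hx, h1, h0]
    rw [this]; exact hC
  · have : (fun x => if p x then (1 : ℂ) else 0) ⁻¹' S = {x | p x}ᶜ := by
      ext x; by_cases hx : p x <;> simp [hx, h1, h0]
    rw [this]; exact hC'.isOpen_compl
  · have : (fun x => if p x then (1 : ℂ) else 0) ⁻¹' S = ∅ := by
      ext x; by_cases hx : p x <;> simp [hx, h1, h0]
    rw [this]; exact isOpen_empty

theorem exists_smooth_subgroup {G : Type*} [Group G] [TopologicalSpace G] [IsTopologicalGroup G]
    (hG : ∀ U ∈ nhds (1 : G), ∃ K : Subgroup G, IsCompact (K : Set G) ∧ IsOpen (K : Set G) ∧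
      (K : Set G) ⊆ U)
    {φ : G → ℂ} (hlc : IsLocallyConstant φ) (hcs : HasCompactSupport φ) :
    ∃ K : Subgroup G, IsCompact (K : Set G) ∧ IsOpen (K : Set G) ∧
      ∀ g : G, ∀ k ∈ K, φ (g * k) = φ g := by
  classical
  have step : ∀ g : G, ∃ Kg : Subgroup G, IsCompact (Kg : Set G) ∧ IsOpen (Kg : Set G) ∧
      ∀ k ∈ Kg, φ (g * k) = φ g := by
    intro g
    obtain ⟨U, hUo, hgU, hU⟩ := hlc.exists_open g
    have hmem : {u : G | g * u ∈ U} ∈ nhds (1 : G) :=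
      (hUo.preimage (continuous_mul_left g)).mem_nhds (by simpa using hgU)
    obtain ⟨K, hKc, hKo, hKsub⟩ := hG _ hmem
    exact ⟨K, hKc, hKo, fun k hk => hU _ (hKsub hk)⟩
  choose Kf hKfc hKfo hKfinv using step
  have hcover : tsupport φ ⊆ ⋃ g : G, g • (Kf g : Set G) := fun g _ =>
    Set.mem_iUnion.2 ⟨g, Set.mem_smul_set.2 ⟨1, (Kf g).one_mem, by simp⟩⟩
  obtain ⟨t, ht⟩ := IsCompact.elim_finite_subcover hcs
      (fun g : G => g • (Kf g : Set G)) (fun g => (hKfo g).smul g) hcover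
  obtain ⟨K₀, hK₀c, hK₀o, -⟩ := hG Set.univ Filter.univ_mem
  set K : Subgroup G := K₀ ⊓ ⨅ g ∈ t, Kf g with hK
  have hKle : ∀ g ∈ t, K ≤ Kf g := by
    intro g hg k hk
    have hk2 : k ∈ ⨅ g ∈ t, Kf g := (Subgroup.mem_inf.mp hk).2
    exact Subgroup.mem_iInf.mp (Subgroup.mem_iInf.mp hk2 g) hg
  have hKcoe : (K : Set G) = (K₀ : Set G) ∩ ⋂ g ∈ t, (Kf g : Set G) := by
    rw [hK, Subgroup.coe_inf]
    congr 1
    rw [Subgroup.coe_iInf]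
    refine Set.iInter_congr fun g => ?_
    rw [Subgroup.coe_iInf]
  have hKo : IsOpen (K : Set G) := by
    rw [hKcoe]
    exact hK₀o.inter (isOpen_biInter_finset fun g _ => hKfo g)
  have hKcl : IsClosed (K : Set G) := Subgroup.isClosed_of_isOpen _ hKo
  have hKc : IsCompact (K : Set G) :=
    hK₀c.of_isClosed_subset hKcl (by rw [hKcoe]; exact Set.inter_subset_left)
  have key : ∀ g ∈ tsupport φ, ∀ k ∈ K, φ (g * k) = φ g := by
    intro g hg k hk
    obtain ⟨g₀, hg₀t, hgmem⟩ := Set.mem_iUnion₂.1 (ht hg)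
    obtain ⟨k', hk', rfl⟩ := Set.mem_smul_set.1 hgmem
    have hkk : k' * k ∈ Kf g₀ := mul_mem hk' (hKle g₀ hg₀t hk)
    calc φ (g₀ • k' * k) = φ (g₀ * (k' * k)) := by rw [smul_eq_mul, mul_assoc]
      _ = φ g₀ := hKfinv g₀ _ hkk
      _ = φ (g₀ • k') := (hKfinv g₀ k' hk').symm
  refine ⟨K, hKc, hKo, fun g k hk => ?_⟩
  by_cases hg : g ∈ tsupport φ
  · exact key g hg k hk
  · by_cases hgk : g * k ∈ tsupport φ
    · have := key (g * k) hgk k⁻¹ (inv_mem hk)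
      rw [mul_assoc, mul_inv_cancel, mul_one] at this
      exact this.symm
    · rw [image_eq_zero_of_notMem_tsupport hg, image_eq_zero_of_notMem_tsupport hgk]

set_option maxHeartbeats 1000000
set_option synthInstance.maxHeartbeats 400000

section Stmt19

/-- If `s` is a section of `G → G/H`, then `s(gH)⁻¹ g ∈ H`. -/
theorem secMem {G : Type*} [Group G] (H : Subgroup G) (s : G ⧸ H → G)
    (hs : ∀ q : G ⧸ H, (QuotientGroup.mk (s q) : G ⧸ H) = q) (g : G) :
    (s (QuotientGroup.mk g))⁻¹ * g ∈ H :=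
  QuotientGroup.eq.mp (hs (QuotientGroup.mk g))

variable {G : Type*} [Group G] [TopologicalSpace G] [IsTopologicalGroup G] [T2Space G]

/-- The bilinear map `(ψ, η) ↦ (g ↦ ψ(gH) · η(s(gH)⁻¹ g))` from
`C_c^∞(G/H) × C_c^∞(H)` to `C_c^∞(G)`. -/
def bilinT (H : Subgroup G) (s : G ⧸ H → G) (hscont : Continuous s)
    (hs : ∀ q : G ⧸ H, (QuotientGroup.mk (s q) : G ⧸ H) = q) :
    SmCc (G ⧸ H) ℂ →ₗ[ℂ] SmCc H ℂ →ₗ[ℂ] SmCc G ℂ := by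
  have hθ : Continuous fun g : G => (⟨(s (QuotientGroup.mk g))⁻¹ * g, secMem H s hs g⟩ : H) :=
    Continuous.subtype_mk (((hscont.comp QuotientGroup.continuous_mk).inv).mul continuous_id) _
  refine LinearMap.mk₂ ℂ (fun ψ η =>
    ⟨fun g => ψ.1 (QuotientGroup.mk g) *
        η.1 ⟨(s (QuotientGroup.mk g))⁻¹ * g, secMem H s hs g⟩, ?_, ?_⟩) ?_ ?_ ?_ ?_
  · exact (ψ.2.1.comp_continuous QuotientGroup.continuous_mk).comp₂
      (η.2.1.comp_continuous hθ) (· * ·)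
  · refine HasCompactSupport.intro
      ((ψ.2.2.image hscont).mul (η.2.2.image continuous_subtype_val)) fun g hg => ?_
    by_contra h0
    refine hg ?_
    have h1 : QuotientGroup.mk g ∈ tsupport ψ.1 :=
      subset_tsupport _ (left_ne_zero_of_mul h0)
    have h2 : (⟨(s (QuotientGroup.mk g))⁻¹ * g, secMem H s hs g⟩ : H) ∈ tsupport η.1 :=
      subset_tsupport _ (right_ne_zero_of_mul h0)
    have : g = s (QuotientGroup.mk g) * ((s (QuotientGroup.mk g))⁻¹ * g) := by
      rw [mul_inv_cancel_left]
    rw [this]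
    exact Set.mul_mem_mul (Set.mem_image_of_mem s h1) (Set.mem_image_of_mem _ h2)
  · intro ψ₁ ψ₂ η; ext g
    simp [add_mul]
  · intro c ψ η; ext g
    simp [smul_eq_mul, mul_assoc]
  · intro ψ η₁ η₂; ext g
    simp [mul_add]
  · intro c ψ η; ext g
    simp [smul_eq_mul]; ring

/-- For a closed subgroup `H` of an `l`-group `G` and a continuous section
`s` of `G → G/H`, the map `T(ψ ⊗ η)(g) = ψ(gH)·η(s(gH)⁻¹g)` is a linear bijection
`C_c^∞(G/H) ⊗ C_c^∞(H) ≃ C_c^∞(G)`, whose inverse sends `φ` to `(x, h) ↦ φ(s(x)h)`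
(an element of `C_c^∞(G/H × H)`), and which intertwines the trivial ⊗ right-regular action
of `H` with the right regular action of `H` on `C_c^∞(G)`. -/
theorem ccG_tensor_decomposition
    (G : Type*) [Group G] [TopologicalSpace G] [IsTopologicalGroup G] [T2Space G]
    [LocallyCompactSpace G] [TotallyDisconnectedSpace G] [SigmaCompactSpace G]
    (hG : HasCompactOpenBasis G)
    (H : Subgroup G) (hHcl : IsClosed (H : Set G))
    (s : G ⧸ H → G) (hscont : Continuous s)
    (hs : ∀ q : G ⧸ H, (QuotientGroup.mk (s q) : G ⧸ H) = q) :
    -- the defining formula for `T` on pure tensors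
    (∀ (ψ : SmCc (G ⧸ H) ℂ) (η : SmCc H ℂ) (g : G),
      (TensorProduct.lift (bilinT H s hscont hs) (ψ ⊗ₜ[ℂ] η) : G → ℂ) g =
        (ψ : (G ⧸ H) → ℂ) (QuotientGroup.mk g) *
          (η : H → ℂ) ⟨(s (QuotientGroup.mk g))⁻¹ * g, secMem H s hs g⟩) ∧
    -- `T` is a linear bijection
    Function.Bijective (TensorProduct.lift (bilinT H s hscont hs)) ∧
    -- the inverse sends `φ` to `(x, h) ↦ φ(s(x)h)`, an element of `C_c^∞(G/H × H)` …
    (∀ φ : SmCc G ℂ,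
      (fun q : (G ⧸ H) × H => (φ : G → ℂ) (s q.1 * q.2)) ∈ SmCc ((G ⧸ H) × H) ℂ) ∧
    -- … and indeed inverts `T` on pure tensors
    (∀ (ψ : SmCc (G ⧸ H) ℂ) (η : SmCc H ℂ) (q : (G ⧸ H) × H),
      (TensorProduct.lift (bilinT H s hscont hs) (ψ ⊗ₜ[ℂ] η) : G → ℂ) (s q.1 * q.2) =
        (ψ : (G ⧸ H) → ℂ) q.1 * (η : H → ℂ) q.2) ∧
    -- `T` intertwines `1 ⊗ (right regular action of H)` with the right regular action on `G`
    (∀ h₀ : H,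
      TensorProduct.lift (bilinT H s hscont hs) ∘ₗ
          TensorProduct.map LinearMap.id (ccMap (Homeomorph.mulRight h₀) LinearMap.id) =
        ccMap (Homeomorph.mulRight (h₀ : G)) LinearMap.id ∘ₗ
          TensorProduct.lift (bilinT H s hscont hs)) := by
  classical
  haveI hT2Q : T2Space (G ⧸ H) := by
    rw [t2_iff_isClosed_diagonal]
    set f : G × G → (G ⧸ H) × (G ⧸ H) :=
      Prod.map (QuotientGroup.mk : G → G ⧸ H) (QuotientGroup.mk : G → G ⧸ H) with hfdef
    have hopenf : IsOpenMap f :=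
      IsOpenMap.prodMap (QuotientGroup.isOpenMap_coe) (QuotientGroup.isOpenMap_coe)
    have hsurjf : Function.Surjective f := by
      rintro ⟨a, b⟩
      obtain ⟨a', rfl⟩ := QuotientGroup.mk_surjective a
      obtain ⟨b', rfl⟩ := QuotientGroup.mk_surjective b
      exact ⟨(a', b'), rfl⟩
    have hfpre : f ⁻¹' Set.diagonal (G ⧸ H) = (fun p : G × G => p.1⁻¹ * p.2) ⁻¹' (H : Set G) :=
      Set.ext fun p => QuotientGroup.eq
    have hclosed : IsClosed (f ⁻¹' Set.diagonal (G ⧸ H)) := by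
      rw [hfpre]; exact hHcl.preimage (continuous_fst.inv.mul continuous_snd)
    rw [← isOpen_compl_iff, ← Set.image_preimage_eq (Set.diagonal (G ⧸ H))ᶜ hsurjf]
    exact hopenf _ (by rw [Set.preimage_compl]; exact hclosed.isOpen_compl)
  have hθc : Continuous fun g : G => (⟨(s (QuotientGroup.mk g))⁻¹ * g, secMem H s hs g⟩ : H) :=
    Continuous.subtype_mk (((hscont.comp QuotientGroup.continuous_mk).inv).mul continuous_id) _
  have hmk : ∀ (x : G ⧸ H) (h : H), (QuotientGroup.mk (s x * (h : G)) : G ⧸ H) = x := by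
    intro x h; rw [QuotientGroup.mk_mul_of_mem _ h.2, hs]
  have e1 : ∀ (x : G ⧸ H) (h : H),
      (⟨(s (QuotientGroup.mk (s x * (h : G))))⁻¹ * (s x * (h : G)), secMem H s hs _⟩ : H) = h := by
    intro x h
    ext
    show (s (QuotientGroup.mk (s x * (h : G))))⁻¹ * (s x * (h : G)) = (h : G)
    rw [hmk x h]
    exact inv_mul_cancel_left _ _
  set B := bilinT H s hscont hs with hBdef
  set T := TensorProduct.lift B with hTdef
  have hB : ∀ (ψ : SmCc (G ⧸ H) ℂ) (η : SmCc H ℂ) (g : G),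
      ((B ψ η : SmCc G ℂ) : G → ℂ) g =
        (ψ : (G ⧸ H) → ℂ) (QuotientGroup.mk g) *
          (η : H → ℂ) ⟨(s (QuotientGroup.mk g))⁻¹ * g, secMem H s hs g⟩ := fun _ _ _ => rfl
  have part1 : ∀ (ψ : SmCc (G ⧸ H) ℂ) (η : SmCc H ℂ) (g : G),
      (T (ψ ⊗ₜ[ℂ] η) : G → ℂ) g =
        (ψ : (G ⧸ H) → ℂ) (QuotientGroup.mk g) *
          (η : H → ℂ) ⟨(s (QuotientGroup.mk g))⁻¹ * g, secMem H s hs g⟩ := by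
    intro ψ η g
    rw [hTdef, TensorProduct.lift.tmul]
    exact hB ψ η g
  have hBq : ∀ (ψ : SmCc (G ⧸ H) ℂ) (η : SmCc H ℂ) (x : G ⧸ H) (h : H),
      ((B ψ η : SmCc G ℂ) : G → ℂ) (s x * (h : G)) =
        (ψ : (G ⧸ H) → ℂ) x * (η : H → ℂ) h := by
    intro ψ η x h
    rw [hB, e1 x h, hmk x h]
  have part4 : ∀ (ψ : SmCc (G ⧸ H) ℂ) (η : SmCc H ℂ) (q : (G ⧸ H) × H),
      (T (ψ ⊗ₜ[ℂ] η) : G → ℂ) (s q.1 * q.2) =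
        (ψ : (G ⧸ H) → ℂ) q.1 * (η : H → ℂ) q.2 := by
    intro ψ η q
    rw [hTdef, TensorProduct.lift.tmul]
    exact hBq ψ η q.1 q.2
  have part3 : ∀ φ : SmCc G ℂ,
      (fun q : (G ⧸ H) × H => (φ : G → ℂ) (s q.1 * q.2)) ∈ SmCc ((G ⧸ H) × H) ℂ := by
    intro φ
    have hcont : Continuous fun q : (G ⧸ H) × H => s q.1 * (q.2 : G) :=
      (hscont.comp continuous_fst).mul (continuous_subtype_val.comp continuous_snd)
    refine ⟨φ.2.1.comp_continuous hcont, ?_⟩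
    let Φ : ((G ⧸ H) × H) ≃ₜ G :=
      { toFun := fun q => s q.1 * q.2
        invFun := fun g => (QuotientGroup.mk g, ⟨(s (QuotientGroup.mk g))⁻¹ * g, secMem H s hs g⟩)
        left_inv := fun q => Prod.ext (hmk q.1 q.2) (e1 q.1 q.2)
        right_inv := fun g => mul_inv_cancel_left _ _
        continuous_toFun := hcont
        continuous_invFun := QuotientGroup.continuous_mk.prodMk hθc }
    exact φ.2.2.comp_homeomorph Φ
  -- evaluation functionals
  set EvG : G → (SmCc G ℂ →ₗ[ℂ] ℂ) :=
    fun g => (LinearMap.proj (R := ℂ) (φ := fun _ : G => ℂ) g).comp (Submodule.subtype _)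
    with hEvG
  set EvH : H → (SmCc H ℂ →ₗ[ℂ] ℂ) :=
    fun h => (LinearMap.proj (R := ℂ) (φ := fun _ : (H : Type _) => ℂ) h).comp (Submodule.subtype _)
    with hEvH
  -- injectivity
  have hker : ∀ u : TensorProduct ℂ ↥(SmCc (G ⧸ H) ℂ) ↥(SmCc H ℂ), T u = 0 → u = 0 := by
    intro u hu
    set b := Module.Basis.ofVectorSpace ℂ (SmCc H ℂ) with hbdef
    set e : TensorProduct ℂ ↥(SmCc (G ⧸ H) ℂ) ↥(SmCc H ℂ) ≃ₗ[ℂ]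
        (Module.Basis.ofVectorSpaceIndex ℂ (SmCc H ℂ) →₀ SmCc (G ⧸ H) ℂ) :=
      (TensorProduct.congr (LinearEquiv.refl ℂ _) b.repr).trans
        (TensorProduct.finsuppScalarRight ℂ ℂ (SmCc (G ⧸ H) ℂ) _) with hedef
    set L : (Module.Basis.ofVectorSpaceIndex ℂ (SmCc H ℂ) →₀ SmCc (G ⧸ H) ℂ) →ₗ[ℂ] SmCc G ℂ :=
      Finsupp.lsum ℂ (fun i => B.flip (b i)) with hLdef
    have hTL : T = L ∘ₗ (e : _ →ₗ[ℂ] _) := by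
      apply TensorProduct.ext'
      intro ψ η
      rw [hTdef, TensorProduct.lift.tmul]
      have he : e (ψ ⊗ₜ[ℂ] η) = (b.repr η).sum fun i c => Finsupp.single i (c • ψ) := by
        rw [hedef]
        simp only [LinearEquiv.trans_apply, TensorProduct.congr_tmul, LinearEquiv.refl_apply]
        exact TensorProduct.finsuppScalarRight_apply_tmul ψ (b.repr η)
      calc B ψ η = B ψ (Finsupp.linearCombination ℂ (⇑b) (b.repr η)) := by
            rw [b.linearCombination_repr]
        _ = (b.repr η).sum fun i c => c • (B ψ (b i)) := by
            rw [Finsupp.linearCombination_apply, map_finsuppSum]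
            exact Finsupp.sum_congr fun i _ => by rw [_root_.map_smul]
        _ = (L ∘ₗ (e : _ →ₗ[ℂ] _)) (ψ ⊗ₜ[ℂ] η) := by
            rw [LinearMap.comp_apply, LinearEquiv.coe_coe, he, map_finsuppSum]
            refine Finsupp.sum_congr fun i _ => ?_
            rw [hLdef, Finsupp.lsum_single, LinearMap.flip_apply, _root_.map_smul]
            exact (LinearMap.smul_apply _ _ _).symm
    have hLc0 : L (e u) = 0 := by
      have h' := hu
      rw [hTL, LinearMap.comp_apply, LinearEquiv.coe_coe] at h'
      exact h'
    set c := e u with hcdef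
    have heval : ∀ (x : G ⧸ H) (h : H),
        (c.sum fun i ψi =>
          (ψi : (G ⧸ H) → ℂ) x * ((b i : SmCc H ℂ) : H → ℂ) h) = 0 := by
      intro x h
      have h1 : EvG (s x * (h : G)) (L c) = 0 := by rw [hLc0]; simp
      rw [hLdef, Finsupp.lsum_apply, map_finsuppSum] at h1
      calc (c.sum fun i ψi => (ψi : (G ⧸ H) → ℂ) x * ((b i : SmCc H ℂ) : H → ℂ) h)
          = c.sum fun i ψi => EvG (s x * (h : G)) (B.flip (b i) ψi) :=
            Finsupp.sum_congr fun i _ => by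
              rw [LinearMap.flip_apply]
              exact (hBq _ _ x h).symm
        _ = 0 := h1
    have hcx : ∀ (i) (x : G ⧸ H), ((c i : SmCc (G ⧸ H) ℂ) : (G ⧸ H) → ℂ) x = 0 := by
      intro i x
      set d : Module.Basis.ofVectorSpaceIndex ℂ (SmCc H ℂ) →₀ ℂ :=
        c.mapRange (fun ψi : ↥(SmCc (G ⧸ H) ℂ) => (ψi : (G ⧸ H) → ℂ) x) rfl with hddef
      have hd0 : d = 0 := by
        refine linearIndependent_iff.mp b.linearIndependent d ?_
        refine Subtype.ext (funext fun h => ?_)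
        show ((Finsupp.linearCombination ℂ (⇑b) d : SmCc H ℂ) : H → ℂ) h = 0
        have step1 : ((Finsupp.linearCombination ℂ (⇑b) d : SmCc H ℂ) : H → ℂ) h =
            d.sum fun i r => r * ((b i : SmCc H ℂ) : H → ℂ) h := by
          show EvH h (Finsupp.linearCombination ℂ (⇑b) d) = _
          rw [Finsupp.linearCombination_apply, map_finsuppSum]
          exact Finsupp.sum_congr fun i _ => by rw [_root_.map_smul]; rfl
        rw [step1, hddef, Finsupp.sum_mapRange_index (fun i => by rw [zero_mul])]
        exact heval x h
      have hi := Finsupp.ext_iff.mp hd0 i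
      rw [hddef, Finsupp.mapRange_apply] at hi
      simpa using hi
    have hc0 : c = 0 := by
      ext i z
      exact hcx i z
    rw [hcdef] at hc0
    exact (LinearEquiv.map_eq_zero_iff e).mp hc0
  have hinj : Function.Injective T := by
    intro a₁ a₂ hab
    have : a₁ - a₂ = 0 := hker _ (by rw [map_sub, hab, sub_self])
    exact sub_eq_zero.mp this
  -- surjectivity
  have hsurj : Function.Surjective T := by
    intro φ
    obtain ⟨K, hKc, hKo, hKinv⟩ := exists_smooth_subgroup hG φ.2.1 φ.2.2
    set Q : Subgroup H := K.subgroupOf H with hQdef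
    have hQcoe : (Q : Set H) = Subtype.val ⁻¹' (K : Set G) := by
      rw [hQdef, Subgroup.coe_subgroupOf]; rfl
    have hQo : IsOpen (Q : Set H) := by rw [hQcoe]; exact hKo.preimage continuous_subtype_val
    have hQcl : IsClosed (Q : Set H) := Subgroup.isClosed_of_isOpen _ hQo
    have hQcomp : IsCompact (Q : Set H) := by
      rw [hQcoe]
      exact (hHcl.isClosedEmbedding_subtypeVal).isCompact_preimage hKc
    have hCmem : ∀ (d : H ⧸ Q) (h : H),
        ((QuotientGroup.mk h : H ⧸ Q) = d) ↔ h ∈ d.out • (Q : Set H) := by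
      intro d h
      rw [Set.mem_smul_set_iff_inv_smul_mem, smul_eq_mul, SetLike.mem_coe]
      constructor
      · intro hd
        exact QuotientGroup.eq.mp (by rw [QuotientGroup.out_eq', hd])
      · intro hq
        have h2 : ((d.out : H) : H ⧸ Q) = (h : H ⧸ Q) := QuotientGroup.eq.mpr hq
        rw [QuotientGroup.out_eq'] at h2
        exact h2.symm
    have hCeq : ∀ d : H ⧸ Q, {h : H | (QuotientGroup.mk h : H ⧸ Q) = d} = d.out • (Q : Set H) :=
      fun d => Set.ext fun h => hCmem d h
    have hCopen : ∀ d : H ⧸ Q, IsOpen {h : H | (QuotientGroup.mk h : H ⧸ Q) = d} :=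
      fun d => (hCeq d) ▸ hQo.smul d.out
    have hCcl : ∀ d : H ⧸ Q, IsClosed {h : H | (QuotientGroup.mk h : H ⧸ Q) = d} :=
      fun d => (hCeq d) ▸ hQcl.smul d.out
    have hCcomp : ∀ d : H ⧸ Q, IsCompact {h : H | (QuotientGroup.mk h : H ⧸ Q) = d} :=
      fun d => (hCeq d) ▸ hQcomp.smul d.out
    have hLcomp : IsCompact
        ((fun g => (⟨(s (QuotientGroup.mk g))⁻¹ * g, secMem H s hs g⟩ : H)) ''
          tsupport (φ : G → ℂ)) := φ.2.2.image hθc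
    obtain ⟨t, ht⟩ := hLcomp.elim_finite_subcover
      (fun d : H ⧸ Q => {h : H | (QuotientGroup.mk h : H ⧸ Q) = d})
      hCopen (fun h _ => Set.mem_iUnion.2 ⟨QuotientGroup.mk h, rfl⟩)
    have hψmem : ∀ d : H ⧸ Q,
        (fun x : G ⧸ H => (φ : G → ℂ) (s x * ((d.out : H) : G))) ∈ SmCc (G ⧸ H) ℂ := by
      intro d
      constructor
      · exact φ.2.1.comp_continuous (hscont.mul continuous_const)
      · refine HasCompactSupport.intro ((φ.2.2).image QuotientGroup.continuous_mk)
          fun x hx => ?_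
        by_contra h0
        exact hx ⟨s x * ((d.out : H) : G), subset_tsupport _ h0, hmk x d.out⟩
    have hηmem : ∀ d : H ⧸ Q,
        (fun h : H => if (QuotientGroup.mk h : H ⧸ Q) = d then (1 : ℂ) else 0) ∈ SmCc H ℂ := by
      intro d
      constructor
      · exact isLocallyConstant_if _ (hCopen d) (hCcl d)
      · exact HasCompactSupport.intro (hCcomp d) fun h hh => if_neg hh
    refine ⟨∑ d ∈ t, (⟨_, hψmem d⟩ : SmCc (G ⧸ H) ℂ) ⊗ₜ[ℂ] (⟨_, hηmem d⟩ : SmCc H ℂ), ?_⟩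
    refine Subtype.ext (funext fun g => ?_)
    have hsum : ((T (∑ d ∈ t, (⟨_, hψmem d⟩ : SmCc (G ⧸ H) ℂ) ⊗ₜ[ℂ] (⟨_, hηmem d⟩ : SmCc H ℂ))
          : SmCc G ℂ) : G → ℂ) g
        = ∑ d ∈ t, ((T ((⟨_, hψmem d⟩ : SmCc (G ⧸ H) ℂ) ⊗ₜ[ℂ] (⟨_, hηmem d⟩ : SmCc H ℂ))
          : SmCc G ℂ) : G → ℂ) g := by
      rw [map_sum, AddSubmonoidClass.coe_finset_sum, Finset.sum_apply]
    show ((T (∑ d ∈ t, (⟨_, hψmem d⟩ : SmCc (G ⧸ H) ℂ) ⊗ₜ[ℂ] (⟨_, hηmem d⟩ : SmCc H ℂ))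
          : SmCc G ℂ) : G → ℂ) g = (φ : G → ℂ) g
    rw [hsum]
    have hterm : ∀ d ∈ t,
        ((T ((⟨_, hψmem d⟩ : SmCc (G ⧸ H) ℂ) ⊗ₜ[ℂ] (⟨_, hηmem d⟩ : SmCc H ℂ))
          : SmCc G ℂ) : G → ℂ) g
        = (if (QuotientGroup.mk (⟨(s (QuotientGroup.mk g))⁻¹ * g, secMem H s hs g⟩ : H)
              : H ⧸ Q) = d
           then (φ : G → ℂ) (s (QuotientGroup.mk g) * ((d.out : H) : G)) else 0) := by
      intro d _
      rw [part1]
      dsimp only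
      by_cases hd : (QuotientGroup.mk
          (⟨(s (QuotientGroup.mk g))⁻¹ * g, secMem H s hs g⟩ : H) : H ⧸ Q) = d
      · rw [if_pos hd, if_pos hd, mul_one]
      · rw [if_neg hd, if_neg hd, mul_zero]
    rw [Finset.sum_congr rfl hterm, Finset.sum_ite_eq]
    by_cases hmem : (QuotientGroup.mk
        (⟨(s (QuotientGroup.mk g))⁻¹ * g, secMem H s hs g⟩ : H) : H ⧸ Q) ∈ t
    · rw [if_pos hmem]
      set hh : H := (⟨(s (QuotientGroup.mk g))⁻¹ * g, secMem H s hs g⟩ : H) with hhdef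
      set d₀ : H ⧸ Q := QuotientGroup.mk hh with hd₀def
      have hq : (d₀.out)⁻¹ * hh ∈ Q :=
        QuotientGroup.eq.mp (by rw [QuotientGroup.out_eq', hd₀def])
      have hqK : (((d₀.out)⁻¹ * hh : H) : G) ∈ K := (Subgroup.mem_subgroupOf).mp hq
      have hcoe : ((d₀.out : H) : G) * (((d₀.out)⁻¹ * hh : H) : G) = (hh : G) := by
        push_cast
        rw [mul_inv_cancel_left]
      calc (φ : G → ℂ) (s (QuotientGroup.mk g) * ((d₀.out : H) : G))
          = (φ : G → ℂ) (s (QuotientGroup.mk g) * ((d₀.out : H) : G)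
              * (((d₀.out)⁻¹ * hh : H) : G)) := (hKinv _ _ hqK).symm
        _ = (φ : G → ℂ) (s (QuotientGroup.mk g) * (hh : G)) := by rw [mul_assoc, hcoe]
        _ = (φ : G → ℂ) g := by rw [hhdef]; rw [mul_inv_cancel_left]
    · rw [if_neg hmem]
      by_contra h0
      have hg : g ∈ tsupport (φ : G → ℂ) := subset_tsupport _ (fun hgs => h0 (by rw [hgs]))
      have : (⟨(s (QuotientGroup.mk g))⁻¹ * g, secMem H s hs g⟩ : H) ∈
          ⋃ d ∈ t, {h : H | (QuotientGroup.mk h : H ⧸ Q) = d} :=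
        ht ⟨g, hg, rfl⟩
      obtain ⟨d, hdt, hdm⟩ := Set.mem_iUnion₂.1 this
      rw [← hdm] at hdt
      exact hmem hdt
  -- intertwining
  have part5 : ∀ h₀ : H,
      T ∘ₗ TensorProduct.map LinearMap.id (ccMap (Homeomorph.mulRight h₀) LinearMap.id) =
      ccMap (Homeomorph.mulRight (h₀ : G)) LinearMap.id ∘ₗ T := by
    intro h₀
    apply TensorProduct.ext'
    intro ψ η
    refine Subtype.ext (funext fun g => ?_)
    have hmm : (QuotientGroup.mk (g * (h₀ : G)) : G ⧸ H) = QuotientGroup.mk g :=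
      QuotientGroup.mk_mul_of_mem g h₀.2
    have e2 : (⟨(s (QuotientGroup.mk (g * (h₀ : G))))⁻¹ * (g * (h₀ : G)),
          secMem H s hs _⟩ : H)
        = (⟨(s (QuotientGroup.mk g))⁻¹ * g, secMem H s hs g⟩ : H) * h₀ := by
      ext
      show (s (QuotientGroup.mk (g * (h₀ : G))))⁻¹ * (g * (h₀ : G))
          = ((s (QuotientGroup.mk g))⁻¹ * g) * (h₀ : G)
      rw [hmm]
      exact (mul_assoc _ _ _).symm
    show ((T (ψ ⊗ₜ[ℂ] (ccMap (Homeomorph.mulRight h₀) LinearMap.id η)) : SmCc G ℂ) : G → ℂ) g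
        = ((T (ψ ⊗ₜ[ℂ] η) : SmCc G ℂ) : G → ℂ) (g * (h₀ : G))
    rw [part1, part1, e2, hmm]
    rfl
  exact ⟨part1, ⟨hinj, hsurj⟩, part3, part4, part5⟩


end Stmt19
end
end
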